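/- arXiv:1606.03045 — 9 statements merged into one kernel-verified Lean document; each statement's English description precedes it below -/
import Mathlib

section
/- Consider the nonlinear delay equation ẍ(t) + f(t, x(t), ẋ(t)) + s(t, x(t)) + Σ_{k=1}^m s_k(t, x(t), x(h_k(t))) = 0, which possesses a unique trivial equilibrium, where f(t,v,0) = 0, s(t,0) = 0, s_k(t,v,0) = 0, and for u ≠ 0: 0 < a₀ ≤ f(t,v,u)/u ≤ A, 0 < b₀ ≤ s(t,u)/u ≤ B, |s_k(t,v,u)/u| ≤ C_k, and t − h_k(t) ≤ τ. If B ≤ a₀²/4 and Σ_{k=1}^m C_k < b₀ − (a₀/2)(A − a₀), then zero is a global attractor: every twice differentiable solution x satisfies x(t) → 0 as t → ∞. -/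
open Filter Set Real Topology

/-- Decay comparison lemma for the absolute value of a differentiable function. -/
lemma decayLemma {y y' : ℝ → ℝ} (hy : ∀ t, HasDerivAt y (y' t) t)
    {p R a b : ℝ} (hp : 0 < p) (hR : 0 ≤ R)
    (Hp : ∀ t ∈ Set.Ico a b, 0 ≤ y t → y' t ≤ -p * y t + R)
    (Hm : ∀ t ∈ Set.Ico a b, y t ≤ 0 → -y' t ≤ -p * (-(y t)) + R) :
    ∀ t ∈ Set.Icc a b, |y t| ≤ |y a| * Real.exp (-p * (t - a)) + R / p := by
  set F : ℝ → ℝ := fun t => if 0 < y t then y' t else if y t < 0 then -y' t else |y' t| with hF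
  have cont : ContinuousOn (fun t => |y t|) (Set.Icc a b) :=
    (continuous_abs.comp (Differentiable.continuous (fun t => (hy t).differentiableAt))).continuousOn
  have main := le_gronwallBound_of_liminf_deriv_right_le (f := fun t => |y t|) (f' := F)
      (δ := |y a|) (K := -p) (ε := R) (a := a) (b := b) cont ?_ le_rfl ?_
  · intro t ht
    have := main t ht
    rw [gronwallBound_of_K_ne_0 (by linarith : (-p) ≠ 0)] at this
    have he : Real.exp (-p * (t - a)) ≤ 1 := by
      apply Real.exp_le_one_iff.mpr
      nlinarith [ht.1]
    have hepos : (0:ℝ) < Real.exp (-p * (t - a)) := Real.exp_pos _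
    have : |y t| ≤ |y a| * Real.exp (-p * (t - a)) + R / (-p) * (Real.exp (-p * (t - a)) - 1) :=
      this
    have h2 : R / (-p) * (Real.exp (-p * (t - a)) - 1) ≤ R / p := by
      rw [div_neg, neg_mul]
      have : R / p * (1 - Real.exp (-p * (t - a))) ≤ R / p * 1 := by
        apply mul_le_mul_of_nonneg_left (by linarith) (div_nonneg hR hp.le)
      calc -(R / p * (Real.exp (-p * (t - a)) - 1)) = R / p * (1 - Real.exp (-p * (t - a))) := by
            ring
        _ ≤ R / p := by linarith
    linarith
  · -- liminf condition
    intro t ht r hr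
    rcases lt_trichotomy (y t) 0 with hneg | hzero | hpos
    · -- y t < 0 : F t = -y' t
      have hFt : F t = -y' t := by simp [hF, not_lt.mpr hneg.le, hneg]
      rw [hFt] at hr
      have hslope : Tendsto (slope y t) (𝓝[>] t) (𝓝 (y' t)) :=
        ((hasDerivAt_iff_tendsto_slope.mp (hy t)).mono_left
          (nhdsWithin_mono t fun z hz => ne_of_gt hz))
      have hyc : Tendsto y (𝓝[>] t) (𝓝 (y t)) :=
        ((hy t).continuousAt.tendsto).mono_left nhdsWithin_le_nhds
      have hev : ∀ᶠ z in 𝓝[>] t, y z < 0 := hyc.eventually (eventually_lt_nhds hneg)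
      have hev2 : ∀ᶠ z in 𝓝[>] t, slope y t z > -r :=
        hslope.eventually (eventually_gt_nhds (by linarith))
      have hev3 : ∀ᶠ z in 𝓝[>] t, z > t := self_mem_nhdsWithin
      refine ((hev.and (hev2.and hev3)).mono ?_).frequently
      rintro z ⟨hz1, hz2, hz3⟩
      have : |y z| - |y t| = -(y z - y t) := by
        rw [abs_of_neg hz1, abs_of_neg hneg]; ring
      rw [this]
      rw [slope_def_field, div_eq_mul_inv] at hz2
      have hzt : (0:ℝ) < z - t := by linarith
      have hinv : (0:ℝ) < (z - t)⁻¹ := inv_pos.mpr hzt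
      nlinarith [hz2]
    · -- y t = 0 : F t = |y' t|
      have hFt : F t = |y' t| := by simp [hF, hzero]
      rw [hFt, ← Real.norm_eq_abs] at hr
      have := ((hy t).hasDerivWithinAt).liminf_right_slope_norm_le hr
      refine this.mono fun z hz => ?_
      simpa [Real.norm_eq_abs] using hz
    · -- y t > 0 : F t = y' t
      have hFt : F t = y' t := by simp [hF, hpos]
      rw [hFt] at hr
      have hslope : Tendsto (slope y t) (𝓝[>] t) (𝓝 (y' t)) :=
        ((hasDerivAt_iff_tendsto_slope.mp (hy t)).mono_left
          (nhdsWithin_mono t fun z hz => ne_of_gt hz))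
      have hyc : Tendsto y (𝓝[>] t) (𝓝 (y t)) :=
        ((hy t).continuousAt.tendsto).mono_left nhdsWithin_le_nhds
      have hev : ∀ᶠ z in 𝓝[>] t, 0 < y z := hyc.eventually (eventually_gt_nhds hpos)
      have hev2 : ∀ᶠ z in 𝓝[>] t, slope y t z < r := hslope.eventually (eventually_lt_nhds hr)
      have hev3 : ∀ᶠ z in 𝓝[>] t, z > t := self_mem_nhdsWithin
      refine ((hev.and (hev2.and hev3)).mono ?_).frequently
      rintro z ⟨hz1, hz2, hz3⟩
      have : |y z| - |y t| = y z - y t := by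
        rw [abs_of_pos hz1, abs_of_pos hpos]
      rw [this]
      rw [slope_def_field, div_eq_mul_inv, mul_comm] at hz2
      exact hz2
    -- bound condition
  · intro t ht
    rcases lt_trichotomy (y t) 0 with hneg | hzero | hpos
    · have hFt : F t = -y' t := by simp [hF, not_lt.mpr hneg.le, hneg]
      rw [hFt]
      show -y' t ≤ -p * |y t| + R
      rw [abs_of_neg hneg]
      have := Hm t ht hneg.le
      linarith
    · have hFt : F t = |y' t| := by simp [hF, hzero]
      rw [hFt]
      show |y' t| ≤ -p * |y t| + R
      have h1 := Hp t ht hzero.ge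
      have h2 := Hm t ht hzero.le
      rw [hzero] at h1 h2 ⊢
      simp only [abs_zero, mul_zero, neg_zero, zero_add] at h1 h2 ⊢
      rw [abs_le]
      constructor <;> linarith
    · have hFt : F t = y' t := by simp [hF, hpos]
      rw [hFt]
      show y' t ≤ -p * |y t| + R
      rw [abs_of_pos hpos]
      exact Hp t ht hpos.le

open Filter MeasureTheory

set_option maxHeartbeats 2000000 in
/-- Zero is a global attractor for the nonlinear delay equation
ẍ + f(t,x,ẋ) + s(t,x) + Σ s_k(t,x(t),x(h_k(t))) = 0 under condition 1) of Lemma 2. -/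
theorem nonlinear_delay_global_attractor_case1
    (m : ℕ) (t₀ a₀ A b₀ B τ : ℝ)
    (f : ℝ → ℝ → ℝ → ℝ) (s : ℝ → ℝ → ℝ) (sk : Fin m → ℝ → ℝ → ℝ → ℝ)
    (C : Fin m → ℝ) (h : Fin m → ℝ → ℝ)
    (hhmeas : ∀ k, Measurable (h k)) (hhle : ∀ k t, h k t ≤ t)
    (hτ : 0 < τ) (hdelay : ∀ k t, t - h k t ≤ τ)
    (hf0 : ∀ t v, f t v 0 = 0) (hs0 : ∀ t, s t 0 = 0) (hsk0 : ∀ k t v, sk k t v 0 = 0)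
    (ha₀ : 0 < a₀) (hb₀ : 0 < b₀) (haA : a₀ ≤ A) (hbB : b₀ ≤ B) (hC : ∀ k, 0 ≤ C k)
    (hf : ∀ t v u, u ≠ 0 → a₀ ≤ f t v u / u ∧ f t v u / u ≤ A)
    (hs : ∀ t u, u ≠ 0 → b₀ ≤ s t u / u ∧ s t u / u ≤ B)
    (hsk : ∀ k t v u, u ≠ 0 → |sk k t v u / u| ≤ C k)
    (hcond1 : B ≤ a₀ ^ 2 / 4) (hcond2 : (∑ k, C k) < b₀ - (a₀ / 2) * (A - a₀))
    (x x' x'' : ℝ → ℝ)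
    (hx' : ∀ t, HasDerivAt x (x' t) t) (hx'' : ∀ t, HasDerivAt x' (x'' t) t)
    (hinit : ∃ M : ℝ, ∀ t ≤ t₀, |x t| ≤ M ∧ |x' t| ≤ M)
    (heq : ∀ t ≥ t₀, x'' t + f t (x t) (x' t) + s t (x t)
        + (∑ k, sk k t (x t) (x (h k t))) = 0) :
    Tendsto x atTop (nhds 0) := by
  obtain ⟨M, hM⟩ := hinit
  have hM0 : 0 ≤ M := (abs_nonneg _).trans (hM t₀ le_rfl).1
  set p : ℝ := a₀ / 2 with hpdef
  have hp : 0 < p := by positivity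
  set y : ℝ → ℝ := fun t => x' t + p * x t with hydef
  set Y : ℝ → ℝ := fun t => x'' t + p * x' t with hYdef
  have hy : ∀ t, HasDerivAt y (Y t) t := fun t => (hx'' t).add ((hx' t).const_mul p)
  set q : ℝ := (A - p) * p - b₀ with hqdef
  set r : ℝ := q + ∑ k, C k with hrdef
  have hsum0 : 0 ≤ ∑ k, C k := Finset.sum_nonneg fun k _ => hC k
  have hq0 : 0 ≤ q := by
    have : p * p ≤ (A - p) * p := by nlinarith
    nlinarith
  have hr0 : 0 ≤ r := by positivity
  have hrp2 : r < p ^ 2 := by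
    have : p ^ 2 - (A - p) * p + b₀ = b₀ - (a₀ / 2) * (A - a₀) := by rw [hpdef]; ring
    nlinarith
  -- continuity
  have cx : Continuous x := Differentiable.continuous fun t => (hx' t).differentiableAt
  have cx' : Continuous x' := Differentiable.continuous fun t => (hx'' t).differentiableAt
  have cy : Continuous y := cx'.add (continuous_const.mul cx)
  -- the key pointwise inequality coming from the equation
  have keyW : ∀ t, t₀ ≤ t → ∀ D : ℝ, (∀ s', t - τ ≤ s' → s' ≤ t → |x s'| ≤ D) →
      ∃ α, p ≤ α ∧ |Y t + α * y t| ≤ r * D := by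
    intro t ht D hD
    obtain ⟨av, hav1, hav2, havf⟩ : ∃ av, a₀ ≤ av ∧ av ≤ A ∧ f t (x t) (x' t) = av * x' t := by
      by_cases hx0 : x' t = 0
      · exact ⟨a₀, le_rfl, haA, by rw [hx0, hf0, mul_zero]⟩
      · obtain ⟨h1, h2⟩ := hf t (x t) (x' t) hx0
        exact ⟨f t (x t) (x' t) / x' t, h1, h2, (div_mul_cancel₀ _ hx0).symm⟩
    obtain ⟨bv, hbv1, hbv2, hbvf⟩ : ∃ bv, b₀ ≤ bv ∧ bv ≤ B ∧ s t (x t) = bv * x t := by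
      by_cases hx0 : x t = 0
      · exact ⟨b₀, le_rfl, hbB, by rw [hx0, hs0, mul_zero]⟩
      · obtain ⟨h1, h2⟩ := hs t (x t) hx0
        exact ⟨s t (x t) / x t, h1, h2, (div_mul_cancel₀ _ hx0).symm⟩
    have hcvs : ∀ k : Fin m, ∃ cv, |cv| ≤ C k ∧ sk k t (x t) (x (h k t)) = cv * x (h k t) := by
      intro k
      by_cases hx0 : x (h k t) = 0
      · exact ⟨0, by simpa using hC k, by rw [hx0, hsk0, mul_zero]⟩
      · exact ⟨sk k t (x t) (x (h k t)) / x (h k t), hsk k t (x t) _ hx0,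
          (div_mul_cancel₀ _ hx0).symm⟩
    choose cv hcv1 hcv2 using hcvs
    refine ⟨av - p, by linarith, ?_⟩
    have hsumeq : (∑ k, sk k t (x t) (x (h k t))) = ∑ k, cv k * x (h k t) :=
      Finset.sum_congr rfl fun k _ => hcv2 k
    have heqt := heq t ht
    rw [havf, hbvf, hsumeq] at heqt
    have hx2 : x'' t = -(av * x' t + bv * x t + ∑ k, cv k * x (h k t)) := by linarith
    have hYt : Y t + (av - p) * y t
        = ((av - p) * p - bv) * x t - ∑ k, cv k * x (h k t) := by
      simp only [hYdef, hydef]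
      rw [hx2]; ring
    rw [hYt]
    have hxtD : |x t| ≤ D := hD t (by linarith) le_rfl
    have hD0 : 0 ≤ D := (abs_nonneg _).trans hxtD
    have h1 : |(av - p) * p - bv| ≤ q := by
      have hnn : 0 ≤ (av - p) * p - bv := by nlinarith
      rw [abs_of_nonneg hnn, hqdef]; nlinarith
    have h3 : |∑ k, cv k * x (h k t)| ≤ (∑ k, C k) * D := by
      calc |∑ k, cv k * x (h k t)| ≤ ∑ k, |cv k * x (h k t)| :=
            Finset.abs_sum_le_sum_abs _ _
        _ ≤ ∑ k, C k * D := by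
            apply Finset.sum_le_sum
            intro k _
            rw [abs_mul]
            have hxh : |x (h k t)| ≤ D := by
              apply hD _ _ (hhle k t)
              have := hdelay k t; linarith
            exact mul_le_mul (hcv1 k) hxh (abs_nonneg _) (hC k)
        _ = (∑ k, C k) * D := (Finset.sum_mul _ _ _).symm
    calc |((av - p) * p - bv) * x t - ∑ k, cv k * x (h k t)|
        ≤ |((av - p) * p - bv) * x t| + |∑ k, cv k * x (h k t)| := abs_sub _ _
      _ ≤ q * D + (∑ k, C k) * D := by
          rw [abs_mul]
          exact add_le_add (mul_le_mul h1 hxtD (abs_nonneg _) hq0) h3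
      _ = r * D := by rw [hrdef]; ring
  -- comparison estimate for y
  have compW : ∀ t₁ t₂, t₀ ≤ t₁ → t₁ ≤ t₂ → ∀ D : ℝ,
      (∀ s', t₁ - τ ≤ s' → s' ≤ t₂ → |x s'| ≤ D) →
      ∀ t ∈ Set.Icc t₁ t₂, |y t| ≤ |y t₁| * Real.exp (-p * (t - t₁)) + (r * D) / p := by
    intro t₁ t₂ h01 h12 D hD
    have hD0 : 0 ≤ D := (abs_nonneg _).trans (hD t₁ (by linarith) h12)
    apply decayLemma hy hp (mul_nonneg hr0 hD0)
    · intro t ht hyt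
      obtain ⟨α, hα, habs⟩ := keyW t (by linarith [ht.1]) D
        (fun s' hs1 hs2 => hD s' (by linarith [ht.1]) (by linarith [ht.2.le]))
      have h2 := (abs_le.mp habs).2
      nlinarith [mul_nonneg (by linarith : (0:ℝ) ≤ α - p) hyt]
    · intro t ht hyt
      obtain ⟨α, hα, habs⟩ := keyW t (by linarith [ht.1]) D
        (fun s' hs1 hs2 => hD s' (by linarith [ht.1]) (by linarith [ht.2.le]))
      have h2 := (abs_le.mp habs).1
      nlinarith [mul_nonneg (by linarith : (0:ℝ) ≤ α - p) (by linarith : (0:ℝ) ≤ -(y t))]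
  -- comparison estimate for x
  have compX : ∀ t₁ t₂ E, 0 ≤ E → (∀ s', t₁ ≤ s' → s' ≤ t₂ → |y s'| ≤ E) →
      ∀ t ∈ Set.Icc t₁ t₂, |x t| ≤ |x t₁| * Real.exp (-p * (t - t₁)) + E / p := by
    intro t₁ t₂ E hE0 hE
    apply decayLemma hx' hp hE0
    · intro t ht hxt
      have h1 : y t ≤ E := (abs_le.mp (hE t ht.1 ht.2.le)).2
      have h2 : x' t = y t - p * x t := by simp only [hydef]; ring
      linarith
    · intro t ht hxt
      have h1 : -E ≤ y t := (abs_le.mp (hE t ht.1 ht.2.le)).1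
      have h2 : x' t = y t - p * x t := by simp only [hydef]; ring
      linarith
  -- bound on initial data for y
  have hyM : ∀ t ≤ t₀, |y t| ≤ M * (1 + p) := by
    intro t ht
    obtain ⟨h1, h2⟩ := hM t ht
    calc |y t| ≤ |x' t| + |p * x t| := abs_add_le _ _
      _ ≤ M + p * M := by
          rw [abs_mul, abs_of_pos hp]
          exact add_le_add h2 (mul_le_mul_of_nonneg_left h1 hp.le)
      _ = M * (1 + p) := by ring
  set M' : ℝ := max M (M * (1 + p) / p) with hM'def
  have hM'M : M ≤ M' := le_max_left _ _
  have hM'y : M * (1 + p) / p ≤ M' := le_max_right _ _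
  have hM'0 : 0 ≤ M' := hM0.trans hM'M
  set θ : ℝ := r / p ^ 2 with hθdef
  have hθ0 : 0 ≤ θ := div_nonneg hr0 (by positivity)
  have hθ1 : θ < 1 := (div_lt_one (by positivity)).mpr hrp2
  set c₀ : ℝ := M + M * (1 + p) / p with hc₀def
  have hc₀0 : 0 ≤ c₀ := by
    rw [hc₀def]
    have : 0 ≤ M * (1 + p) / p := by positivity
    linarith
  set K : ℝ := max M' (c₀ / (1 - θ)) with hKdef
  have hK0 : 0 ≤ K := hM'0.trans (le_max_left _ _)
  have hM'K : M' ≤ K := le_max_left _ _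
  set g : ℝ → ℝ := fun t => max |x t| (|y t| / p) with hgdef
  have cg : Continuous g := (cx.abs).max ((cy.abs).div_const p)
  -- global bound
  have global : ∀ t, |x t| ≤ K ∧ |y t| ≤ p * K := by
    have init : ∀ t ≤ t₀, |x t| ≤ K ∧ |y t| ≤ p * K := by
      intro t ht
      constructor
      · exact (hM t ht).1.trans (hM'M.trans hM'K)
      · calc |y t| ≤ M * (1 + p) := hyM t ht
          _ = p * (M * (1 + p) / p) := by field_simp
          _ ≤ p * K := by
            apply mul_le_mul_of_nonneg_left (hM'y.trans hM'K) hp.le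
    intro T
    by_cases hT : T ≤ t₀
    · exact init T hT
    push_neg at hT
    obtain ⟨t', ht'mem, ht'max⟩ := isCompact_Icc.exists_isMaxOn
      (Set.nonempty_Icc.mpr (le_of_lt hT)) cg.continuousOn
    set N : ℝ := max (g t') M' with hNdef
    have hN0 : 0 ≤ N := hM'0.trans (le_max_right _ _)
    have hgN : ∀ u', u' ≤ T → g u' ≤ N := by
      intro u' hu'
      by_cases hu0 : u' ≤ t₀
      · have h1 : |x u'| ≤ M' := (hM u' hu0).1.trans hM'M
        have h2 : |y u'| / p ≤ M' := by
          rw [div_le_iff₀ hp]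
          calc |y u'| ≤ M * (1 + p) := hyM u' hu0
            _ = (M * (1 + p) / p) * p := by field_simp
            _ ≤ M' * p := mul_le_mul_of_nonneg_right hM'y hp.le
        exact (max_le h1 h2).trans (le_max_right _ _)
      · push_neg at hu0
        exact (ht'max ⟨hu0.le, hu'⟩).trans (le_max_left _ _)
    have hxall : ∀ s', t₀ - τ ≤ s' → s' ≤ T → |x s'| ≤ N := by
      intro s' _ hs2
      by_cases h0 : s' ≤ t₀
      · exact ((hM s' h0).1.trans hM'M).trans (le_max_right _ _)
      · push_neg at h0
        exact (le_max_left _ _).trans (hgN s' hs2)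
    have hyb : ∀ t ∈ Set.Icc t₀ T, |y t| ≤ M * (1 + p) + r * N / p := by
      intro t ht
      have hcw := compW t₀ T le_rfl hT.le N hxall t ht
      have he1 : Real.exp (-p * (t - t₀)) ≤ 1 := by
        apply Real.exp_le_one_iff.mpr
        nlinarith [ht.1]
      have hy0 : |y t₀| ≤ M * (1 + p) := hyM t₀ le_rfl
      have : |y t₀| * Real.exp (-p * (t - t₀)) ≤ M * (1 + p) := by
        nlinarith [abs_nonneg (y t₀), Real.exp_pos (-p * (t - t₀))]
      linarith
    set E : ℝ := M * (1 + p) + r * N / p with hEdef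
    have hE0 : 0 ≤ E := by
      rw [hEdef]
      have : 0 ≤ r * N / p := by positivity
      nlinarith
    have hxb : ∀ t ∈ Set.Icc t₀ T, |x t| ≤ c₀ + θ * N := by
      intro t ht
      have hcx := compX t₀ T E hE0 (fun s' h1 h2 => hyb s' ⟨h1, h2⟩) t ht
      have he1 : Real.exp (-p * (t - t₀)) ≤ 1 := by
        apply Real.exp_le_one_iff.mpr
        nlinarith [ht.1]
      have hx0 : |x t₀| ≤ M := (hM t₀ le_rfl).1
      have h4 : |x t₀| * Real.exp (-p * (t - t₀)) ≤ M := by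
        nlinarith [abs_nonneg (x t₀), Real.exp_pos (-p * (t - t₀))]
      have hEp : E / p = M * (1 + p) / p + θ * N := by
        rw [hEdef, hθdef]
        field_simp
      rw [hEp] at hcx
      rw [hc₀def]
      linarith
    have hgb : g t' ≤ c₀ + θ * N := by
      have h1 : |x t'| ≤ c₀ + θ * N := hxb t' ht'mem
      have h2 : |y t'| / p ≤ c₀ + θ * N := by
        rw [div_le_iff₀ hp]
        have hE2 : E ≤ (c₀ + θ * N) * p := by
          have h₁ : r * N / p = θ * N * p := by rw [hθdef]; field_simp
          have h₂ : M * (1 + p) / p * p = M * (1 + p) := div_mul_cancel₀ _ hp.ne'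
          rw [hEdef, hc₀def, h₁]
          nlinarith [mul_nonneg hM0 hp.le]
        exact (hyb t' ht'mem).trans hE2
      exact max_le h1 h2
    have hNK : N ≤ K := by
      rcases le_total (g t') M' with hcase | hcase
      · have hNe : N = M' := max_eq_right hcase
        rw [hNe]; exact hM'K
      · have hNe : N = g t' := max_eq_left hcase
        have hNc : N ≤ c₀ + θ * N := hNe.le.trans hgb
        have h1θ : 0 < 1 - θ := by linarith
        have : N ≤ c₀ / (1 - θ) := by rw [le_div_iff₀ h1θ]; nlinarith
        exact this.trans (le_max_right _ _)
    have hgT : g T ≤ K := (hgN T le_rfl).trans hNK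
    constructor
    · exact (le_max_left _ _).trans hgT
    · have h5 : |y T| / p ≤ K := (le_max_right _ _).trans hgT
      rw [div_le_iff₀ hp] at h5
      linarith
  -- exponential smallness
  have expsmall : ∀ c : ℝ, 0 < c → ∀ Bc : ℝ, ∃ s₀ : ℝ, 0 ≤ s₀ ∧
      ∀ u, s₀ ≤ u → Bc * Real.exp (-p * u) ≤ c := by
    intro c hc Bc
    have h1 : Tendsto (fun u : ℝ => -p * u) atTop atBot :=
      tendsto_id.const_mul_atTop_of_neg (by linarith)
    have h2 : Tendsto (fun u : ℝ => Bc * Real.exp (-p * u)) atTop (nhds 0) := by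
      have := (Real.tendsto_exp_atBot.comp h1).const_mul Bc
      simpa using this
    have h3 : ∀ᶠ u in atTop, Bc * Real.exp (-p * u) < c :=
      h2.eventually (eventually_lt_nhds hc)
    obtain ⟨s₀, hs₀⟩ := eventually_atTop.mp h3
    exact ⟨max s₀ 0, le_max_right _ _,
      fun u hu => (hs₀ u ((le_max_left _ _).trans hu)).le⟩
  -- the contraction step
  set P : ℝ → Prop := fun D => 0 ≤ D ∧ ∃ T, t₀ ≤ T ∧ ∀ t, T ≤ t → |x t| ≤ D with hPdef
  have hPK : P K := ⟨hK0, t₀, le_rfl, fun t _ => (global t).1⟩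
  have hPmono : ∀ D D', P D → D ≤ D' → P D' := by
    rintro D D' ⟨hD0, T, hT0, hT⟩ hDD'
    exact ⟨hD0.trans hDD', T, hT0, fun t ht => (hT t ht).trans hDD'⟩
  have step : ∀ D, P D → ∀ ε, 0 < ε → P (θ * D + ε) := by
    rintro D ⟨hD0, T, hT0, hT⟩ ε hε
    set t₁ : ℝ := T + τ with ht₁def
    have ht₁0 : t₀ ≤ t₁ := by linarith
    have hyd : ∀ t, t₁ ≤ t → |y t| ≤ p * K * Real.exp (-p * (t - t₁)) + r * D / p := by
      intro t ht
      have := compW t₁ t ht₁0 ht D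
        (fun s' hs1 hs2 => hT s' (by linarith)) t ⟨ht, le_rfl⟩
      have h1 : |y t₁| ≤ p * K := (global t₁).2
      nlinarith [Real.exp_pos (-p * (t - t₁))]
    obtain ⟨s₂, hs₂0, hs₂⟩ := expsmall (p * ε / 4) (by positivity) (p * K)
    set t₂ : ℝ := t₁ + s₂ with ht₂def
    set E : ℝ := p * ε / 4 + r * D / p with hEdef
    have hE0 : 0 ≤ E := by
      rw [hEdef]
      have h1 : 0 ≤ r * D / p := by positivity
      have h2 : 0 < p * ε / 4 := by positivity
      linarith
    have hyE : ∀ t, t₂ ≤ t → |y t| ≤ E := by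
      intro t ht
      have h1 := hyd t (by linarith)
      have h2 := hs₂ (t - t₁) (by linarith)
      rw [hEdef]; linarith
    obtain ⟨s₃, hs₃0, hs₃⟩ := expsmall (ε / 2) (by positivity) K
    set t₃ : ℝ := t₂ + s₃ with ht₃def
    refine ⟨add_nonneg (mul_nonneg hθ0 hD0) hε.le, t₃, by linarith, fun t ht => ?_⟩
    have hcx := compX t₂ t E hE0 (fun s' h1 h2 => hyE s' h1) t ⟨by linarith, le_rfl⟩
    have h1 : |x t₂| ≤ K := (global t₂).1
    have h2 : |x t₂| * Real.exp (-p * (t - t₂)) ≤ K * Real.exp (-p * (t - t₂)) :=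
      mul_le_mul_of_nonneg_right h1 (Real.exp_pos _).le
    have h3 : K * Real.exp (-p * (t - t₂)) ≤ ε / 2 := hs₃ (t - t₂) (by linarith)
    have hEp : E / p = ε / 4 + θ * D := by
      rw [hEdef, hθdef]
      field_simp
    rw [hEp] at hcx
    linarith
  -- conclusion
  rw [Metric.tendsto_atTop]
  intro ε hε
  have iter : ∀ n : ℕ, P (θ ^ n * K + ε / 2) := by
    intro n
    induction n with
    | zero => exact hPmono K _ hPK (by simp; linarith)
    | succ n ih =>
      have hstep := step _ ih ((1 - θ) * ε / 2) (by nlinarith)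
      apply hPmono _ _ hstep
      have : θ * (θ ^ n * K + ε / 2) + (1 - θ) * ε / 2 = θ ^ (n + 1) * K + ε / 2 := by
        rw [pow_succ]; ring
      rw [this]
  have htend : Tendsto (fun n : ℕ => θ ^ n * K) atTop (nhds 0) := by
    have := (tendsto_pow_atTop_nhds_zero_of_lt_one hθ0 hθ1).mul_const K
    simpa using this
  obtain ⟨n, hn⟩ := eventually_atTop.mp (htend.eventually (eventually_lt_nhds (by linarith : (0:ℝ) < ε / 2)))
  obtain ⟨_, T, hT0, hT⟩ := iter n
  refine ⟨T, fun t ht => ?_⟩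
  rw [Real.dist_eq, sub_zero]
  have := hT t ht
  have h2 := hn n le_rfl
  calc |x t| ≤ θ ^ n * K + ε / 2 := this
    _ < ε / 2 + ε / 2 := by linarith
    _ = ε := by ring
end

section
/- Consider the nonlinear delay equation ẍ(t) + f(t, x(t), ẋ(t)) + s(t, x(t)) + Σ_{k=1}^m s_k(t, x(t), x(h_k(t))) = 0, which possesses a unique trivial equilibrium, where f(t,v,0) = 0, s(t,0) = 0, s_k(t,v,0) = 0, and for u ≠ 0: 0 < a₀ ≤ f(t,v,u)/u ≤ A, 0 < b₀ ≤ s(t,u)/u ≤ B, |s_k(t,v,u)/u| ≤ C_k, and t − h_k(t) ≤ τ. If b₀ ≥ (a₀/2)(A − a₀/2) and Σ_{k=1}^m C_k < a₀²/2 − B, then zero is a global attractor: every twice differentiable solution x satisfies x(t) → 0 as t → ∞. -/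
/-!
With `α = a₀ / 2` and the shifted velocity `y = ẋ + α x`, the equation becomes the loop
`ẋ = -α x + y`, `ẏ = -(a - α) y + ((a - α) α - b) x - Σ s_k`, where `a ∈ [a₀, A]` and `b ∈ [b₀, B]`
are the secant slopes of `f` and `s` at the current state. Condition 1 puts `(a - α) α - b` in
`[α² - B, 0]`, so `|x|` and `|y|` decay at rate `α` up to the inputs `|y|` and
`(B - α² + Σ C_k) · sup_{[t - τ, t]} |x|`. The loop gain `(B - α² + Σ C_k) / α²` is below `1` by
condition 2, which gives a small-gain argument: comparing the maxima of `|x|` and `|y|` over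
`[t₀ - τ, t]` bounds `x`, and then every eventual bound `P` of `|x|` improves to `gain · P + δ`.
-/

open Filter Set Real Topology

theorem HasDerivAt.liminf_right_slope_abs_le {y : ℝ → ℝ} {g t r : ℝ} (hy : HasDerivAt y g t)
    (hr : (if y t = 0 then |g| else SignType.sign (y t) * g) < r) :
    ∃ᶠ z in 𝓝[>] t, slope (|y ·|) t z < r := by
  by_cases h0 : y t = 0
  · rw [if_pos h0] at hr
    simpa [slope_def_field, div_eq_inv_mul] using
      hy.hasDerivWithinAt.liminf_right_slope_norm_le (f := y) hr
  · rw [if_neg h0] at hr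
    exact ((hasDerivAt_abs h0).comp t hy).hasDerivWithinAt.liminf_right_slope_le hr

theorem abs_le_exp_mul_add_of_mul_deriv_le {y y' : ℝ → ℝ} {α ε a b : ℝ} (hα : 0 < α)
    (hε : 0 ≤ ε) (hy : ∀ t ∈ Icc a b, HasDerivAt y (y' t) t)
    (hyy' : ∀ t ∈ Ico a b, y t * y' t ≤ -α * y t ^ 2 + ε * |y t|) :
    ∀ t ∈ Icc a b, |y t| ≤ exp (-α * (t - a)) * |y a| + ε / α := by
  have fence : ∀ ε' > ε, ∀ t ∈ Icc a b, |y t| ≤ exp (-α * (t - a)) * |y a| + ε' / α := by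
    intro ε' hε'
    have hε'α : 0 < ε' / α := div_pos (hε.trans_lt hε') hα
    refine image_le_of_liminf_slope_right_lt_deriv_boundary
      (f' := fun t => if y t = 0 then |y' t| else SignType.sign (y t) * y' t)
      (B' := fun t => -α * (exp (-α * (t - a)) * |y a|))
      (fun t ht => (hy t ht).continuousAt.continuousWithinAt.abs)
      (fun t ht r hr => (hy t (Ico_subset_Icc_self ht)).liminf_right_slope_abs_le hr)
      (by simpa using hε'α.le) (fun t => ?_) (fun t ht hcontact => ?_)
    · have := (((hasDerivAt_id t).sub_const a).const_mul (-α)).exp.mul_const |y a|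
      simpa [mul_comm, mul_left_comm, mul_assoc] using this.add_const (ε' / α)
    · have hyt : y t ≠ 0 := by
        intro h
        have := exp_pos (-α * (t - a))
        rw [h, abs_zero] at hcontact
        nlinarith [abs_nonneg (y a)]
      have habs : 0 < |y t| := abs_pos.2 hyt
      have hmul : |y t| * (SignType.sign (y t) * y' t) ≤ |y t| * (-α * |y t| + ε) := by
        rw [← mul_assoc, abs_mul_sign]
        nlinarith [hyy' t ht, sq_abs (y t)]
      simp only [if_neg hyt]
      have hsign := le_of_mul_le_mul_left hmul habs
      have hα' : α * (ε' / α) = ε' := mul_div_cancel₀ _ hα.ne'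
      rw [hcontact] at hsign
      linarith
  intro t ht
  refine le_of_forall_pos_le_add fun δ hδ => ?_
  have := fence (ε + α * δ) (by nlinarith) t ht
  rwa [add_div, mul_div_cancel_left₀ _ hα.ne', ← add_assoc] at this

theorem eventually_abs_le_of_mul_deriv_le {y y' : ℝ → ℝ} {α ε a δ : ℝ} (hα : 0 < α)
    (hε : 0 ≤ ε) (hδ : 0 < δ) (hy : ∀ t ≥ a, HasDerivAt y (y' t) t)
    (hyy' : ∀ t ≥ a, y t * y' t ≤ -α * y t ^ 2 + ε * |y t|) :
    ∀ᶠ t in atTop, |y t| ≤ ε / α + δ := by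
  have hdecay : Tendsto (fun t => exp (-(α * (t - a))) * |y a|) atTop (𝓝 0) := by
    simpa [sub_eq_add_neg] using (tendsto_exp_neg_atTop_nhds_zero.comp
      ((tendsto_id.atTop_add (tendsto_const_nhds (x := -a))).const_mul_atTop hα)).mul_const
        |y a|
  filter_upwards [hdecay.eventually_le_const hδ, eventually_ge_atTop a] with t hsmall hat
  have := abs_le_exp_mul_add_of_mul_deriv_le hα hε (fun u hu => hy u hu.1)
    (fun u hu => hyy' u hu.1) t ⟨hat, le_rfl⟩
  rw [neg_mul] at this
  linarith

theorem tendsto_zero_of_norm_le_contraction {ι E : Type*} [SeminormedAddCommGroup E]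
    {l : Filter ι} {φ : ι → E} {r : ℝ} (hr₀ : 0 ≤ r) (hr₁ : r < 1)
    (hbdd : ∃ P, ∀ᶠ i in l, ‖φ i‖ ≤ P)
    (hstep : ∀ P, (∀ᶠ i in l, ‖φ i‖ ≤ P) → ∀ δ > 0, ∀ᶠ i in l, ‖φ i‖ ≤ r * P + δ) :
    Tendsto φ l (𝓝 0) := by
  obtain ⟨P, hP⟩ := hbdd
  rw [Metric.tendsto_nhds]
  intro ε hε
  have iterate : ∀ n : ℕ, ∀ᶠ i in l, ‖φ i‖ ≤ r ^ n * P + ε / 2 := by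
    intro n
    induction n with
    | zero => filter_upwards [hP] with i hi; linarith
    | succ n ih =>
      filter_upwards [hstep _ ih (ε * (1 - r) / 2) (by nlinarith)] with i hi
      linarith [show r * (r ^ n * P + ε / 2) + ε * (1 - r) / 2 = r ^ (n + 1) * P + ε / 2 by ring]
  obtain ⟨n, hn⟩ := (((tendsto_pow_atTop_nhds_zero_of_lt_one hr₀ hr₁).mul_const P
    ).eventually_lt_const (show (0 : ℝ) * P < ε / 2 by linarith)).exists
  filter_upwards [iterate n] with i hi
  rw [dist_zero_right]
  linarith

/-- `ẋ = -α x + y` and `ẏ ≤ -α y + ρ · sup_{[t - τ, t]} |x|`, read as differential inequalities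
for `|x|` and `|y|`. -/
structure DelayedSmallGainLoop (α ρ τ t₀ : ℝ) (x x' y y' : ℝ → ℝ) : Prop where
  hasDerivAt_x : ∀ t, HasDerivAt x (x' t) t
  hasDerivAt_y : ∀ t, HasDerivAt y (y' t) t
  x_mul_deriv_le : ∀ t ≥ t₀, x t * x' t ≤ -α * x t ^ 2 + |y t| * |x t|
  y_mul_deriv_le : ∀ t ≥ t₀, ∀ P, (∀ u ∈ Icc (t - τ) t, |x u| ≤ P) →
    y t * y' t ≤ -α * y t ^ 2 + ρ * P * |y t|

namespace DelayedSmallGainLoop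

variable {α ρ τ t₀ : ℝ} {x x' y y' : ℝ → ℝ}

theorem abs_x_le (L : DelayedSmallGainLoop α ρ τ t₀ x x' y y') (hα : 0 < α) {a b Q : ℝ}
    (ha : t₀ ≤ a) (hQ : 0 ≤ Q) (hyQ : ∀ u ∈ Icc a b, |y u| ≤ Q) :
    ∀ t ∈ Icc a b, |x t| ≤ |x a| + Q / α := by
  intro t ht
  have := abs_le_exp_mul_add_of_mul_deriv_le hα hQ (fun t _ => L.hasDerivAt_x t)
    (fun u hu => (L.x_mul_deriv_le u (ha.trans hu.1)).trans <| by
      gcongr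
      exact hyQ u (Ico_subset_Icc_self hu)) t ht
  have hexp : exp (-α * (t - a)) ≤ 1 := exp_le_one_iff.2 (by nlinarith [ht.1])
  nlinarith [abs_nonneg (x a)]

theorem abs_y_le (L : DelayedSmallGainLoop α ρ τ t₀ x x' y y') (hα : 0 < α) (hρ : 0 ≤ ρ)
    {a b P : ℝ} (ha : t₀ ≤ a) (hP : 0 ≤ P) (hxP : ∀ u ∈ Icc (a - τ) b, |x u| ≤ P) :
    ∀ t ∈ Icc a b, |y t| ≤ |y a| + ρ * P / α := by
  intro t ht
  have := abs_le_exp_mul_add_of_mul_deriv_le hα (by positivity) (fun t _ => L.hasDerivAt_y t)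
    (fun u hu => L.y_mul_deriv_le u (ha.trans hu.1) P
      fun v hv => hxP v ⟨by linarith [hv.1, hu.1], hv.2.trans hu.2.le⟩) t ht
  have hexp : exp (-α * (t - a)) ≤ 1 := exp_le_one_iff.2 (by nlinarith [ht.1])
  nlinarith [abs_nonneg (y a)]

/-- The maxima `Px`, `Py` of `|x|`, `|y|` over `[t₀ - τ, t]` satisfy `Px ≤ Kx + Py / α` and
`Py ≤ Ky + ρ Px / α`, and these two estimates close up because `ρ < α ^ 2`. -/
theorem exists_abs_x_le (L : DelayedSmallGainLoop α ρ τ t₀ x x' y y') (hα : 0 < α)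
    (hρ : 0 ≤ ρ) (hρα : ρ < α ^ 2) (hτ : 0 ≤ τ) : ∃ M, ∀ t ≥ t₀, |x t| ≤ M := by
  have hxc : Continuous x :=
    continuous_iff_continuousAt.2 fun t => (L.hasDerivAt_x t).continuousAt
  have hyc : Continuous y :=
    continuous_iff_continuousAt.2 fun t => (L.hasDerivAt_y t).continuousAt
  obtain ⟨Kx, hKx⟩ := isCompact_Icc.exists_bound_of_continuousOn
    (hxc.continuousOn (s := Icc (t₀ - τ) t₀))
  obtain ⟨Ky, hKy⟩ := isCompact_Icc.exists_bound_of_continuousOn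
    (hyc.continuousOn (s := Icc (t₀ - τ) t₀))
  simp only [Real.norm_eq_abs] at hKx hKy
  have ht₀ : t₀ ∈ Icc (t₀ - τ) t₀ := ⟨by linarith, le_rfl⟩
  refine ⟨(Kx + Ky / α) / (1 - ρ / α ^ 2), fun t ht => ?_⟩
  have hI : (Icc (t₀ - τ) t).Nonempty := ⟨t, by linarith, le_rfl⟩
  obtain ⟨sx, hsx, hmaxx⟩ := isCompact_Icc.exists_isMaxOn hI hxc.abs.continuousOn
  obtain ⟨sy, hsy, hmaxy⟩ := isCompact_Icc.exists_isMaxOn hI hyc.abs.continuousOn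
  have hPx : |x sx| ≤ Kx + |y sy| / α := by
    rcases le_total sx t₀ with hs | hs
    · linarith [hKx sx ⟨hsx.1, hs⟩, show 0 ≤ |y sy| / α by positivity]
    · linarith [hKx t₀ ht₀, L.abs_x_le hα le_rfl (abs_nonneg _)
        (fun u hu => hmaxy ⟨by linarith [hu.1], hu.2.trans hsx.2⟩) sx ⟨hs, le_rfl⟩]
  have hPy : |y sy| ≤ Ky + ρ * |x sx| / α := by
    rcases le_total sy t₀ with hs | hs
    · linarith [hKy sy ⟨hsy.1, hs⟩, show 0 ≤ ρ * |x sx| / α by positivity]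
    · linarith [hKy t₀ ht₀, L.abs_y_le hα hρ le_rfl (abs_nonneg _)
        (fun u hu => hmaxx ⟨hu.1, hu.2.trans hsy.2⟩) sy ⟨hs, le_rfl⟩]
  have hgain : 0 < 1 - ρ / α ^ 2 := by
    rw [sub_pos, div_lt_one (by positivity)]
    exact hρα
  have hPy' : |y sy| / α ≤ Ky / α + ρ / α ^ 2 * |x sx| :=
    calc |y sy| / α ≤ (Ky + ρ * |x sx| / α) / α := by gcongr
      _ = Ky / α + ρ / α ^ 2 * |x sx| := by field_simp
  rw [le_div_iff₀ hgain]
  calc |x t| * (1 - ρ / α ^ 2) ≤ |x sx| * (1 - ρ / α ^ 2) :=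
        mul_le_mul_of_nonneg_right (hmaxx ⟨by linarith, le_rfl⟩) hgain.le
    _ ≤ Kx + Ky / α := by linarith

theorem eventually_abs_x_le (L : DelayedSmallGainLoop α ρ τ t₀ x x' y y') (hα : 0 < α)
    (hρ : 0 ≤ ρ) {P : ℝ} (hP : ∀ᶠ t in atTop, |x t| ≤ P) {δ : ℝ} (hδ : 0 < δ) :
    ∀ᶠ t in atTop, |x t| ≤ ρ / α ^ 2 * P + δ := by
  obtain ⟨T, hT⟩ := eventually_atTop.1 hP
  have hP₀ : 0 ≤ P := (abs_nonneg _).trans (hT T le_rfl)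
  have hy := eventually_abs_le_of_mul_deriv_le (a := max (T + τ) t₀) hα (by positivity)
    (by positivity : 0 < α * δ / 2) (fun t _ => L.hasDerivAt_y t) fun t ht =>
      L.y_mul_deriv_le t (le_of_max_le_right ht) P fun u hu =>
        hT u (by linarith [le_of_max_le_left ht, hu.1])
  obtain ⟨T', hT'⟩ := eventually_atTop.1 hy
  have hx := eventually_abs_le_of_mul_deriv_le (a := max T' t₀) (ε := ρ * P / α + α * δ / 2) hα
    (by positivity) (by positivity : 0 < δ / 2) (fun t _ => L.hasDerivAt_x t) fun t ht =>
      (L.x_mul_deriv_le t (le_of_max_le_right ht)).trans <| by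
        gcongr
        exact hT' t (le_of_max_le_left ht)
  refine hx.mono fun t ht => ht.trans_eq ?_
  field_simp
  ring

theorem tendsto_x (L : DelayedSmallGainLoop α ρ τ t₀ x x' y y') (hα : 0 < α) (hρ : 0 ≤ ρ)
    (hρα : ρ < α ^ 2) (hτ : 0 ≤ τ) : Tendsto x atTop (𝓝 0) := by
  obtain ⟨M, hM⟩ := L.exists_abs_x_le hα hρ hρα hτ
  refine tendsto_zero_of_norm_le_contraction (r := ρ / α ^ 2) (by positivity)
    ((div_lt_one (by positivity)).2 hρα) ⟨M, eventually_atTop.2 ⟨t₀, hM⟩⟩ fun P hP δ hδ => ?_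
  simpa only [Real.norm_eq_abs] using L.eventually_abs_x_le hα hρ (by simpa using hP) hδ

end DelayedSmallGainLoop

theorem exists_eq_mul_of_div_mem_Icc {φ : ℝ → ℝ} {lo hi : ℝ} (h0 : φ 0 = 0) (hle : lo ≤ hi)
    (hφ : ∀ u, u ≠ 0 → lo ≤ φ u / u ∧ φ u / u ≤ hi) (u : ℝ) :
    ∃ c ∈ Icc lo hi, φ u = c * u := by
  rcases eq_or_ne u 0 with rfl | hu
  · exact ⟨lo, ⟨le_rfl, hle⟩, by rw [h0, mul_zero]⟩
  · exact ⟨φ u / u, hφ u hu, (div_mul_cancel₀ _ hu).symm⟩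

theorem abs_le_mul_abs_of_abs_div_le {φ : ℝ → ℝ} {c : ℝ} (h0 : φ 0 = 0)
    (hφ : ∀ u, u ≠ 0 → |φ u / u| ≤ c) (u : ℝ) : |φ u| ≤ c * |u| := by
  rcases eq_or_ne u 0 with rfl | hu
  · simp [h0]
  · calc |φ u| = |φ u / u| * |u| := by rw [← abs_mul, div_mul_cancel₀ _ hu]
      _ ≤ c * |u| := mul_le_mul_of_nonneg_right (hφ u hu) (abs_nonneg u)

theorem abs_sum_le_sum_mul_of_abs_div_le {ι : Type*} (S : Finset ι) {φ : ι → ℝ → ℝ}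
    {c v : ι → ℝ} {P : ℝ} (h0 : ∀ k, φ k 0 = 0) (hc : ∀ k, 0 ≤ c k)
    (hφ : ∀ k u, u ≠ 0 → |φ k u / u| ≤ c k) (hv : ∀ k, |v k| ≤ P) :
    |∑ k ∈ S, φ k (v k)| ≤ (∑ k ∈ S, c k) * P := by
  rw [Finset.sum_mul]
  refine (Finset.abs_sum_le_sum_abs _ _).trans (Finset.sum_le_sum fun k _ => ?_)
  exact (abs_le_mul_abs_of_abs_div_le (h0 k) (hφ k) _).trans
    (mul_le_mul_of_nonneg_left (hv k) (hc k))

/-- For `X'' + a X' + b X + S = 0`, the shifted velocity `Y = X' + α X` satisfies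
`Y' = -(a - α) Y + ((a - α) α - b) X - S`; the hypotheses put the coefficient of `X`
in `[α ^ 2 - B, 0]`. -/
theorem shifted_velocity_mul_deriv_le {α a A b B X X' X'' S : ℝ} (hα : 0 ≤ α) (ha : 2 * α ≤ a)
    (haA : a ≤ A) (hAb : α * (A - α) ≤ b) (hbB : b ≤ B) (heq : X'' + a * X' + b * X + S = 0) :
    (X' + α * X) * (X'' + α * X') ≤
      -α * (X' + α * X) ^ 2 + ((B - α ^ 2) * |X| + |S|) * |X' + α * X| := by
  set Y := X' + α * X
  set g := (a - α) * α - b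
  have hg : |g| ≤ B - α ^ 2 := abs_le.2 ⟨by nlinarith, by nlinarith⟩
  have hY' : X'' + α * X' = -(a - α) * Y + g * X - S := by linear_combination heq
  have hdamp : -(a - α) * Y ^ 2 ≤ -α * Y ^ 2 := by nlinarith [sq_nonneg Y]
  have hcross : g * X * Y ≤ (B - α ^ 2) * |X| * |Y| :=
    calc g * X * Y ≤ |g| * |X| * |Y| := by rw [← abs_mul, ← abs_mul]; exact le_abs_self _
      _ ≤ (B - α ^ 2) * |X| * |Y| := by gcongr
  have hforce : -(S * Y) ≤ |S| * |Y| := by rw [← abs_mul]; exact neg_le_abs _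
  rw [hY']
  linarith [show Y * (-(a - α) * Y + g * X - S) = -(a - α) * Y ^ 2 + g * X * Y - S * Y by ring]

theorem nonlinear_delay_global_attractor_case2_general
    (m : ℕ) (t₀ a₀ A b₀ B τ : ℝ)
    (f : ℝ → ℝ → ℝ → ℝ) (s : ℝ → ℝ → ℝ) (sk : Fin m → ℝ → ℝ → ℝ → ℝ)
    (C : Fin m → ℝ) (h : Fin m → ℝ → ℝ)
    (hhle : ∀ k t, h k t ≤ t)
    (hτ : 0 < τ) (hdelay : ∀ k t, t - h k t ≤ τ)
    (hf0 : ∀ t v, f t v 0 = 0) (hs0 : ∀ t, s t 0 = 0) (hsk0 : ∀ k t v, sk k t v 0 = 0)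
    (ha₀ : 0 < a₀) (haA : a₀ ≤ A) (hbB : b₀ ≤ B) (hC : ∀ k, 0 ≤ C k)
    (hf : ∀ t v u, u ≠ 0 → a₀ ≤ f t v u / u ∧ f t v u / u ≤ A)
    (hs : ∀ t u, u ≠ 0 → b₀ ≤ s t u / u ∧ s t u / u ≤ B)
    (hsk : ∀ k t v u, u ≠ 0 → |sk k t v u / u| ≤ C k)
    (hcond1 : b₀ ≥ (a₀ / 2) * (A - a₀ / 2)) (hcond2 : (∑ k, C k) < a₀ ^ 2 / 2 - B)
    (x x' x'' : ℝ → ℝ)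
    (hx' : ∀ t, HasDerivAt x (x' t) t) (hx'' : ∀ t, HasDerivAt x' (x'' t) t)
    (heq : ∀ t ≥ t₀, x'' t + f t (x t) (x' t) + s t (x t)
        + (∑ k, sk k t (x t) (x (h k t))) = 0) :
    Tendsto x atTop (nhds 0) := by
  set α := a₀ / 2 with hα_def
  have hα : 0 < α := by positivity
  have hαB : α ^ 2 ≤ B := by nlinarith
  have hC₀ : 0 ≤ ∑ k, C k := Finset.sum_nonneg fun k _ => hC k
  have hρα : B - α ^ 2 + ∑ k, C k < α ^ 2 := by
    linarith [show a₀ ^ 2 / 2 = 2 * α ^ 2 by rw [hα_def]; ring]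
  have L : DelayedSmallGainLoop α (B - α ^ 2 + ∑ k, C k) τ t₀ x x' (fun t => x' t + α * x t)
      (fun t => x'' t + α * x' t) := by
    refine ⟨hx', fun t => (hx'' t).add ((hx' t).const_mul α), fun t _ => ?_,
      fun t ht P hP => ?_⟩
    · have := le_abs_self (x t * (x' t + α * x t))
      rw [abs_mul, mul_comm |x t|] at this
      linarith [show x t * x' t = -α * x t ^ 2 + x t * (x' t + α * x t) by ring]
    · obtain ⟨a, ha, hfa⟩ := exists_eq_mul_of_div_mem_Icc (hf0 t (x t)) haA (hf t (x t)) (x' t)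
      obtain ⟨b, hb, hsb⟩ := exists_eq_mul_of_div_mem_Icc (hs0 t) hbB (hs t) (x t)
      have hxP : |x t| ≤ P := hP t ⟨by linarith, le_rfl⟩
      have hS := abs_sum_le_sum_mul_of_abs_div_le Finset.univ (fun k => hsk0 k t (x t)) hC
        (fun k => hsk k t (x t)) fun k => hP (h k t) ⟨by linarith [hdelay k t], hhle k t⟩
      refine (shifted_velocity_mul_deriv_le (S := ∑ k, sk k t (x t) (x (h k t))) hα.le
        (by linarith [ha.1]) ha.2 (by linarith [hb.1]) hb.2
        (by rw [← hfa, ← hsb]; linarith [heq t ht])).trans ?_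
      gcongr
      nlinarith
  exact L.tendsto_x hα (by linarith) hρα hτ.le

/-- Zero is a global attractor for the nonlinear delay equation
ẍ + f(t,x,ẋ) + s(t,x) + Σ s_k(t,x(t),x(h_k(t))) = 0 under condition 2) of Lemma 2. -/
theorem nonlinear_delay_global_attractor_case2
    (m : ℕ) (t₀ a₀ A b₀ B τ : ℝ)
    (f : ℝ → ℝ → ℝ → ℝ) (s : ℝ → ℝ → ℝ) (sk : Fin m → ℝ → ℝ → ℝ → ℝ)
    (C : Fin m → ℝ) (h : Fin m → ℝ → ℝ)
    (hhmeas : ∀ k, Measurable (h k)) (hhle : ∀ k t, h k t ≤ t)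
    (hτ : 0 < τ) (hdelay : ∀ k t, t - h k t ≤ τ)
    (hf0 : ∀ t v, f t v 0 = 0) (hs0 : ∀ t, s t 0 = 0) (hsk0 : ∀ k t v, sk k t v 0 = 0)
    (ha₀ : 0 < a₀) (hb₀ : 0 < b₀) (haA : a₀ ≤ A) (hbB : b₀ ≤ B) (hC : ∀ k, 0 ≤ C k)
    (hf : ∀ t v u, u ≠ 0 → a₀ ≤ f t v u / u ∧ f t v u / u ≤ A)
    (hs : ∀ t u, u ≠ 0 → b₀ ≤ s t u / u ∧ s t u / u ≤ B)
    (hsk : ∀ k t v u, u ≠ 0 → |sk k t v u / u| ≤ C k)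
    (hcond1 : b₀ ≥ (a₀ / 2) * (A - a₀ / 2)) (hcond2 : (∑ k, C k) < a₀ ^ 2 / 2 - B)
    (x x' x'' : ℝ → ℝ)
    (hx' : ∀ t, HasDerivAt x (x' t) t) (hx'' : ∀ t, HasDerivAt x' (x'' t) t)
    (hinit : ∃ M : ℝ, ∀ t ≤ t₀, |x t| ≤ M ∧ |x' t| ≤ M)
    (heq : ∀ t ≥ t₀, x'' t + f t (x t) (x' t) + s t (x t)
        + (∑ k, sk k t (x t) (x (h k t))) = 0) :
    Tendsto x atTop (nhds 0) :=
  nonlinear_delay_global_attractor_case2_general m t₀ a₀ A b₀ B τ f s sk C h hhle hτ hdelay hf0 hs0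
    hsk0 ha₀ haA hbB hC hf hs hsk hcond1 hcond2 x x' x'' hx' hx'' heq
end

section
/- Let a > 0, b > 0, C ≥ 0 and suppose |f(t, v + x*) − b·x*| ≤ C·|v| for all t and v. If C < b ≤ a²/4, then the equilibrium x* of the controlled equation ẍ(t) + a·ẋ(t) + b·x(t) = f(t, x(g(t))) is globally asymptotically stable: every twice differentiable solution x satisfies x(t) → x* as t → ∞. -/
/-!
Write `x = x* + y` and factor `λ² + aλ + b = (λ + l₁)(λ + l₂)` with `l₁, l₂ > 0`, which is
possible because `b ≤ a²/4`. Then `u = y' + l₂ y` solves `u' + l₁ u = F` with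
`|F t| ≤ C |y (g t)|`, so Grönwall's inequality, applied to `u` and then to `y`, bounds `|y|`
by `C / (l₁ l₂) = C / b < 1` times a bound on its past. On `[t₀, t]` this gives boundedness
(compare with the maximum of `|y|`); eventually it improves any bound `B` to any `r > C B / b`,
and iterating drives `|y|` to `0`.
-/

open Filter Real Set Topology

theorem gronwallBound_le_max {δ K ε x : ℝ} (hK : K < 0) (hx : 0 ≤ x) :
    gronwallBound δ K ε x ≤ max δ (-ε / K) := by
  have he₀ : 0 < exp (K * x) := exp_pos _
  have he₁ : exp (K * x) ≤ 1 := exp_le_one_iff.2 (mul_nonpos_of_nonpos_of_nonneg hK.le hx)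
  have hconvex : gronwallBound δ K ε x = exp (K * x) * δ + (1 - exp (K * x)) * (-ε / K) := by
    rw [gronwallBound_of_K_ne_0 hK.ne]
    ring
  rw [hconvex]
  nlinarith [le_max_left δ (-ε / K), le_max_right δ (-ε / K)]

theorem tendsto_gronwallBound_atTop {δ K ε : ℝ} (hK : K < 0) :
    Tendsto (gronwallBound δ K ε) atTop (𝓝 (-ε / K)) := by
  have he : Tendsto (fun x => exp (K * x)) atTop (𝓝 0) :=
    tendsto_exp_atBot.comp (tendsto_id.const_mul_atTop_of_neg hK)
  rw [gronwallBound_of_K_ne_0 hK.ne]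
  convert (he.mul_const δ).add ((he.sub_const 1).mul_const (ε / K)) using 2 <;> ring

theorem le_gronwallBound_of_hasDerivAt {f f' : ℝ → ℝ} {δ K ε a b : ℝ}
    (hf : ∀ x, HasDerivAt f (f' x) x) (hab : a ≤ b) (ha : f a ≤ δ)
    (bound : ∀ x ∈ Ico a b, f' x ≤ K * f x + ε) :
    f b ≤ gronwallBound δ K ε (b - a) :=
  le_gronwallBound_of_liminf_deriv_right_le (fun x _ => (hf x).continuousAt.continuousWithinAt)
    (fun x _ _ hr => (hf x).hasDerivWithinAt.liminf_right_slope_le hr) ha bound b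
    (right_mem_Icc.2 hab)

section FirstOrder

variable {v v' : ℝ → ℝ} {lam c S t : ℝ}

theorem abs_le_gronwallBound_of_abs_deriv_add_mul_le (hv : ∀ s, HasDerivAt v (v' s) s)
    (hSt : S ≤ t) (h : ∀ s ∈ Ico S t, |v' s + lam * v s| ≤ c) :
    |v t| ≤ gronwallBound |v S| (-lam) c (t - S) := by
  rw [abs_le']
  constructor
  · refine le_gronwallBound_of_hasDerivAt hv hSt (le_abs_self _) fun s hs => ?_
    linarith [(abs_le.1 (h s hs)).2]
  · refine le_gronwallBound_of_hasDerivAt (fun s => (hv s).neg) hSt (neg_le_abs _) fun s hs => ?_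
    rw [Pi.neg_apply]
    linarith [(abs_le.1 (h s hs)).1]

theorem abs_le_max_of_abs_deriv_add_mul_le (hlam : 0 < lam) (hv : ∀ s, HasDerivAt v (v' s) s)
    (hSt : S ≤ t) (h : ∀ s ∈ Ico S t, |v' s + lam * v s| ≤ c) :
    |v t| ≤ max |v S| (c / lam) := by
  simpa only [neg_div_neg_eq] using (abs_le_gronwallBound_of_abs_deriv_add_mul_le hv hSt h).trans
    (gronwallBound_le_max (neg_neg_of_pos hlam) (sub_nonneg.2 hSt))

theorem eventually_abs_lt_of_abs_deriv_add_mul_le (hlam : 0 < lam)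
    (hv : ∀ s, HasDerivAt v (v' s) s) (h : ∀ᶠ s in atTop, |v' s + lam * v s| ≤ c) {r : ℝ}
    (hr : c / lam < r) : ∀ᶠ t in atTop, |v t| < r := by
  obtain ⟨S, hS⟩ := eventually_atTop.1 h
  have hlim : Tendsto (fun t => gronwallBound |v S| (-lam) c (t - S)) atTop (𝓝 (c / lam)) := by
    simpa only [neg_div_neg_eq, Function.comp_def, id, ← sub_eq_add_neg] using
      (tendsto_gronwallBound_atTop (neg_neg_of_pos hlam)).comp
        (tendsto_atTop_add_const_right _ (-S) tendsto_id)
  filter_upwards [hlim.eventually (gt_mem_nhds hr), eventually_ge_atTop S] with t hlt hSt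
  exact (abs_le_gronwallBound_of_abs_deriv_add_mul_le hv hSt fun s hs => hS s hs.1).trans_lt hlt

end FirstOrder

theorem exists_pos_add_eq_mul_eq_of_le_sq_div_four {a b : ℝ} (ha : 0 < a) (hb : 0 < b)
    (hba : b ≤ a ^ 2 / 4) : ∃ l₁ l₂ : ℝ, 0 < l₁ ∧ 0 < l₂ ∧ l₁ + l₂ = a ∧ l₁ * l₂ = b := by
  set d := √(a ^ 2 - 4 * b)
  have hd₀ : 0 ≤ d := sqrt_nonneg _
  have hd2 : d ^ 2 = a ^ 2 - 4 * b := sq_sqrt (by linarith)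
  have hda : d < a := (sqrt_lt' ha).2 (by linarith)
  exact ⟨(a - d) / 2, (a + d) / 2, by linarith, by linarith, by ring,
    by linear_combination (-1 / 4 : ℝ) * hd2⟩

section SecondOrder

variable {y y' y'' : ℝ → ℝ} {l₁ l₂ c : ℝ}

/-- With `u = y' + l₂ y`, the operator `y'' + (l₁ + l₂) y' + l₁ l₂ y` is `u' + l₁ u`. -/
theorem hasDerivAt_deriv_add_mul (hy : ∀ s, HasDerivAt y (y' s) s)
    (hy' : ∀ s, HasDerivAt y' (y'' s) s) (s : ℝ) :
    HasDerivAt (fun r => y' r + l₂ * y r) (y'' s + l₂ * y' s) s :=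
  (hy' s).add ((hy s).const_mul l₂)

theorem abs_le_max_of_abs_secondOrder_le {S t : ℝ} (hl₁ : 0 < l₁) (hl₂ : 0 < l₂)
    (hy : ∀ s, HasDerivAt y (y' s) s) (hy' : ∀ s, HasDerivAt y' (y'' s) s) (hSt : S ≤ t)
    (h : ∀ s ∈ Ico S t, |y'' s + (l₁ + l₂) * y' s + l₁ * l₂ * y s| ≤ c) :
    |y t| ≤ max (max |y S| (|y' S + l₂ * y S| / l₂)) (c / (l₁ * l₂)) := by
  have hu : ∀ s ∈ Ico S t, |y' s + l₂ * y s| ≤ max |y' S + l₂ * y S| (c / l₁) :=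
    fun s hs => abs_le_max_of_abs_deriv_add_mul_le hl₁ (hasDerivAt_deriv_add_mul hy hy') hs.1
      fun r hr => by
        convert h r ⟨hr.1, hr.2.trans hs.2⟩ using 2
        ring
  calc |y t| ≤ max |y S| (max |y' S + l₂ * y S| (c / l₁) / l₂) :=
        abs_le_max_of_abs_deriv_add_mul_le hl₂ hy hSt hu
    _ = max (max |y S| (|y' S + l₂ * y S| / l₂)) (c / (l₁ * l₂)) := by
        rw [← max_div_div_right hl₂.le, div_div, max_assoc]

theorem eventually_abs_lt_of_abs_secondOrder_le (hl₁ : 0 < l₁) (hl₂ : 0 < l₂)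
    (hy : ∀ s, HasDerivAt y (y' s) s) (hy' : ∀ s, HasDerivAt y' (y'' s) s)
    (h : ∀ᶠ s in atTop, |y'' s + (l₁ + l₂) * y' s + l₁ * l₂ * y s| ≤ c) {r : ℝ}
    (hr : c / (l₁ * l₂) < r) : ∀ᶠ t in atTop, |y t| < r := by
  obtain ⟨r', hcr', hr'r⟩ : ∃ r', c / l₁ < r' ∧ r' < r * l₂ :=
    exists_between (by rwa [← div_lt_iff₀ hl₂, div_div])
  have hu : ∀ᶠ s in atTop, |y' s + l₂ * y s| < r' :=
    eventually_abs_lt_of_abs_deriv_add_mul_le hl₁ (hasDerivAt_deriv_add_mul hy hy')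
      (h.mono fun s hs => by convert hs using 2; ring) hcr'
  exact eventually_abs_lt_of_abs_deriv_add_mul_le hl₂ hy (hu.mono fun s hs => hs.le)
    ((div_lt_iff₀ hl₂).2 hr'r)

end SecondOrder

theorem abs_le_max_of_history_bound {y : ℝ → ℝ} {t₀ M K ρ t : ℝ} (hy : Continuous y)
    (hρ : ρ < 1) (hinit : ∀ s ≤ t₀, |y s| ≤ M)
    (hstep : ∀ s ≥ t₀, ∀ Q, (∀ r ≤ s, |y r| ≤ Q) → |y s| ≤ max K (ρ * Q)) (ht : t₀ ≤ t) :
    |y t| ≤ max M K := by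
  obtain ⟨m, hm, hmax⟩ :=
    isCompact_Icc.exists_isMaxOn (nonempty_Icc.2 ht) (continuous_abs.comp hy).continuousOn
  rw [isMaxOn_iff] at hmax
  have hhist : ∀ r ≤ m, |y r| ≤ max M |y m| := by
    intro r hr
    rcases le_total r t₀ with hr₀ | hr₀
    · exact (hinit r hr₀).trans (le_max_left _ _)
    · exact (hmax r ⟨hr₀, hr.trans hm.2⟩).trans (le_max_right _ _)
  have hM : 0 ≤ M := (abs_nonneg _).trans (hinit t₀ le_rfl)
  have hm_le : |y m| ≤ max M K := by
    rcases le_max_iff.1 (hstep m hm.1 _ hhist) with hK | hρQ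
    · exact le_max_of_le_right hK
    · refine le_max_of_le_left (not_lt.1 fun hMm => ?_)
      rw [max_eq_right hMm.le] at hρQ
      nlinarith
  exact (hmax t (right_mem_Icc.2 ht)).trans hm_le

theorem tendsto_zero_of_abs_bound_contracts {α : Type*} {l : Filter α} {y : α → ℝ} {ρ B : ℝ}
    (hρ₀ : 0 ≤ ρ) (hρ : ρ < 1) (hB : ∀ᶠ t in l, |y t| ≤ B)
    (hstep : ∀ B', (∀ᶠ t in l, |y t| ≤ B') → ∀ r, ρ * B' < r → ∀ᶠ t in l, |y t| ≤ r) :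
    Tendsto y l (𝓝 0) := by
  rw [Metric.tendsto_nhds]
  intro ε hε
  have hiter : ∀ n : ℕ, ∀ᶠ t in l, |y t| ≤ ρ ^ n * B + ε / 2 := by
    intro n
    induction n with
    | zero => simpa only [pow_zero, one_mul] using hB.mono fun t ht => by linarith
    | succ n ih => exact hstep _ ih _ (by rw [pow_succ]; nlinarith [mul_pos (sub_pos.2 hρ) hε])
  have hpow : Tendsto (fun n : ℕ => ρ ^ n * B) atTop (𝓝 0) := by
    simpa using (tendsto_pow_atTop_nhds_zero_of_lt_one hρ₀ hρ).mul_const B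
  obtain ⟨n, hn⟩ := (hpow.eventually (gt_mem_nhds (half_pos hε))).exists
  filter_upwards [hiter n] with t ht
  rw [Real.dist_eq, sub_zero]
  linarith

theorem proportional_delayed_control_stability_case_a_general
    (t₀ a b C xs : ℝ)
    (f : ℝ → ℝ → ℝ) (g : ℝ → ℝ)
    (hgle : ∀ t, g t ≤ t) (hgtend : Tendsto g atTop atTop)
    (ha : 0 < a) (hb : 0 < b) (hC : 0 ≤ C)
    (hfbound : ∀ t v, |f t (v + xs) - b * xs| ≤ C * |v|)
    (hcond : C < b ∧ b ≤ a ^ 2 / 4)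
    (x x' x'' : ℝ → ℝ)
    (hx' : ∀ t, HasDerivAt x (x' t) t) (hx'' : ∀ t, HasDerivAt x' (x'' t) t)
    (hinit : ∃ M : ℝ, ∀ t ≤ t₀, |x t| ≤ M ∧ |x' t| ≤ M)
    (heq : ∀ t ≥ t₀, x'' t + a * x' t + b * x t = f t (x (g t))) :
    Tendsto x atTop (nhds xs) := by
  obtain ⟨l₁, l₂, hl₁, hl₂, rfl, rfl⟩ :=
    exists_pos_add_eq_mul_eq_of_le_sq_div_four ha hb hcond.2
  set y : ℝ → ℝ := fun t => x t - xs
  have hy : ∀ t, HasDerivAt y (x' t) t := fun t => (hx' t).sub_const xs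
  have hforce : ∀ t ≥ t₀, |x'' t + (l₁ + l₂) * x' t + l₁ * l₂ * y t| ≤ C * |y (g t)| := by
    intro t ht
    convert hfbound t (y (g t)) using 2
    simp only [y, sub_add_cancel, ← heq t ht]
    ring
  have hρ : C / (l₁ * l₂) < 1 := (div_lt_one hb).2 hcond.1
  have hyc : Continuous y := continuous_iff_continuousAt.2 fun t => (hy t).continuousAt
  obtain ⟨M, hM⟩ := hinit
  have hpast : ∀ s ≤ t₀, |y s| ≤ M + |xs| := fun s hs =>
    (abs_sub _ _).trans (by linarith [(hM s hs).1])
  have hbounded : ∀ t ≥ t₀, |y t| ≤ max (M + |xs|) (max |y t₀| (|x' t₀ + l₂ * y t₀| / l₂)) :=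
    fun t ht => abs_le_max_of_history_bound hyc hρ hpast (fun s hs Q hQ => by
      rw [← mul_div_right_comm]
      exact abs_le_max_of_abs_secondOrder_le hl₁ hl₂ hy hx'' hs fun r hr =>
        (hforce r hr.1).trans (mul_le_mul_of_nonneg_left (hQ _ ((hgle r).trans hr.2.le)) hC)) ht
  refine tendsto_sub_nhds_zero_iff.1 (tendsto_zero_of_abs_bound_contracts (div_nonneg hC hb.le)
    hρ (eventually_atTop.2 ⟨t₀, hbounded⟩) fun B hB r hr => ?_)
  refine (eventually_abs_lt_of_abs_secondOrder_le (c := C * B) hl₁ hl₂ hy hx'' ?_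
    (by rwa [mul_div_right_comm])).mono fun t ht => ht.le
  filter_upwards [hgtend.eventually hB, eventually_ge_atTop t₀] with t hgt ht
  exact (hforce t ht).trans (mul_le_mul_of_nonneg_left hgt hC)

/-- Theorem 3, part a): if C < b ≤ a²/4, the equilibrium x* of
ẍ(t) + a·ẋ(t) + b·x(t) = f(t, x(g(t))) is globally asymptotically stable. -/
theorem proportional_delayed_control_stability_case_a
    (t₀ a b C xs τ : ℝ)
    (f : ℝ → ℝ → ℝ) (g : ℝ → ℝ)
    (hgmeas : Measurable g) (hgle : ∀ t, g t ≤ t) (hgtend : Tendsto g atTop atTop)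
    (hτ : 0 < τ) (hdelay : ∀ t, t - g t ≤ τ)
    (ha : 0 < a) (hb : 0 < b) (hC : 0 ≤ C)
    (hfbound : ∀ t v, |f t (v + xs) - b * xs| ≤ C * |v|)
    (hcond : C < b ∧ b ≤ a ^ 2 / 4)
    (x x' x'' : ℝ → ℝ)
    (hx' : ∀ t, HasDerivAt x (x' t) t) (hx'' : ∀ t, HasDerivAt x' (x'' t) t)
    (hinit : ∃ M : ℝ, ∀ t ≤ t₀, |x t| ≤ M ∧ |x' t| ≤ M)
    (heq : ∀ t ≥ t₀, x'' t + a * x' t + b * x t = f t (x (g t))) :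
    Tendsto x atTop (nhds xs) :=
  proportional_delayed_control_stability_case_a_general t₀ a b C xs f g hgle hgtend ha hb hC hfbound
    hcond x x' x'' hx' hx'' hinit heq
end

section
/- Let a > 0, b > 0, C ≥ 0 and suppose |f(t, v + x*) − b·x*| ≤ C·|v| for all t and v. If a²/4 ≤ b < a²/2 − C, then the equilibrium x* of the controlled equation ẍ(t) + a·ẋ(t) + b·x(t) = f(t, x(g(t))) is globally asymptotically stable: every twice differentiable solution x satisfies x(t) → x* as t → ∞. -/
open Filter Set Topology

/-! With `α = a / 2` and `r = -α + i √(b - α²)`, a root of `z² + a z + b`, the operator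
`D² + a D + b` factors as `(D - r)(D - r̄)`. Hence `v = x - x*` and `u = x' - r̄ v` solve
`u' = r u + F` and `v' = r̄ v + u`, where `F = x'' + a x' + b v` is the forcing. Both equations are
damped at rate `α`, so a forcing bounded by `K` keeps `|v|` within `K / α²` of a constant on finite
horizons and below `K / α² + ε` eventually. Along solutions `|F t| ≤ C |v (g t)|`, and
`q = C / α² < 1` because `b < a² / 2 - C` forces `C < α²`. Causality (`g t ≤ t`) and continuity
give a global bound on `v`, and iterating `|v| ≤ D eventually ⇒ |v| ≤ q D + ε eventually` drives
`v` to `0`. -/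

section LinearDecay

variable {E : Type*} [NormedAddCommGroup E] [NormedSpace ℂ E]
  {u F : ℝ → E} {μ : ℂ} {α K T t : ℝ}

theorem norm_le_exp_mul_add_of_hasDerivAt (hα : 0 < α) (hμ : μ.re = -α) (hTt : T ≤ t)
    (hu : ∀ s ∈ Icc T t, HasDerivAt u (μ • u s + F s) s)
    (hF : ∀ s ∈ Icc T t, ‖F s‖ ≤ K) :
    ‖u t‖ ≤ Real.exp (-α * (t - T)) * ‖u T‖ + K / α := by
  have hK : 0 ≤ K := (norm_nonneg _).trans (hF T ⟨le_rfl, hTt⟩)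
  have hexp : ∀ s : ℝ, ‖Complex.exp (-μ * s)‖ = Real.exp (α * s) := fun s => by
    simp [Complex.norm_exp, Complex.mul_re, hμ]
  -- variation of constants: `U = e^{-μ s} • u` has derivative `e^{-μ s} • F`
  set U : ℝ → E := fun s => Complex.exp (-μ * s) • u s
  have hU : ∀ s ∈ Icc T t, HasDerivAt U (Complex.exp (-μ * s) • F s) s := fun s hs => by
    have hE : HasDerivAt (fun s : ℝ => Complex.exp (-μ * s)) (Complex.exp (-μ * s) * -μ) s := by
      simpa using ((hasDerivAt_id s).ofReal_comp.const_mul (-μ)).cexp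
    convert hE.smul (hu s hs) using 1
    · rfl
    · rw [smul_add, smul_smul, mul_neg, neg_smul]
      abel
  have hUB : ‖U t - U T‖ ≤ K / α * (Real.exp (α * t) - Real.exp (α * T)) := by
    refine image_norm_le_of_norm_deriv_right_le_deriv_boundary
      (B := fun s => K / α * (Real.exp (α * s) - Real.exp (α * T)))
      (f' := fun s => Complex.exp (-μ * s) • F s) (B' := fun s => K * Real.exp (α * s))
      (fun s hs => ((hU s hs).sub_const _).continuousAt.continuousWithinAt)
      (fun s hs => ((hU s (Ico_subset_Icc_self hs)).sub_const _).hasDerivWithinAt)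
      (by simp) (fun s => ?_) (fun s hs => ?_) ⟨hTt, le_rfl⟩
    · have h := (((hasDerivAt_id s).const_mul α).exp.sub_const (Real.exp (α * T))).const_mul (K / α)
      exact h.congr_deriv (by simp only [id, mul_one]; field_simp)
    · rw [norm_smul, hexp, mul_comm]
      exact mul_le_mul_of_nonneg_right (hF s (Ico_subset_Icc_self hs)) (Real.exp_nonneg _)
  have hUnorm : ∀ s, ‖U s‖ = Real.exp (α * s) * ‖u s‖ := fun s => by
    simp only [U, norm_smul, hexp]
  have hgrowth :
      Real.exp (α * t) * ‖u t‖ ≤ Real.exp (α * T) * ‖u T‖ + K / α * Real.exp (α * t) := by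
    have h := (norm_sub_norm_le (U t) (U T)).trans hUB
    rw [hUnorm, hUnorm, mul_sub] at h
    have : 0 ≤ K / α * Real.exp (α * T) := by positivity
    linarith
  have hexp_mul : Real.exp (α * t) * Real.exp (-α * (t - T)) = Real.exp (α * T) := by
    rw [← Real.exp_add]; ring_nf
  refine le_of_mul_le_mul_left ?_ (Real.exp_pos (α * t))
  calc Real.exp (α * t) * ‖u t‖ ≤ _ := hgrowth
    _ = Real.exp (α * t) * (Real.exp (-α * (t - T)) * ‖u T‖ + K / α) := by
      rw [mul_add, ← mul_assoc, hexp_mul]; ring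

theorem norm_le_add_of_hasDerivAt (hα : 0 < α) (hμ : μ.re = -α) (hTt : T ≤ t)
    (hu : ∀ s ∈ Icc T t, HasDerivAt u (μ • u s + F s) s)
    (hF : ∀ s ∈ Icc T t, ‖F s‖ ≤ K) :
    ‖u t‖ ≤ ‖u T‖ + K / α := by
  have hdecay : Real.exp (-α * (t - T)) ≤ 1 :=
    Real.exp_le_one_iff.2 (mul_nonpos_of_nonpos_of_nonneg (neg_nonpos.2 hα.le) (sub_nonneg.2 hTt))
  have := norm_le_exp_mul_add_of_hasDerivAt hα hμ hTt hu hF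
  nlinarith [norm_nonneg (u T)]

theorem eventually_norm_le_of_hasDerivAt (hα : 0 < α) (hμ : μ.re = -α)
    (hu : ∀ᶠ s in atTop, HasDerivAt u (μ • u s + F s) s)
    (hF : ∀ᶠ s in atTop, ‖F s‖ ≤ K) {ε : ℝ} (hε : 0 < ε) :
    ∀ᶠ t in atTop, ‖u t‖ ≤ K / α + ε := by
  obtain ⟨T, hT⟩ := eventually_atTop.1 (hu.and hF)
  have hdecay : Tendsto (fun t => Real.exp (-α * (t - T)) * ‖u T‖) atTop (𝓝 0) := by
    have : Tendsto (fun t => -α * (t - T)) atTop atBot :=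
      (tendsto_atTop_add_const_right atTop (-T) tendsto_id).const_mul_atTop_of_neg
        (neg_lt_zero.2 hα)
    simpa using (Real.tendsto_exp_atBot.comp this).mul_const ‖u T‖
  filter_upwards [hdecay.eventually_le_const hε, eventually_ge_atTop T] with t hsmall hTt
  have := norm_le_exp_mul_add_of_hasDerivAt hα hμ hTt (fun s hs => (hT s hs.1).1)
    (fun s hs => (hT s hs.1).2)
  linarith

end LinearDecay

open ComplexConjugate

noncomputable def oscillatorRoot (a b : ℝ) : ℂ := ⟨-(a / 2), √(b - a ^ 2 / 4)⟩

@[simp]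
theorem oscillatorRoot_re (a b : ℝ) : (oscillatorRoot a b).re = -(a / 2) := rfl

theorem oscillatorRoot_add_conj (a b : ℝ) :
    oscillatorRoot a b + conj (oscillatorRoot a b) = -a := by
  apply Complex.ext <;> simp [oscillatorRoot]; ring

theorem oscillatorRoot_mul_conj {a b : ℝ} (hab : a ^ 2 / 4 ≤ b) :
    oscillatorRoot a b * conj (oscillatorRoot a b) = b := by
  rw [Complex.mul_conj, Complex.normSq_apply]
  simp only [oscillatorRoot]
  rw [Real.mul_self_sqrt (by linarith)]
  push_cast; ring

section SecondOrder

variable {a b xs : ℝ} {x x' x'' : ℝ → ℝ}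

theorem exists_cascade_of_hasDerivAt (hab : a ^ 2 / 4 ≤ b)
    (hx' : ∀ t, HasDerivAt x (x' t) t) (hx'' : ∀ t, HasDerivAt x' (x'' t) t) :
    ∃ u : ℝ → ℂ,
      (∀ t, HasDerivAt (fun t => ((x t - xs : ℝ) : ℂ))
        (conj (oscillatorRoot a b) • ((x t - xs : ℝ) : ℂ) + u t) t) ∧
      ∀ t, HasDerivAt u
        (oscillatorRoot a b • u t + ((x'' t + a * x' t + b * (x t - xs) : ℝ) : ℂ)) t := by
  have hv : ∀ t, HasDerivAt (fun t => ((x t - xs : ℝ) : ℂ)) (x' t) t := fun t =>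
    ((hx' t).sub_const xs).ofReal_comp
  refine ⟨fun t => x' t - conj (oscillatorRoot a b) * ((x t - xs : ℝ) : ℂ),
    fun t => (hv t).congr_deriv (by simp only [smul_eq_mul]; ring), fun t => ?_⟩
  refine ((hx'' t).ofReal_comp.sub ((hv t).const_mul _)).congr_deriv ?_
  simp only [smul_eq_mul]
  push_cast
  linear_combination (-(x' t : ℂ)) * oscillatorRoot_add_conj a b
    + ((x t : ℂ) - xs) * oscillatorRoot_mul_conj hab

theorem exists_abs_sub_le_of_forcing_le (ha : 0 < a) (hab : a ^ 2 / 4 ≤ b)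
    (hx' : ∀ t, HasDerivAt x (x' t) t) (hx'' : ∀ t, HasDerivAt x' (x'' t) t) (T : ℝ) :
    ∃ c, ∀ t K, T ≤ t → (∀ s ∈ Icc T t, |x'' s + a * x' s + b * (x s - xs)| ≤ K) →
      |x t - xs| ≤ c + K / (a / 2) ^ 2 := by
  obtain ⟨u, hv, hu⟩ := exists_cascade_of_hasDerivAt (xs := xs) hab hx' hx''
  have hα : 0 < a / 2 := half_pos ha
  refine ⟨|x T - xs| + ‖u T‖ / (a / 2), fun t K hTt hK => ?_⟩
  have hu_le : ∀ s ∈ Icc T t, ‖u s‖ ≤ ‖u T‖ + K / (a / 2) := fun s hs =>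
    norm_le_add_of_hasDerivAt hα (by simp) hs.1 (fun r _ => hu r) fun r hr => by
      rw [Complex.norm_real, Real.norm_eq_abs]
      exact hK r ⟨hr.1, hr.2.trans hs.2⟩
  have hv_le := norm_le_add_of_hasDerivAt hα (by simp) hTt (fun r _ => hv r) hu_le
  simp only [Complex.norm_real, Real.norm_eq_abs] at hv_le
  calc |x t - xs| ≤ |x T - xs| + (‖u T‖ + K / (a / 2)) / (a / 2) := hv_le
    _ = _ := by ring

theorem eventually_abs_sub_le_of_forcing_le (ha : 0 < a) (hab : a ^ 2 / 4 ≤ b)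
    (hx' : ∀ t, HasDerivAt x (x' t) t) (hx'' : ∀ t, HasDerivAt x' (x'' t) t) {K ε : ℝ}
    (hK : ∀ᶠ s in atTop, |x'' s + a * x' s + b * (x s - xs)| ≤ K) (hε : 0 < ε) :
    ∀ᶠ t in atTop, |x t - xs| ≤ K / (a / 2) ^ 2 + ε := by
  obtain ⟨u, hv, hu⟩ := exists_cascade_of_hasDerivAt (xs := xs) hab hx' hx''
  have hα : 0 < a / 2 := half_pos ha
  have hu_le := eventually_norm_le_of_hasDerivAt hα (by simp) (Eventually.of_forall hu)
    (hK.mono fun s hs => by rwa [Complex.norm_real, Real.norm_eq_abs]) (mul_pos hα (half_pos hε))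
  filter_upwards [eventually_norm_le_of_hasDerivAt hα (by simp) (Eventually.of_forall hv) hu_le
    (half_pos hε)] with t ht
  rw [Complex.norm_real, Real.norm_eq_abs] at ht
  calc |x t - xs| ≤ (K / (a / 2) + a / 2 * (ε / 2)) / (a / 2) + ε / 2 := ht
    _ = _ := by field_simp; ring

end SecondOrder

theorem le_max_of_forall_le_add_mul {y : ℝ → ℝ} {t₀ M K q : ℝ} (hy : Continuous y) (hq : q < 1)
    (hinit : ∀ t ≤ t₀, y t ≤ M) (hself : ∀ t ≥ t₀, ∀ D, (∀ s ≤ t, y s ≤ D) → y t ≤ K + q * D)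
    (t : ℝ) : y t ≤ max M (K / (1 - q)) := by
  rcases le_or_gt t t₀ with ht | ht
  · exact (hinit t ht).trans (le_max_left _ _)
  obtain ⟨c, hc, hmax⟩ := isCompact_Icc.exists_isMaxOn (nonempty_Icc.2 ht.le) hy.continuousOn
  have hle : ∀ s ≤ t, y s ≤ max M (y c) := fun s hs => by
    rcases le_or_gt s t₀ with h | h
    · exact (hinit s h).trans (le_max_left _ _)
    · exact (hmax ⟨h.le, hs⟩).trans (le_max_right _ _)
  have hc_le : y c ≤ K + q * max M (y c) := hself c hc.1 _ fun s hs => hle s (hs.trans hc.2)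
  refine (hle t le_rfl).trans (max_le (le_max_left _ _) ?_)
  rcases le_total (y c) M with h | h
  · exact h.trans (le_max_left _ _)
  · rw [max_eq_right h] at hc_le
    exact le_max_of_le_right (by rw [le_div_iff₀ (sub_pos.2 hq)]; linarith)

theorem tendsto_zero_of_eventually_le_mul_add {ι : Type*} {l : Filter ι} {y : ι → ℝ} {q B : ℝ}
    (hy : ∀ t, 0 ≤ y t) (hq₀ : 0 ≤ q) (hq₁ : q < 1) (hB : ∀ᶠ t in l, y t ≤ B)
    (hcontract : ∀ D, (∀ᶠ t in l, y t ≤ D) → ∀ ε > 0, ∀ᶠ t in l, y t ≤ q * D + ε) :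
    Tendsto y l (𝓝 0) := by
  have hiter : ∀ n : ℕ, ∀ ε > 0, ∀ᶠ t in l, y t ≤ q ^ n * B + ε := by
    intro n
    induction n with
    | zero =>
      intro ε hε
      filter_upwards [hB] with t ht
      linarith [pow_zero q]
    | succ n ih =>
      intro ε hε
      filter_upwards [hcontract _ (ih (ε / 2) (half_pos hε)) (ε / 2) (half_pos hε)] with t ht
      calc y t ≤ q * (q ^ n * B + ε / 2) + ε / 2 := ht
        _ ≤ q ^ (n + 1) * B + ε := by rw [pow_succ]; nlinarith
  refine tendsto_order.2 ⟨fun c hc => Eventually.of_forall fun t => hc.trans_le (hy t),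
    fun ε hε => ?_⟩
  have hpow : Tendsto (fun n : ℕ => q ^ n * B) atTop (𝓝 0) := by
    simpa using (tendsto_pow_atTop_nhds_zero_of_lt_one hq₀ hq₁).mul_const B
  obtain ⟨n, hn⟩ := (hpow.eventually_lt_const (half_pos hε)).exists
  filter_upwards [hiter n (ε / 2) (half_pos hε)] with t ht
  linarith

theorem proportional_delayed_control_stability_case_b_general
    (t₀ a b C xs : ℝ)
    (f : ℝ → ℝ → ℝ) (g : ℝ → ℝ)
    (hgle : ∀ t, g t ≤ t) (hgtend : Tendsto g atTop atTop)
    (ha : 0 < a) (hC : 0 ≤ C)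
    (hfbound : ∀ t v, |f t (v + xs) - b * xs| ≤ C * |v|)
    (hcond : a ^ 2 / 4 ≤ b ∧ b < a ^ 2 / 2 - C)
    (x x' x'' : ℝ → ℝ)
    (hx' : ∀ t, HasDerivAt x (x' t) t) (hx'' : ∀ t, HasDerivAt x' (x'' t) t)
    (hinit : ∃ M : ℝ, ∀ t ≤ t₀, |x t| ≤ M ∧ |x' t| ≤ M)
    (heq : ∀ t ≥ t₀, x'' t + a * x' t + b * x t = f t (x (g t))) :
    Tendsto x atTop (nhds xs) := by
  obtain ⟨hab, hbC⟩ := hcond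
  obtain ⟨M, hM⟩ := hinit
  set y : ℝ → ℝ := fun t => |x t - xs|
  set q := C / (a / 2) ^ 2
  have hq : q < 1 := by rw [div_lt_one (by positivity)]; nlinarith
  have hforcing : ∀ t ≥ t₀, |x'' t + a * x' t + b * (x t - xs)| ≤ C * y (g t) := fun t ht => by
    have h := hfbound t (x (g t) - xs)
    rwa [sub_add_cancel, ← heq t ht, add_sub_assoc, ← mul_sub] at h
  obtain ⟨c, hc⟩ := exists_abs_sub_le_of_forcing_le (xs := xs) ha hab hx' hx'' t₀
  have hbounded : ∀ t, y t ≤ max (M + |xs|) (c / (1 - q)) := by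
    refine le_max_of_forall_le_add_mul (t₀ := t₀) ?_ hq (fun t ht => ?_) (fun t ht D hD => ?_)
    · exact ((continuous_iff_continuousAt.2 fun t => (hx' t).continuousAt).sub
        continuous_const).abs
    · linarith [abs_sub (x t) xs, (hM t ht).1]
    · refine (hc t (C * D) ht fun s hs => ?_).trans_eq (by rw [mul_div_right_comm])
      exact (hforcing s hs.1).trans (mul_le_mul_of_nonneg_left (hD _ ((hgle s).trans hs.2)) hC)
  have hcontract : ∀ D, (∀ᶠ t in atTop, y t ≤ D) → ∀ ε > 0, ∀ᶠ t in atTop, y t ≤ q * D + ε := by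
    intro D hD ε hε
    have hK : ∀ᶠ s in atTop, |x'' s + a * x' s + b * (x s - xs)| ≤ C * D := by
      filter_upwards [hgtend.eventually hD, eventually_ge_atTop t₀] with s hs hs₀
      exact (hforcing s hs₀).trans (mul_le_mul_of_nonneg_left hs hC)
    simpa only [mul_div_right_comm] using eventually_abs_sub_le_of_forcing_le ha hab hx' hx'' hK hε
  exact tendsto_iff_norm_sub_tendsto_zero.2 <| tendsto_zero_of_eventually_le_mul_add
    (fun t => abs_nonneg _) (by positivity) hq (Eventually.of_forall hbounded) hcontract

/-- Theorem 3, part b): if a²/4 ≤ b < a²/2 − C, the equilibrium x* of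
ẍ(t) + a·ẋ(t) + b·x(t) = f(t, x(g(t))) is globally asymptotically stable. -/
theorem proportional_delayed_control_stability_case_b
    (t₀ a b C xs τ : ℝ)
    (f : ℝ → ℝ → ℝ) (g : ℝ → ℝ)
    (hgmeas : Measurable g) (hgle : ∀ t, g t ≤ t) (hgtend : Tendsto g atTop atTop)
    (hτ : 0 < τ) (hdelay : ∀ t, t - g t ≤ τ)
    (ha : 0 < a) (hb : 0 < b) (hC : 0 ≤ C)
    (hfbound : ∀ t v, |f t (v + xs) - b * xs| ≤ C * |v|)
    (hcond : a ^ 2 / 4 ≤ b ∧ b < a ^ 2 / 2 - C)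
    (x x' x'' : ℝ → ℝ)
    (hx' : ∀ t, HasDerivAt x (x' t) t) (hx'' : ∀ t, HasDerivAt x' (x'' t) t)
    (hinit : ∃ M : ℝ, ∀ t ≤ t₀, |x t| ≤ M ∧ |x' t| ≤ M)
    (heq : ∀ t ≥ t₀, x'' t + a * x' t + b * x t = f t (x (g t))) :
    Tendsto x atTop (nhds xs) :=
  proportional_delayed_control_stability_case_b_general t₀ a b C xs f g hgle hgtend ha hC hfbound
    hcond x x' x'' hx' hx'' hinit heq
end

section
/- Let a > 0, b > 0, C ≥ 0 with 4b > a², and suppose |f(t, v + x*) − b·x*| ≤ C·|v| for all t and v. If C < a·√(4b − a²)/4, then the equilibrium x* of the controlled equation ẍ(t) + a·ẋ(t) + b·x(t) = f(t, x(g(t))) is globally asymptotically stable: every twice differentiable solution x satisfies x(t) → x* as t → ∞. -/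
/-!
Write `y = x - x*`, `p = ẋ + (a/2) y` and `ν = √(b - a²/4)`. The damped-oscillator energy
`E = p² + ν² y²` satisfies `Ė = -a E + 2 p (ẍ + a ẋ + b y)` for every twice differentiable `x`.
Along a solution the residual `ẍ + a ẋ + b y = f(t, x(g t)) - b x*` is at most `C |y(g t)|`,
and `2 |p| ν |y(g t)| ≤ E(t) + E(g t)` turns this into the Halanay inequality
`Ė(t) ≤ -(a - C/ν) E(t) + (C/ν) E(g t)`, whose coefficients satisfy `C/ν < a - C/ν` exactly
when `C < a √(4b - a²) / 4`.

A Halanay inequality `V' ≤ -α V + β V(g t)` with `0 ≤ β < α`, `g t ≤ t` and `g → ∞` forces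
`V → 0`: a first-crossing argument bounds `V`, and an eventual bound `V ≤ B` improves to
`V ≤ (β/α) B + ε`, because above that level `V' ≤ -α ε`. So the eventual bounds of `V`
have infimum `0`.
-/

open Filter Set Topology

theorem HasDerivAt.nonneg_of_eventually_le_left {V : ℝ → ℝ} {V' t : ℝ} (hV : HasDerivAt V V' t)
    (hle : ∀ᶠ s in 𝓝[<] t, V s ≤ V t) : 0 ≤ V' := by
  have hslope : Tendsto (slope V t) (𝓝[<] t) (𝓝 V') :=
    (hasDerivAt_iff_tendsto_slope.1 hV).mono_left (nhdsWithin_mono _ fun s hs => ne_of_lt hs)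
  refine ge_of_tendsto hslope ?_
  filter_upwards [hle, self_mem_nhdsWithin] with s hs hst
  rw [slope_def_field]
  exact div_nonneg_of_nonpos (sub_nonpos.2 hs) (sub_nonpos.2 (le_of_lt hst))

section Barrier

variable {V V' : ℝ → ℝ}

theorem le_of_hasDerivAt_neg_at_first_hit (hV : ∀ t, HasDerivAt V (V' t) t) {T B : ℝ}
    (hpast : ∀ s ≤ T, V s < B) (hhit : ∀ t > T, (∀ s < t, V s < B) → V t = B → V' t < 0)
    (t : ℝ) : V t ≤ B := by
  by_contra! ht
  have hVc : Continuous V := continuous_iff_continuousAt.2 fun s => (hV s).continuousAt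
  set S := {s | B ≤ V s}
  have hTS : ∀ s ∈ S, T < s := fun s hs => lt_of_not_ge fun hsT => (hpast s hsT).not_ge hs
  have hSne : S.Nonempty := ⟨t, ht.le⟩
  have hSbdd : BddBelow S := ⟨T, fun s hs => (hTS s hs).le⟩
  set t₁ := sInf S
  have ht₁S : t₁ ∈ S := (isClosed_le continuous_const hVc).csInf_mem hSne hSbdd
  have hbefore : ∀ s < t₁, V s < B := fun s hs =>
    lt_of_not_ge fun h => (csInf_le hSbdd h).not_gt hs
  have hVt₁ : V t₁ = B := by
    refine le_antisymm (le_of_tendsto (hVc.continuousAt.continuousWithinAt (s := Iio t₁)) ?_) ht₁S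
    filter_upwards [self_mem_nhdsWithin] with s hs using (hbefore s hs).le
  refine (hhit t₁ (hTS t₁ ht₁S) hbefore hVt₁).not_ge ((hV t₁).nonneg_of_eventually_le_left ?_)
  filter_upwards [self_mem_nhdsWithin] with s hs using hVt₁ ▸ (hbefore s hs).le

theorem eventually_le_of_hasDerivAt_le_neg (hV : ∀ t, HasDerivAt V (V' t) t) {T R c : ℝ}
    (hc : 0 < c) (hdecay : ∀ t ≥ T, R ≤ V t → V' t ≤ -c) : ∀ᶠ t in atTop, V t ≤ R := by
  have hVc : Continuous V := continuous_iff_continuousAt.2 fun s => (hV s).continuousAt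
  obtain ⟨t₁, hTt₁, ht₁⟩ : ∃ t₁ ≥ T, V t₁ ≤ R := by
    by_contra! hgt
    have hline (s : ℝ) : HasDerivAt (fun s => V T - c * (s - T)) (-c) s := by
      simpa using (((hasDerivAt_id s).sub_const T).const_mul c).const_sub (V T)
    have hbelow : ∀ t ≥ T, V t ≤ V T - c * (t - T) := fun t ht =>
      image_le_of_deriv_right_le_deriv_boundary hVc.continuousOn
        (fun s _ => (hV s).hasDerivWithinAt) (by simp) (by fun_prop)
        (fun s _ => (hline s).hasDerivWithinAt) (fun s hs => hdecay s hs.1 (hgt s hs.1).le)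
        ⟨ht, le_rfl⟩
    have hwait : T ≤ T + (V T - R) / c :=
      le_add_of_nonneg_right (div_nonneg (sub_nonneg.2 (hgt T le_rfl).le) hc.le)
    have := hbelow _ hwait
    rw [add_sub_cancel_left, mul_div_cancel₀ _ hc.ne'] at this
    linarith [hgt _ hwait]
  filter_upwards [eventually_ge_atTop t₁] with t ht
  exact image_le_of_deriv_right_lt_deriv_boundary (B' := fun _ => 0) hVc.continuousOn
    (fun s _ => (hV s).hasDerivWithinAt) ht₁ (fun _ => hasDerivAt_const _ _)
    (fun s hs hsR => by linarith [hdecay s (hTt₁.trans hs.1) hsR.ge]) ⟨ht, le_rfl⟩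

end Barrier

theorem exists_mem_lt_of_forall_mul_add_mem {S : Set ℝ} {ρ : ℝ} (hρ₀ : 0 ≤ ρ) (hρ₁ : ρ < 1)
    (hS : S.Nonempty) (hstep : ∀ B ∈ S, ∀ δ > 0, ρ * B + δ ∈ S) {ε : ℝ} (hε : 0 < ε) :
    ∃ B ∈ S, B < ε := by
  by_contra! h
  have hbdd : BddBelow S := ⟨ε, h⟩
  have hεL : ε ≤ sInf S := le_csInf hS h
  have hL : sInf S ≤ ρ * sInf S := le_of_forall_pos_le_add fun η hη => by
    have hδ : 0 < η / (ρ + 1) := by positivity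
    obtain ⟨B, hB, hBlt⟩ := exists_lt_of_csInf_lt hS (lt_add_of_pos_right (sInf S) hδ)
    have hinf := csInf_le hbdd (hstep B hB _ hδ)
    have hcancel : ρ * (η / (ρ + 1)) + η / (ρ + 1) = η := by field_simp
    nlinarith [mul_le_mul_of_nonneg_left hBlt.le hρ₀]
  nlinarith

section Halanay

variable {V V' g : ℝ → ℝ} {t₀ α β : ℝ}

theorem exists_forall_le_of_halanay (hV : ∀ t, HasDerivAt V (V' t) t) (hβ : 0 ≤ β)
    (hβα : β < α) (hgle : ∀ t, g t ≤ t) (hpast : ∃ M, ∀ t ≤ t₀, V t ≤ M)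
    (hineq : ∀ t ≥ t₀, V' t ≤ -α * V t + β * V (g t)) : ∃ B, ∀ t, V t ≤ B := by
  obtain ⟨M, hM⟩ := hpast
  refine ⟨max M 0 + 1, le_of_hasDerivAt_neg_at_first_hit hV (T := t₀)
    (fun s hs => (hM s hs).trans_lt (by linarith [le_max_left M 0])) ?_⟩
  intro t ht hbefore hVt
  have hVg : V (g t) ≤ max M 0 + 1 :=
    (hgle t).lt_or_eq.elim (fun h => (hbefore _ h).le) (fun h => by rw [h]; exact hVt.le)
  have hB : 0 < max M 0 + 1 := by positivity
  nlinarith [hineq t ht.le, mul_le_mul_of_nonneg_left hVg hβ]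

theorem eventually_le_of_halanay (hV : ∀ t, HasDerivAt V (V' t) t) (hα : 0 < α)
    (hβ : 0 ≤ β) (hgtend : Tendsto g atTop atTop)
    (hineq : ∀ t ≥ t₀, V' t ≤ -α * V t + β * V (g t)) {B ε : ℝ}
    (hB : ∀ᶠ t in atTop, V t ≤ B) (hε : 0 < ε) : ∀ᶠ t in atTop, V t ≤ β / α * B + ε := by
  obtain ⟨T, hT⟩ := eventually_atTop.1 ((hgtend.eventually hB).and (eventually_ge_atTop t₀))
  refine eventually_le_of_hasDerivAt_le_neg hV (T := T) (mul_pos hα hε) fun t ht hR => ?_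
  have hαβ : α * (β / α * B) = β * B := by field_simp
  nlinarith [hineq t (hT t ht).2, mul_le_mul_of_nonneg_left (hT t ht).1 hβ]

theorem tendsto_zero_of_halanay (hV : ∀ t, HasDerivAt V (V' t) t) (hV₀ : ∀ t, 0 ≤ V t)
    (hβ : 0 ≤ β) (hβα : β < α) (hgle : ∀ t, g t ≤ t) (hgtend : Tendsto g atTop atTop)
    (hpast : ∃ M, ∀ t ≤ t₀, V t ≤ M) (hineq : ∀ t ≥ t₀, V' t ≤ -α * V t + β * V (g t)) :
    Tendsto V atTop (𝓝 0) := by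
  have hα : 0 < α := hβ.trans_lt hβα
  obtain ⟨B₀, hB₀⟩ := exists_forall_le_of_halanay hV hβ hβα hgle hpast hineq
  have hsmall : ∀ ε > 0, ∃ B, (∀ᶠ t in atTop, V t ≤ B) ∧ B < ε := fun ε hε =>
    exists_mem_lt_of_forall_mul_add_mem (S := {B | ∀ᶠ t in atTop, V t ≤ B})
      (div_nonneg hβ hα.le) ((div_lt_one hα).2 hβα) ⟨B₀, .of_forall hB₀⟩
      (fun _ hB _ hδ => eventually_le_of_halanay hV hα hβ hgtend hineq hB hδ) hε
  refine tendsto_order.2 ⟨fun ε hε => .of_forall fun t => hε.trans_le (hV₀ t), fun ε hε => ?_⟩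
  obtain ⟨B, hB, hBε⟩ := hsmall ε hε
  filter_upwards [hB] with t ht using ht.trans_lt hBε

end Halanay

section Energy

variable {a b xs : ℝ} {x x' x'' : ℝ → ℝ}

noncomputable def oscillatorEnergy (a b xs : ℝ) (x x' : ℝ → ℝ) (t : ℝ) : ℝ :=
  (x' t + a / 2 * (x t - xs)) ^ 2 + (b - a ^ 2 / 4) * (x t - xs) ^ 2

theorem hasDerivAt_oscillatorEnergy {t : ℝ} (hx : HasDerivAt x (x' t) t)
    (hx' : HasDerivAt x' (x'' t) t) :
    HasDerivAt (oscillatorEnergy a b xs x x')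
      (-a * oscillatorEnergy a b xs x x' t +
        2 * (x' t + a / 2 * (x t - xs)) * (x'' t + a * x' t + b * (x t - xs))) t := by
  have hy := hx.sub_const xs
  refine (((hx'.fun_add (hy.const_mul (a / 2))).fun_pow 2).fun_add
    ((hy.fun_pow 2).const_mul (b - a ^ 2 / 4))).congr_deriv ?_
  simp only [oscillatorEnergy]
  ring

theorem sq_mul_le_oscillatorEnergy (t : ℝ) :
    (b - a ^ 2 / 4) * (x t - xs) ^ 2 ≤ oscillatorEnergy a b xs x x' t :=
  le_add_of_nonneg_left (sq_nonneg _)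

theorem oscillatorEnergy_nonneg (hb : a ^ 2 ≤ 4 * b) (t : ℝ) :
    0 ≤ oscillatorEnergy a b xs x x' t :=
  (mul_nonneg (by linarith) (sq_nonneg _)).trans (sq_mul_le_oscillatorEnergy t)

theorem two_mul_le_oscillatorEnergy_add {C ν r s t : ℝ} (hC : 0 ≤ C) (hν : 0 < ν)
    (hν2 : ν ^ 2 = b - a ^ 2 / 4) (hr : |r| ≤ C * |x s - xs|) :
    2 * (x' t + a / 2 * (x t - xs)) * r ≤
      C / ν * (oscillatorEnergy a b xs x x' t + oscillatorEnergy a b xs x x' s) := by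
  set p := x' t + a / 2 * (x t - xs)
  set y := x s - xs
  have hamgm : 2 * |p| * (ν * |y|) ≤ p ^ 2 + ν ^ 2 * y ^ 2 := by
    nlinarith [sq_nonneg (|p| - ν * |y|), sq_abs p, sq_abs y]
  have hp : p ^ 2 ≤ oscillatorEnergy a b xs x x' t :=
    le_add_of_nonneg_right (mul_nonneg (hν2 ▸ sq_nonneg ν) (sq_nonneg _))
  have hy : ν ^ 2 * y ^ 2 ≤ oscillatorEnergy a b xs x x' s := hν2 ▸ sq_mul_le_oscillatorEnergy s
  calc 2 * p * r ≤ 2 * |p| * (C * |y|) := by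
        nlinarith [le_abs_self (p * r), abs_mul p r, mul_le_mul_of_nonneg_left hr (abs_nonneg p)]
    _ = C / ν * (2 * |p| * (ν * |y|)) := by field_simp
    _ ≤ C / ν * (oscillatorEnergy a b xs x x' t + oscillatorEnergy a b xs x x' s) := by
        gcongr
        linarith

theorem exists_oscillatorEnergy_le {t₀ : ℝ} (hbdd : ∃ M, ∀ t ≤ t₀, |x t| ≤ M ∧ |x' t| ≤ M) :
    ∃ K, ∀ t ≤ t₀, oscillatorEnergy a b xs x x' t ≤ K := by
  obtain ⟨M, hM⟩ := hbdd
  refine ⟨2 * M ^ 2 + (a ^ 2 / 2 + |b - a ^ 2 / 4|) * (M + |xs|) ^ 2, fun t ht => ?_⟩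
  obtain ⟨hxM, hx'M⟩ := hM t ht
  have hy : |x t - xs| ≤ M + |xs| := (abs_sub _ _).trans (by linarith)
  have hy2 : (x t - xs) ^ 2 ≤ (M + |xs|) ^ 2 := sq_le_sq' (abs_le.1 hy).1 (abs_le.1 hy).2
  have hx'2 : x' t ^ 2 ≤ M ^ 2 := sq_le_sq' (abs_le.1 hx'M).1 (abs_le.1 hx'M).2
  have hcoef : (b - a ^ 2 / 4) * (x t - xs) ^ 2 ≤ |b - a ^ 2 / 4| * (M + |xs|) ^ 2 :=
    (mul_le_mul_of_nonneg_right (le_abs_self _) (sq_nonneg _)).trans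
      (mul_le_mul_of_nonneg_left hy2 (abs_nonneg _))
  simp only [oscillatorEnergy]
  nlinarith [sq_nonneg (x' t - a / 2 * (x t - xs)), mul_le_mul_of_nonneg_left hy2 (sq_nonneg a)]

theorem tendsto_of_tendsto_oscillatorEnergy (hb : a ^ 2 < 4 * b)
    (hE : Tendsto (oscillatorEnergy a b xs x x') atTop (𝓝 0)) : Tendsto x atTop (𝓝 xs) := by
  have hk : 0 < b - a ^ 2 / 4 := by linarith
  have hsq : Tendsto (fun t => (x t - xs) ^ 2) atTop (𝓝 0) := by
    refine squeeze_zero (fun t => sq_nonneg _) (fun t => ?_)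
      (by simpa using hE.div_const (b - a ^ 2 / 4))
    rw [le_div_iff₀ hk, mul_comm]
    exact sq_mul_le_oscillatorEnergy t
  refine tendsto_sub_nhds_zero_iff.1 (squeeze_zero_norm (fun t => ?_) (by simpa using hsq.sqrt))
  rw [Real.norm_eq_abs, Real.sqrt_sq_eq_abs]

end Energy

theorem proportional_delayed_control_stability_case_c_general
    (t₀ a b C xs : ℝ)
    (f : ℝ → ℝ → ℝ) (g : ℝ → ℝ)
    (hgle : ∀ t, g t ≤ t) (hgtend : Tendsto g atTop atTop)
    (hC : 0 ≤ C) (h4b : 4 * b > a ^ 2)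
    (hfbound : ∀ t v, |f t (v + xs) - b * xs| ≤ C * |v|)
    (hcond : C < a * Real.sqrt (4 * b - a ^ 2) / 4)
    (x x' x'' : ℝ → ℝ)
    (hx' : ∀ t, HasDerivAt x (x' t) t) (hx'' : ∀ t, HasDerivAt x' (x'' t) t)
    (hinit : ∃ M : ℝ, ∀ t ≤ t₀, |x t| ≤ M ∧ |x' t| ≤ M)
    (heq : ∀ t ≥ t₀, x'' t + a * x' t + b * x t = f t (x (g t))) :
    Tendsto x atTop (nhds xs) := by
  set ν := √(b - a ^ 2 / 4)
  have hν : 0 < ν := Real.sqrt_pos.2 (by linarith)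
  have hν2 : ν ^ 2 = b - a ^ 2 / 4 := Real.sq_sqrt (by linarith)
  have hcoeff : C / ν < a - C / ν := by
    have h2ν : √(4 * b - a ^ 2) = 2 * ν := by
      rw [show 4 * b - a ^ 2 = 2 ^ 2 * (b - a ^ 2 / 4) by ring, Real.sqrt_mul (by norm_num),
        Real.sqrt_sq (by norm_num)]
    rw [h2ν] at hcond
    rw [lt_sub_iff_add_lt, ← add_div, div_lt_iff₀ hν]
    linarith
  refine tendsto_of_tendsto_oscillatorEnergy h4b <|
    tendsto_zero_of_halanay (fun t => hasDerivAt_oscillatorEnergy (hx' t) (hx'' t))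
      (oscillatorEnergy_nonneg h4b.le) (div_nonneg hC hν.le) hcoeff hgle hgtend
      (exists_oscillatorEnergy_le hinit) fun t ht => ?_
  have hres : |x'' t + a * x' t + b * (x t - xs)| ≤ C * |x (g t) - xs| := by
    rw [mul_sub, ← add_sub_assoc, heq t ht]
    simpa using hfbound t (x (g t) - xs)
  linarith [two_mul_le_oscillatorEnergy_add (x' := x') (t := t) hC hν hν2 hres]

/-- Theorem 3, part c): if 4b > a² and C < a√(4b − a²)/4, the equilibrium x* of
ẍ(t) + a·ẋ(t) + b·x(t) = f(t, x(g(t))) is globally asymptotically stable. -/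
theorem proportional_delayed_control_stability_case_c
    (t₀ a b C xs : ℝ)
    (f : ℝ → ℝ → ℝ) (g : ℝ → ℝ)
    (hgmeas : Measurable g) (hgle : ∀ t, g t ≤ t) (hgtend : Tendsto g atTop atTop)
    (ha : 0 < a) (hb : 0 < b) (hC : 0 ≤ C) (h4b : 4 * b > a ^ 2)
    (hfbound : ∀ t v, |f t (v + xs) - b * xs| ≤ C * |v|)
    (hcond : C < a * Real.sqrt (4 * b - a ^ 2) / 4)
    (x x' x'' : ℝ → ℝ)
    (hx' : ∀ t, HasDerivAt x (x' t) t) (hx'' : ∀ t, HasDerivAt x' (x'' t) t)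
    (hinit : ∃ M : ℝ, ∀ t ≤ t₀, |x t| ≤ M ∧ |x' t| ≤ M)
    (heq : ∀ t ≥ t₀, x'' t + a * x' t + b * x t = f t (x (g t))) :
    Tendsto x atTop (nhds xs) :=
  proportional_delayed_control_stability_case_c_general t₀ a b C xs f g hgle hgtend hC h4b hfbound
    hcond x x' x'' hx' hx'' hinit heq
end

section
/- Let a > 0, K > 0, C ≥ 0 and suppose |f(t, v + x*)| ≤ C·|v| for all t and v. If C < K ≤ a²/4, then the equilibrium x* of the controlled equation ẍ(t) + a·ẋ(t) + f(t, x(h(t))) = −K·[x(t) − x*] is globally asymptotically stable: every twice differentiable solution x satisfies x(t) → x* as t → ∞. -/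
/-!
Put y = x - x* and factor X² + aX + K = (X - λ₁)(X - λ₂); since 0 < K ≤ a²/4 both roots are
real and negative. With z = y' - λ₂ y the equation becomes the cascade y' = λ₂ y + z,
z' = λ₁ z + g, where |g(t)| ≤ C |y(h t)|. For a scalar equation w' = λ w + g with |g| ≤ ε,
comparing w² with a decaying exponential barrier shows that |w| eventually stays below any
ρ > ε / |λ|. Passing an eventual bound B on |y| through the cascade therefore yields any bound
ρ > C B / (λ₁ λ₂) = (C / K) B, and since C < K, iterating drives y to 0. The first bound B is
obtained by a first-exit argument, which also copes with the delay.
-/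

open Filter Set Topology

theorem ContinuousOn.forall_lt_of_forall_Ico_lt {α β : Type*}
    [ConditionallyCompleteLinearOrder α] [TopologicalSpace α] [OrderTopology α]
    [LinearOrder β] [TopologicalSpace β] [OrderClosedTopology β]
    {φ : α → β} {s : α} {B : β} (hφ : ContinuousOn φ (Ici s))
    (hstep : ∀ u ≥ s, (∀ v ∈ Ico s u, φ v < B) → φ u < B) : ∀ u ≥ s, φ u < B := by
  by_contra! hbad
  set F := Ici s ∩ φ ⁻¹' Ici B
  have hF : IsClosed F := hφ.preimage_isClosed_of_isClosed isClosed_Ici isClosed_Ici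
  have hu₀ : sInf F ∈ F := hF.csInf_mem hbad ⟨s, fun v hv => hv.1⟩
  refine not_lt.2 hu₀.2 (hstep _ hu₀.1 fun v hv => not_le.1 fun hBv => ?_)
  exact not_le.2 hv.2 (csInf_le ⟨s, fun v hv => hv.1⟩ ⟨hv.1, hBv⟩)

theorem abs_le_mul_exp_add_of_deriv_eq {w w' g : ℝ → ℝ} {l ε ρ R s t : ℝ}
    (hw : ∀ u ∈ Icc s t, HasDerivAt w (w' u) u)
    (hode : ∀ u ∈ Ico s t, w' u = l * w u + g u) (hg : ∀ u ∈ Ico s t, |g u| ≤ ε)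
    (hρ : 0 < ρ) (hR : 0 ≤ R) (hlρ : l * ρ + ε < 0) (hs : |w s| ≤ R + ρ) :
    ∀ u ∈ Icc s t, |w u| ≤ R * Real.exp (l * (u - s)) + ρ := by
  set β : ℝ → ℝ := fun u => R * Real.exp (l * (u - s)) + ρ
  have hβ_pos : ∀ u, 0 < β u := fun u => by positivity
  have hβ : ∀ u, HasDerivAt β (l * (β u - ρ)) u := fun u =>
    ((((hasDerivAt_id u).sub_const s).const_mul l).exp.const_mul R |>.add_const ρ).congr_deriv
      (by simp only [β, id]; ring)
  have hsq : ∀ u ∈ Icc s t, w u ^ 2 ≤ β u ^ 2 := by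
    refine image_le_of_deriv_right_lt_deriv_boundary (f' := fun u => 2 * w u * w' u)
      (B' := fun u => 2 * l * β u * (β u - ρ))
      (fun u hu => (hw u hu).continuousAt.continuousWithinAt.pow 2)
      (fun u hu => ?_) ?_ (fun u => ((hβ u).pow 2).congr_deriv (by norm_num; ring)) ?_
    · simpa using ((hw u (Ico_subset_Icc_self hu)).pow 2).hasDerivWithinAt
    · simpa [β] using pow_le_pow_left₀ (abs_nonneg _) hs 2
    · intro u hu (hw2 : w u ^ 2 = β u ^ 2)
      have habs : |w u| = β u := by
        rw [← abs_of_pos (hβ_pos u)]; exact sq_eq_sq_iff_abs_eq_abs _ _ |>.1 hw2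
      have hwg : w u * g u ≤ β u * ε := by
        calc w u * g u ≤ |w u| * |g u| := by rw [← abs_mul]; exact le_abs_self _
          _ ≤ β u * ε := by rw [habs]; exact mul_le_mul_of_nonneg_left (hg u hu) (hβ_pos u).le
      have hlw : l * w u ^ 2 = l * β u ^ 2 := by rw [hw2]
      simp only [hode u hu]
      linarith [mul_neg_of_pos_of_neg (hβ_pos u) hlρ]
  exact fun u hu => abs_le_of_sq_le_sq (hsq u hu) (hβ_pos u).le

theorem abs_le_of_deriv_eq {w w' g : ℝ → ℝ} {l ε ρ s t : ℝ}
    (hw : ∀ u ∈ Icc s t, HasDerivAt w (w' u) u)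
    (hode : ∀ u ∈ Ico s t, w' u = l * w u + g u) (hg : ∀ u ∈ Ico s t, |g u| ≤ ε)
    (hρ : 0 < ρ) (hlρ : l * ρ + ε < 0) (hs : |w s| ≤ ρ) :
    ∀ u ∈ Icc s t, |w u| ≤ ρ := by
  simpa using abs_le_mul_exp_add_of_deriv_eq hw hode hg hρ le_rfl hlρ (by simpa using hs)

theorem eventually_abs_le_of_deriv_eq {w w' g : ℝ → ℝ} {l ε ρ : ℝ}
    (hw : ∀ t, HasDerivAt w (w' t) t) (hode : ∀ᶠ t in atTop, w' t = l * w t + g t)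
    (hg : ∀ᶠ t in atTop, |g t| ≤ ε) (hρ : 0 < ρ) (hlρ : l * ρ + ε < 0) :
    ∀ᶠ t in atTop, |w t| ≤ ρ := by
  obtain ⟨T, hT⟩ := eventually_atTop.1 (hode.and hg)
  have hε : 0 ≤ ε := (abs_nonneg _).trans (hT T le_rfl).2
  have hl : l < 0 := by nlinarith
  obtain ⟨ρ', hερ', hρ'ρ⟩ : ∃ ρ', ε / -l < ρ' ∧ ρ' < ρ :=
    exists_between ((div_lt_iff₀ (neg_pos.2 hl)).2 (by linarith))
  have hρ' : 0 < ρ' := (div_nonneg hε (neg_pos.2 hl).le).trans_lt hερ'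
  have hlρ' : l * ρ' + ε < 0 := by
    have := (div_lt_iff₀ (neg_pos.2 hl)).1 hερ'; linarith
  have hbound : ∀ t ≥ T, |w t| ≤ |w T| * Real.exp (l * (t - T)) + ρ' := fun t ht =>
    abs_le_mul_exp_add_of_deriv_eq (fun u _ => hw u) (fun u hu => (hT u hu.1).1)
      (fun u hu => (hT u hu.1).2) hρ' (abs_nonneg _) hlρ' (by linarith) t ⟨ht, le_rfl⟩
  have hdecay : Tendsto (fun t => |w T| * Real.exp (l * (t - T))) atTop (𝓝 0) := by
    simpa [sub_eq_add_neg] using (Real.tendsto_exp_atBot.comp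
      ((tendsto_atTop_add_const_right _ (-T) tendsto_id).const_mul_atTop_of_neg hl)).const_mul
      |w T|
  filter_upwards [eventually_ge_atTop T, hdecay.eventually_le_const (sub_pos.2 hρ'ρ)]
    with t ht hsmall
  linarith [hbound t ht]

theorem tendsto_zero_of_forall_eventually_abs_le_mul_lt {α : Type*} {l : Filter α} {u : α → ℝ}
    {q B₀ : ℝ} (hq₀ : 0 ≤ q) (hq : q < 1) (h₀ : ∀ᶠ x in l, |u x| ≤ B₀)
    (hstep : ∀ B, (∀ᶠ x in l, |u x| ≤ B) → ∀ ρ, q * B < ρ → ∀ᶠ x in l, |u x| ≤ ρ) :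
    Tendsto u l (𝓝 0) := by
  refine Metric.tendsto_nhds.2 fun ε hε => ?_
  have hiter : ∀ n : ℕ, ∀ᶠ x in l, |u x| ≤ q ^ n * B₀ + ε / 2 := by
    intro n
    induction n with
    | zero => simpa using h₀.mono fun x hx => by linarith
    | succ n ih => exact hstep _ ih _ (by rw [pow_succ]; nlinarith)
  have hpow : Tendsto (fun n : ℕ => q ^ n * B₀) atTop (𝓝 0) := by
    simpa using (tendsto_pow_atTop_nhds_zero_of_lt_one hq₀ hq).mul_const B₀
  obtain ⟨n, hn⟩ := (hpow.eventually_lt_const (half_pos hε)).exists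
  filter_upwards [hiter n] with x hx
  rw [Real.dist_eq, sub_zero]
  linarith

theorem exists_neg_roots_of_le_sq_div_four {a K : ℝ} (ha : 0 < a) (hK : 0 < K)
    (hKa : K ≤ a ^ 2 / 4) : ∃ l₁ l₂ : ℝ, l₁ < 0 ∧ l₂ < 0 ∧ l₁ + l₂ = -a ∧ l₁ * l₂ = K := by
  obtain ⟨d, hd0, hd2⟩ : ∃ d : ℝ, 0 ≤ d ∧ d ^ 2 = a ^ 2 - 4 * K :=
    ⟨√(a ^ 2 - 4 * K), Real.sqrt_nonneg _, Real.sq_sqrt (by linarith)⟩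
  have hda : d < a := by nlinarith
  exact ⟨(-a + d) / 2, (-a - d) / 2, by linarith, by linarith, by ring,
    by linear_combination (-1 / 4 : ℝ) * hd2⟩

/-- Thresholds for the first-exit argument: while `|y| ≤ B`, the `z`-equation keeps `|z| ≤ Bz`,
and then the `y`-equation keeps `|y| ≤ ρ < B`. -/
theorem exists_bootstrap_bounds {l₁ l₂ C M Mz : ℝ} (hl₁ : l₁ < 0) (hl₂ : l₂ < 0) (hC : 0 ≤ C)
    (hCK : C < l₁ * l₂) (hM : 0 ≤ M) (hMz : 0 ≤ Mz) :
    ∃ B Bz ρ, 0 < Bz ∧ 0 < ρ ∧ M ≤ ρ ∧ ρ < B ∧ Mz ≤ Bz ∧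
      l₁ * Bz + C * B < 0 ∧ l₂ * ρ + Bz < 0 := by
  have hK : 0 < l₁ * l₂ := mul_pos_of_neg_of_neg hl₁ hl₂
  set q := C / (l₁ * l₂) with hq_def
  have hq : 0 < 1 - q := sub_pos.2 ((div_lt_one hK).2 hCK)
  set A := (Mz + 1) / -l₂ + M + 1 with hA_def
  have hA : 0 < A := by
    have : 0 ≤ (Mz + 1) / -l₂ := div_nonneg (by linarith) (by linarith)
    linarith
  set B := A / (1 - q) + 1 with hB_def
  set Bz := C * B / -l₁ + Mz + 1 with hBz_def
  set ρ := Bz / -l₂ + M + 1 with hρ_def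
  have hB : 0 ≤ B := by positivity
  have hCB : 0 ≤ C * B / -l₁ := div_nonneg (mul_nonneg hC hB) (by linarith)
  have hBz : 0 < Bz := by linarith
  have hBzρ : 0 ≤ Bz / -l₂ := div_nonneg hBz.le (by linarith)
  have hρ_eq : ρ = q * B + A := by
    rw [hρ_def, hBz_def, hA_def, hq_def]; field_simp; ring
  have hBq : (1 - q) * B = A + (1 - q) := by
    rw [hB_def]; field_simp
  have hl₁Bz : l₁ * Bz + C * B = l₁ * (Mz + 1) := by
    rw [hBz_def]; field_simp [hl₁.ne]; ring
  have hl₂ρ : l₂ * ρ + Bz = l₂ * (M + 1) := by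
    rw [hρ_def]; field_simp [hl₂.ne]; ring
  refine ⟨B, Bz, ρ, hBz, by linarith, by linarith, by linarith, by linarith, ?_, ?_⟩
  · rw [hl₁Bz]; exact mul_neg_of_neg_of_pos hl₁ (by linarith)
  · rw [hl₂ρ]; exact mul_neg_of_neg_of_pos hl₂ (by linarith)

section DelayedCascade

structure IsDelayedCascade (t₀ l₁ l₂ C : ℝ) (h y y' z z' g : ℝ → ℝ) : Prop where
  hasDerivAt_y : ∀ t, HasDerivAt y (y' t) t
  hasDerivAt_z : ∀ t, HasDerivAt z (z' t) t
  deriv_y_eq : ∀ t ≥ t₀, y' t = l₂ * y t + z t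
  deriv_z_eq : ∀ t ≥ t₀, z' t = l₁ * z t + g t
  abs_forcing_le : ∀ t ≥ t₀, |g t| ≤ C * |y (h t)|

variable {t₀ l₁ l₂ C : ℝ} {h y y' z z' g : ℝ → ℝ}

theorem exists_abs_le_of_delayed_cascade
    (hS : IsDelayedCascade t₀ l₁ l₂ C h y y' z z' g) (hh : ∀ t, h t ≤ t)
    (hl₁ : l₁ < 0) (hl₂ : l₂ < 0) (hC : 0 ≤ C) (hCK : C < l₁ * l₂)
    (hinit : ∃ M, ∀ t ≤ t₀, |y t| ≤ M) : ∃ B, ∀ t, |y t| ≤ B := by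
  obtain ⟨hy, hz, hyz, hzg, hg⟩ := hS
  obtain ⟨M, hM⟩ := hinit
  obtain ⟨B, Bz, ρ, hBz, hρ, hMρ, hρB, hzBz, hlBz, hlρ⟩ :=
    exists_bootstrap_bounds (Mz := |z t₀|) hl₁ hl₂ hC hCK
      ((abs_nonneg _).trans (hM t₀ le_rfl)) (abs_nonneg _)
  have hMB : M ≤ B := hMρ.trans hρB.le
  have hbound : ∀ u ≥ t₀, |y u| < B := by
    refine ContinuousOn.forall_lt_of_forall_Ico_lt
      (fun u _ => (hy u).continuousAt.abs.continuousWithinAt) fun u hu hprefix => ?_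
    have hyh : ∀ v ∈ Ico t₀ u, |y (h v)| ≤ B := fun v hv => by
      rcases le_or_gt t₀ (h v) with hhv | hhv
      · exact (hprefix _ ⟨hhv, (hh v).trans_lt hv.2⟩).le
      · exact (hM _ hhv.le).trans hMB
    have hzb : ∀ v ∈ Icc t₀ u, |z v| ≤ Bz :=
      abs_le_of_deriv_eq (fun v _ => hz v) (fun v hv => hzg v hv.1)
        (fun v hv => (hg v hv.1).trans (mul_le_mul_of_nonneg_left (hyh v hv) hC)) hBz hlBz hzBz
    have hyu := abs_le_of_deriv_eq (fun v _ => hy v) (fun v hv => hyz v hv.1)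
      (fun v hv => hzb v (Ico_subset_Icc_self hv)) hρ hlρ ((hM t₀ le_rfl).trans hMρ) u ⟨hu, le_rfl⟩
    exact hyu.trans_lt hρB
  refine ⟨B, fun t => ?_⟩
  rcases le_total t t₀ with ht | ht
  · exact (hM t ht).trans hMB
  · exact (hbound t ht).le

theorem eventually_abs_le_of_delayed_cascade
    (hS : IsDelayedCascade t₀ l₁ l₂ C h y y' z z' g) (hh : Tendsto h atTop atTop)
    (hl₁ : l₁ < 0) (hl₂ : l₂ < 0) (hC : 0 ≤ C) {B ρ : ℝ} (hB : ∀ᶠ t in atTop, |y t| ≤ B)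
    (hBρ : C / (l₁ * l₂) * B < ρ) : ∀ᶠ t in atTop, |y t| ≤ ρ := by
  obtain ⟨hy, hz, hyz, hzg, hg⟩ := hS
  have hB₀ : 0 ≤ B := hB.exists.elim fun t ht => (abs_nonneg _).trans ht
  have hK : 0 < l₁ * l₂ := mul_pos_of_neg_of_neg hl₁ hl₂
  obtain ⟨ρz, hρz_gt, hρz_lt⟩ : ∃ ρz, C * B / -l₁ < ρz ∧ ρz < -l₂ * ρ := by
    refine exists_between ((div_lt_iff₀ (by linarith)).2 ?_)
    have := (div_lt_iff₀ hK).1 (by rwa [div_mul_eq_mul_div] at hBρ)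
    linarith
  have hρz : 0 < ρz := (div_nonneg (mul_nonneg hC hB₀) (by linarith)).trans_lt hρz_gt
  have hgB : ∀ᶠ t in atTop, |g t| ≤ C * B := by
    filter_upwards [eventually_ge_atTop t₀, hh.eventually hB] with t ht hyt
    exact (hg t ht).trans (mul_le_mul_of_nonneg_left hyt hC)
  have hzρ : ∀ᶠ t in atTop, |z t| ≤ ρz :=
    eventually_abs_le_of_deriv_eq hz ((eventually_ge_atTop t₀).mono hzg) hgB hρz
      (by have := (div_lt_iff₀ (neg_pos.2 hl₁)).1 hρz_gt; linarith)
  exact eventually_abs_le_of_deriv_eq hy ((eventually_ge_atTop t₀).mono hyz) hzρ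
    (by nlinarith) (by linarith)

theorem tendsto_zero_of_delayed_cascade
    (hS : IsDelayedCascade t₀ l₁ l₂ C h y y' z z' g) (hh : ∀ t, h t ≤ t)
    (hh' : Tendsto h atTop atTop)
    (hl₁ : l₁ < 0) (hl₂ : l₂ < 0) (hC : 0 ≤ C) (hCK : C < l₁ * l₂)
    (hinit : ∃ M, ∀ t ≤ t₀, |y t| ≤ M) : Tendsto y atTop (𝓝 0) := by
  have hK : 0 < l₁ * l₂ := mul_pos_of_neg_of_neg hl₁ hl₂
  obtain ⟨B, hB⟩ := exists_abs_le_of_delayed_cascade hS hh hl₁ hl₂ hC hCK hinit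
  exact tendsto_zero_of_forall_eventually_abs_le_mul_lt (div_nonneg hC hK.le)
    ((div_lt_one hK).2 hCK) (Eventually.of_forall hB) fun _ hB' _ hρ =>
      eventually_abs_le_of_delayed_cascade hS hh' hl₁ hl₂ hC hB' hρ

end DelayedCascade

theorem proportional_control_stability_case_a_general
    (t₀ a K C xs : ℝ)
    (f : ℝ → ℝ → ℝ) (h : ℝ → ℝ)
    (hhle : ∀ t, h t ≤ t) (hhtend : Tendsto h atTop atTop)
    (ha : 0 < a) (hK : 0 < K) (hC : 0 ≤ C)
    (hfbound : ∀ t v, |f t (v + xs)| ≤ C * |v|)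
    (hcond : C < K ∧ K ≤ a ^ 2 / 4)
    (x x' x'' : ℝ → ℝ)
    (hx' : ∀ t, HasDerivAt x (x' t) t) (hx'' : ∀ t, HasDerivAt x' (x'' t) t)
    (hinit : ∃ M : ℝ, ∀ t ≤ t₀, |x t| ≤ M ∧ |x' t| ≤ M)
    (heq : ∀ t ≥ t₀, x'' t + a * x' t + f t (x (h t)) = -K * (x t - xs)) :
    Tendsto x atTop (nhds xs) := by
  obtain ⟨l₁, l₂, hl₁, hl₂, hsum, hprod⟩ := exists_neg_roots_of_le_sq_div_four ha hK hcond.2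
  obtain ⟨M, hM⟩ := hinit
  have hS : IsDelayedCascade t₀ l₁ l₂ C h (fun t => x t - xs) x'
      (fun t => x' t - l₂ * (x t - xs)) (fun t => x'' t - l₂ * x' t) (fun t => -f t (x (h t))) :=
    { hasDerivAt_y := fun t => (hx' t).sub_const xs
      hasDerivAt_z := fun t => (hx'' t).sub (((hx' t).sub_const xs).const_mul l₂)
      deriv_y_eq := fun t _ => by ring
      deriv_z_eq := fun t ht => by
        linear_combination heq t ht - x' t * hsum + (x t - xs) * hprod
      abs_forcing_le := fun t _ => by simpa [abs_neg] using hfbound t (x (h t) - xs) }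
  have hy_init : ∀ t ≤ t₀, |x t - xs| ≤ M + |xs| := fun t ht =>
    (abs_sub _ _).trans (by linarith [(hM t ht).1])
  exact tendsto_sub_nhds_zero_iff.1 <|
    tendsto_zero_of_delayed_cascade hS hhle hhtend hl₁ hl₂ hC (hprod ▸ hcond.1) ⟨_, hy_init⟩

/-- Theorem 4, part a): if C < K ≤ a²/4, the equilibrium x* of
ẍ(t) + a·ẋ(t) + f(t, x(h(t))) = −K[x(t) − x*] is globally asymptotically stable. -/
theorem proportional_control_stability_case_a
    (t₀ a K C xs τ : ℝ)
    (f : ℝ → ℝ → ℝ) (h : ℝ → ℝ)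
    (hhmeas : Measurable h) (hhle : ∀ t, h t ≤ t) (hhtend : Tendsto h atTop atTop)
    (hτ : 0 < τ) (hdelay : ∀ t, t - h t ≤ τ)
    (ha : 0 < a) (hK : 0 < K) (hC : 0 ≤ C)
    (hfbound : ∀ t v, |f t (v + xs)| ≤ C * |v|)
    (hcond : C < K ∧ K ≤ a ^ 2 / 4)
    (x x' x'' : ℝ → ℝ)
    (hx' : ∀ t, HasDerivAt x (x' t) t) (hx'' : ∀ t, HasDerivAt x' (x'' t) t)
    (hinit : ∃ M : ℝ, ∀ t ≤ t₀, |x t| ≤ M ∧ |x' t| ≤ M)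
    (heq : ∀ t ≥ t₀, x'' t + a * x' t + f t (x (h t)) = -K * (x t - xs)) :
    Tendsto x atTop (nhds xs) :=
  proportional_control_stability_case_a_general t₀ a K C xs f h hhle hhtend ha hK hC hfbound hcond x
    x' x'' hx' hx'' hinit heq
end

section
/- Let a > 0, K > 0, C ≥ 0 and suppose |f(t, v + x*)| ≤ C·|v| for all t and v. If a²/4 ≤ K < a²/2 − C, then the equilibrium x* of the controlled equation ẍ(t) + a·ẋ(t) + f(t, x(h(t))) = −K·[x(t) − x*] is globally asymptotically stable: every twice differentiable solution x satisfies x(t) → x* as t → ∞. -/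
/-!
Put `α = a/2`, `y = x - x*` and `u = ẏ + α y`. The controlled equation becomes the cascade
`u̇ + α u = -((K - α²) y + f(t, x(h t)))`, so `|u̇ + α u| ≤ (K - α²)|y(t)| + C|y(h t)|`, and
`ẏ + α y = u`. By variation of constants, a bound `P` on the forcing of `ẇ + α w` bounds `w`
by `P/α` up to an exponentially decaying term. Going through the cascade twice turns a bound `P`
on `|y|` into `q P` plus an arbitrarily small error, where `q = (K - α² + C)/α² < 1`; this makes
`y` bounded, and then drives any eventual bound of `|y|` to zero.
-/

open Filter Topology Set

section VariationOfConstants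

variable {α P s t : ℝ} {w w' : ℝ → ℝ}

theorem abs_le_exp_mul_add_div_of_abs_deriv_add_mul_le (hα : 0 < α) (hst : s ≤ t)
    (hw : ∀ r ∈ Icc s t, HasDerivAt w (w' r) r)
    (hP : ∀ r ∈ Icc s t, |w' r + α * w r| ≤ P) :
    |w t| ≤ Real.exp (-α * (t - s)) * |w s| + P / α := by
  have hP₀ : 0 ≤ P := (abs_nonneg _).trans (hP s ⟨le_rfl, hst⟩)
  set E : ℝ → ℝ := fun r => Real.exp (α * (r - s))
  have hE : ∀ r, HasDerivAt E (α * E r) r := fun r => by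
    simpa [E, mul_comm] using (((hasDerivAt_id r).sub_const s).const_mul α).exp
  -- `E w` has derivative `E (w' + α w)`, so its absolute value stays below the solution of
  -- `B' = E P`, `B s = |w s|`.
  have hfence : |E t * w t| ≤ |w s| + (E t - 1) * P / α := by
    refine image_norm_le_of_norm_deriv_right_le_deriv_boundary (f := fun r => E r * w r)
      (f' := fun r => E r * (w' r + α * w r)) (B := fun r => |w s| + (E r - 1) * P / α)
      (B' := fun r => E r * P) ?_ ?_ ?_ ?_ ?_ ⟨hst, le_rfl⟩
    · exact fun r hr => ((hE r).continuousAt.mul (hw r hr).continuousAt).continuousWithinAt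
    · intro r hr
      exact ((hE r).mul (hw r (Ico_subset_Icc_self hr))).hasDerivWithinAt.congr_deriv (by ring)
    · simp [E]
    · intro r
      exact ((((hE r).sub_const 1).mul_const P).div_const α |>.const_add |w s|).congr_deriv
        (by field_simp)
    · intro r hr
      rw [Real.norm_eq_abs, abs_mul, abs_of_pos (Real.exp_pos _)]
      exact mul_le_mul_of_nonneg_left (hP r (Ico_subset_Icc_self hr)) (Real.exp_pos _).le
  have hEt : 0 < E t := Real.exp_pos _
  have hexp : Real.exp (-α * (t - s)) = (E t)⁻¹ := by rw [neg_mul, Real.exp_neg]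
  rw [abs_mul, abs_of_pos hEt] at hfence
  rw [hexp, ← div_eq_inv_mul, div_add' _ _ _ hEt.ne', le_div_iff₀ hEt]
  have hsplit : (E t - 1) * P / α = P / α * E t - P / α := by ring
  linarith [div_nonneg hP₀ hα.le, mul_comm (E t) |w t|]

theorem abs_le_abs_add_div_of_abs_deriv_add_mul_le (hα : 0 < α) (hst : s ≤ t)
    (hw : ∀ r ∈ Icc s t, HasDerivAt w (w' r) r)
    (hP : ∀ r ∈ Icc s t, |w' r + α * w r| ≤ P) :
    |w t| ≤ |w s| + P / α := by
  have hdecay : Real.exp (-α * (t - s)) ≤ 1 :=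
    Real.exp_le_one_iff.2 (mul_nonpos_of_nonpos_of_nonneg (by linarith) (by linarith))
  have := abs_le_exp_mul_add_div_of_abs_deriv_add_mul_le hα hst hw hP
  nlinarith [abs_nonneg (w s)]

theorem eventually_abs_le_of_eventually_abs_deriv_add_mul_le (hα : 0 < α)
    (hw : ∀ r, HasDerivAt w (w' r) r) (hP : ∀ᶠ r in atTop, |w' r + α * w r| ≤ P)
    {δ : ℝ} (hδ : 0 < δ) : ∀ᶠ t in atTop, |w t| ≤ P / α + δ := by
  obtain ⟨s, hs⟩ := eventually_atTop.1 hP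
  have hdecay : Tendsto (fun t => Real.exp (-α * (t - s)) * |w s|) atTop (𝓝 0) := by
    have := (tendsto_atTop_add_const_right atTop (-s) tendsto_id).const_mul_atTop_of_neg
      (neg_lt_zero.2 hα)
    simpa [sub_eq_add_neg] using (Real.tendsto_exp_atBot.comp this).mul_const |w s|
  filter_upwards [hdecay.eventually (gt_mem_nhds hδ), eventually_ge_atTop s] with t hsmall hst
  have := abs_le_exp_mul_add_div_of_abs_deriv_add_mul_le hα hst (fun r _ => hw r)
    (fun r hr => hs r hr.1)
  linarith

end VariationOfConstants

theorem abs_le_div_one_sub_of_abs_le_add_mul {g : ℝ → ℝ} {t₀ A q : ℝ} (hg : Continuous g)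
    (hq₀ : 0 ≤ q) (hq : q < 1) (hA : ∀ t ≤ t₀, |g t| ≤ A)
    (hstep : ∀ T ≥ t₀, ∀ P, (∀ ρ ≤ T, |g ρ| ≤ P) → |g T| ≤ A + q * P) (t : ℝ) :
    |g t| ≤ A / (1 - q) := by
  have hA₀ : 0 ≤ A := (abs_nonneg _).trans (hA t₀ le_rfl)
  obtain ⟨m, hm, hmax⟩ := isCompact_Icc.exists_isMaxOn (nonempty_Icc.2 (le_max_right t t₀))
    hg.abs.continuousOn
  set P := max A |g m|
  have hbound : ∀ ρ ≤ max t t₀, |g ρ| ≤ P := fun ρ hρ => by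
    rcases le_total ρ t₀ with hρ₀ | hρ₀
    · exact (hA ρ hρ₀).trans (le_max_left _ _)
    · exact (hmax ⟨hρ₀, hρ⟩).trans (le_max_right _ _)
  have hP : P ≤ A + q * P :=
    max_le (le_add_of_nonneg_right (mul_nonneg hq₀ (hA₀.trans (le_max_left _ _))))
      (hstep m hm.1 P fun ρ hρ => hbound ρ (hρ.trans hm.2))
  rw [le_div_iff₀ (sub_pos.2 hq)]
  nlinarith [hbound t (le_max_left _ _)]

theorem tendsto_zero_of_eventually_abs_le_mul_add {ι : Type*} {l : Filter ι} {g : ι → ℝ}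
    {q R : ℝ} (hq₀ : 0 ≤ q) (hq : q < 1) (hR : ∀ᶠ i in l, |g i| ≤ R)
    (hstep : ∀ P, (∀ᶠ i in l, |g i| ≤ P) → ∀ δ > 0, ∀ᶠ i in l, |g i| ≤ q * P + δ) :
    Tendsto g l (𝓝 0) := by
  set r := (1 + q) / 2
  have hr₀ : 0 < r := by positivity
  have hr : r < 1 := by simp only [r]; linarith
  have hcontract : ∀ P > 0, (∀ᶠ i in l, |g i| ≤ P) → ∀ᶠ i in l, |g i| ≤ r * P :=
    fun P hP hgP => by
      convert hstep P hgP ((1 - q) * P / 2) (by nlinarith) using 3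
      ring
  have hpow : ∀ n : ℕ, ∀ᶠ i in l, |g i| ≤ r ^ n * (|R| + 1) := by
    intro n
    induction n with
    | zero => simpa using hR.mono fun i hi => hi.trans (by linarith [le_abs_self R])
    | succ n ih => simpa [pow_succ, mul_comm, mul_left_comm] using hcontract _ (by positivity) ih
  refine Metric.tendsto_nhds.2 fun ε hε => ?_
  obtain ⟨n, hn⟩ := exists_pow_lt_of_lt_one (div_pos hε (by positivity : 0 < |R| + 1)) hr
  filter_upwards [hpow n] with i hi
  rw [Real.dist_0_eq_abs]
  exact hi.trans_lt ((lt_div_iff₀ (by positivity)).1 hn)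

section DelayCascade

variable {α b C t₀ : ℝ} {h y y' u u' : ℝ → ℝ}

theorem exists_abs_le_of_delay_cascade (hα : 0 < α) (hb : 0 ≤ b) (hC : 0 ≤ C)
    (hbC : b + C < α ^ 2) (hhle : ∀ t, h t ≤ t)
    (hy : ∀ t, HasDerivAt y (y' t) t) (hu : ∀ t, HasDerivAt u (u' t) t)
    (hyu : ∀ t, y' t + α * y t = u t)
    (hforce : ∀ t ≥ t₀, |u' t + α * u t| ≤ b * |y t| + C * |y (h t)|)
    {M : ℝ} (hM : ∀ t ≤ t₀, |y t| ≤ M) :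
    ∃ R, ∀ t, |y t| ≤ R := by
  set q := (b + C) / α ^ 2
  refine ⟨(M + |u t₀| / α) / (1 - q), abs_le_div_one_sub_of_abs_le_add_mul
    (continuous_iff_continuousAt.2 fun t => (hy t).continuousAt) (by positivity)
    ((div_lt_one (by positivity)).2 hbC)
    (fun t ht => (hM t ht).trans (le_add_of_nonneg_right (by positivity))) ?_⟩
  intro T hT P hP
  have hforceP : ∀ r ∈ Icc t₀ T, |u' r + α * u r| ≤ (b + C) * P := fun r hr =>
    (hforce r hr.1).trans <| by
      rw [add_mul]
      gcongr
      exacts [hP r hr.2, hP (h r) ((hhle r).trans hr.2)]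
  have hu_bound : ∀ ρ ∈ Icc t₀ T, |u ρ| ≤ |u t₀| + (b + C) * P / α := fun ρ hρ =>
    abs_le_abs_add_div_of_abs_deriv_add_mul_le hα hρ.1 (fun r _ => hu r)
      fun r hr => hforceP r ⟨hr.1, hr.2.trans hρ.2⟩
  have hy_bound := abs_le_abs_add_div_of_abs_deriv_add_mul_le hα hT (fun r _ => hy r)
    fun r hr => (hyu r).symm ▸ hu_bound r hr
  have hq : (|u t₀| + (b + C) * P / α) / α = |u t₀| / α + q * P := by
    simp only [q]
    field_simp
  linarith [hM t₀ le_rfl]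

theorem eventually_abs_le_of_delay_cascade (hα : 0 < α) (hb : 0 ≤ b) (hC : 0 ≤ C)
    (hhtend : Tendsto h atTop atTop)
    (hy : ∀ t, HasDerivAt y (y' t) t) (hu : ∀ t, HasDerivAt u (u' t) t)
    (hyu : ∀ t, y' t + α * y t = u t)
    (hforce : ∀ t ≥ t₀, |u' t + α * u t| ≤ b * |y t| + C * |y (h t)|)
    {P : ℝ} (hP : ∀ᶠ t in atTop, |y t| ≤ P) {δ : ℝ} (hδ : 0 < δ) :
    ∀ᶠ t in atTop, |y t| ≤ (b + C) / α ^ 2 * P + δ := by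
  have hforceP : ∀ᶠ t in atTop, |u' t + α * u t| ≤ (b + C) * P := by
    filter_upwards [hP, hhtend.eventually hP, eventually_ge_atTop t₀] with t ht hht ht₀
    exact (hforce t ht₀).trans (by rw [add_mul]; gcongr)
  have hu_ev := eventually_abs_le_of_eventually_abs_deriv_add_mul_le hα hu hforceP
    (δ := α * δ / 2) (by positivity)
  have hy_ev := eventually_abs_le_of_eventually_abs_deriv_add_mul_le hα hy
    (hu_ev.mono fun t ht => (hyu t).symm ▸ ht) (δ := δ / 2) (by positivity)
  filter_upwards [hy_ev] with t ht
  convert ht using 1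
  field_simp
  ring

theorem tendsto_zero_of_delay_cascade (hα : 0 < α) (hb : 0 ≤ b) (hC : 0 ≤ C)
    (hbC : b + C < α ^ 2) (hhle : ∀ t, h t ≤ t) (hhtend : Tendsto h atTop atTop)
    (hy : ∀ t, HasDerivAt y (y' t) t) (hu : ∀ t, HasDerivAt u (u' t) t)
    (hyu : ∀ t, y' t + α * y t = u t)
    (hforce : ∀ t ≥ t₀, |u' t + α * u t| ≤ b * |y t| + C * |y (h t)|)
    {M : ℝ} (hM : ∀ t ≤ t₀, |y t| ≤ M) :
    Tendsto y atTop (𝓝 0) := by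
  obtain ⟨R, hR⟩ := exists_abs_le_of_delay_cascade hα hb hC hbC hhle hy hu hyu hforce hM
  exact tendsto_zero_of_eventually_abs_le_mul_add (by positivity)
    ((div_lt_one (by positivity)).2 hbC) (Eventually.of_forall hR)
    fun P hP δ hδ => eventually_abs_le_of_delay_cascade hα hb hC hhtend hy hu hyu hforce hP hδ

end DelayCascade

theorem proportional_control_stability_case_b_general
    (t₀ a K C xs : ℝ)
    (f : ℝ → ℝ → ℝ) (h : ℝ → ℝ)
    (hhle : ∀ t, h t ≤ t) (hhtend : Tendsto h atTop atTop)
    (ha : 0 < a) (hC : 0 ≤ C)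
    (hfbound : ∀ t v, |f t (v + xs)| ≤ C * |v|)
    (hcond : a ^ 2 / 4 ≤ K ∧ K < a ^ 2 / 2 - C)
    (x x' x'' : ℝ → ℝ)
    (hx' : ∀ t, HasDerivAt x (x' t) t) (hx'' : ∀ t, HasDerivAt x' (x'' t) t)
    (hinit : ∃ M : ℝ, ∀ t ≤ t₀, |x t| ≤ M ∧ |x' t| ≤ M)
    (heq : ∀ t ≥ t₀, x'' t + a * x' t + f t (x (h t)) = -K * (x t - xs)) :
    Tendsto x atTop (nhds xs) := by
  obtain ⟨M, hM⟩ := hinit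
  have hforce : ∀ t ≥ t₀, |(x'' t + a / 2 * x' t) + a / 2 * (x' t + a / 2 * (x t - xs))|
      ≤ (K - a ^ 2 / 4) * |x t - xs| + C * |x (h t) - xs| := fun t ht => by
    have hf := hfbound t (x (h t) - xs)
    rw [sub_add_cancel] at hf
    have hcascade : (x'' t + a / 2 * x' t) + a / 2 * (x' t + a / 2 * (x t - xs))
        = -((K - a ^ 2 / 4) * (x t - xs) + f t (x (h t))) := by
      linear_combination heq t ht
    rw [hcascade, abs_neg]
    calc _ ≤ |(K - a ^ 2 / 4) * (x t - xs)| + |f t (x (h t))| := abs_add_le _ _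
      _ ≤ _ := by rw [abs_mul, abs_of_nonneg (by linarith [hcond.1])]; linarith
  have hy := tendsto_zero_of_delay_cascade (half_pos ha) (sub_nonneg.2 hcond.1) hC
    (by linarith [hcond.2]) hhle hhtend (fun t => (hx' t).sub_const xs)
    (fun t => (hx'' t).add (((hx' t).sub_const xs).const_mul (a / 2))) (fun t => rfl) hforce
    (M := M + |xs|) fun t ht => (abs_sub _ _).trans (by linarith [(hM t ht).1])
  simpa using hy.add_const xs

/-- Theorem 4, part b): if a²/4 ≤ K < a²/2 − C, the equilibrium x* of
ẍ(t) + a·ẋ(t) + f(t, x(h(t))) = −K[x(t) − x*] is globally asymptotically stable. -/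
theorem proportional_control_stability_case_b
    (t₀ a K C xs τ : ℝ)
    (f : ℝ → ℝ → ℝ) (h : ℝ → ℝ)
    (hhmeas : Measurable h) (hhle : ∀ t, h t ≤ t) (hhtend : Tendsto h atTop atTop)
    (hτ : 0 < τ) (hdelay : ∀ t, t - h t ≤ τ)
    (ha : 0 < a) (hK : 0 < K) (hC : 0 ≤ C)
    (hfbound : ∀ t v, |f t (v + xs)| ≤ C * |v|)
    (hcond : a ^ 2 / 4 ≤ K ∧ K < a ^ 2 / 2 - C)
    (x x' x'' : ℝ → ℝ)
    (hx' : ∀ t, HasDerivAt x (x' t) t) (hx'' : ∀ t, HasDerivAt x' (x'' t) t)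
    (hinit : ∃ M : ℝ, ∀ t ≤ t₀, |x t| ≤ M ∧ |x' t| ≤ M)
    (heq : ∀ t ≥ t₀, x'' t + a * x' t + f t (x (h t)) = -K * (x t - xs)) :
    Tendsto x atTop (nhds xs) :=
  proportional_control_stability_case_b_general t₀ a K C xs f h hhle hhtend ha hC hfbound hcond x x'
    x'' hx' hx'' hinit heq
end

section
/- Let a > 0, K > 0, C ≥ 0 with 4K > a², and suppose |f(t, v + x*)| ≤ C·|v| for all t and v. If C < a·√(4K − a²)/4, then the equilibrium x* of the controlled equation ẍ(t) + a·ẋ(t) + f(t, x(h(t))) = −K·[x(t) − x*] is globally asymptotically stable: every twice differentiable solution x satisfies x(t) → x* as t → ∞. -/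
/-!
Write `y = x - x*`, `α = a/2`, `ω = √(4K - a²)/2`, so that `K = α² + ω²`. The complex function
`z = y' + (α + iω) y` satisfies `z' = (-α + iω) z + F` with the delayed feedback
`|F s| ≤ C |y (h s)|`; variation of constants and `ω |y| ≤ |z|` turn this into an integral
inequality `|y t| ≤ A e^{-α(t-t₀)} + (C/ω) ∫_{t₀}^t e^{-α(t-s)} |y (h s)| ds`. The kernel has
mass at most `1/α` and `q = C/(αω) < 1`. Evaluating the inequality where `|y|` is maximal on
`[t₀, t]` bounds `y`; since `h s → ∞`, it then gives `limsup |y| ≤ q · limsup |y|`, so `y → 0`.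
-/

open Filter MeasureTheory Real Set Topology

theorem integral_exp_neg_mul_sub (α t A B : ℝ) (hα : α ≠ 0) :
    ∫ s in A..B, exp (-α * (t - s)) = (exp (-α * (t - B)) - exp (-α * (t - A))) / α := by
  have hderiv : ∀ s ∈ uIcc A B,
      HasDerivAt (fun r => exp (-α * (t - r)) / α) (exp (-α * (t - s))) s := by
    intro s _
    have hlin : HasDerivAt (fun r : ℝ => -α * (t - r)) α s := by
      simpa using ((hasDerivAt_id s).const_sub t).const_mul (-α)
    simpa [mul_div_assoc, hα] using hlin.exp.div_const α
  rw [intervalIntegral.integral_eq_sub_of_hasDerivAt hderiv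
    ((by fun_prop : Continuous fun s => exp (-α * (t - s))).intervalIntegrable A B), sub_div]

theorem integral_exp_neg_mul_sub_mul_le {α c t A B : ℝ} {G : ℝ → ℝ} (hα : 0 < α) (hc : 0 ≤ c)
    (hAB : A ≤ B) (hG : IntervalIntegrable G volume A B) (hGc : ∀ s ∈ Icc A B, G s ≤ c) :
    ∫ s in A..B, exp (-α * (t - s)) * G s ≤ c / α * exp (-α * (t - B)) := calc
  _ ≤ ∫ s in A..B, exp (-α * (t - s)) * c :=
      intervalIntegral.integral_mono_on hAB (hG.continuousOn_mul (by fun_prop))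
        ((by fun_prop : Continuous fun s => exp (-α * (t - s)) * c).intervalIntegrable A B)
        fun s hs => mul_le_mul_of_nonneg_left (hGc s hs) (exp_nonneg _)
  _ = c / α * (exp (-α * (t - B)) - exp (-α * (t - A))) := by
      rw [intervalIntegral.integral_mul_const, integral_exp_neg_mul_sub α t A B hα.ne']; ring
  _ ≤ c / α * exp (-α * (t - B)) := by
      gcongr; linarith [exp_pos (-α * (t - A))]

theorem tendsto_exp_neg_mul_sub_atTop {α : ℝ} (hα : 0 < α) (c : ℝ) :
    Tendsto (fun t => exp (-α * (t - c))) atTop (𝓝 0) :=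
  tendsto_exp_atBot.comp <| (tendsto_atTop_add_const_right atTop (-c) tendsto_id)
    |>.const_mul_atTop_of_neg (neg_lt_zero.2 hα) |>.congr fun t => by simp [sub_eq_add_neg]

theorem eq_exp_mul_add_integral_of_hasDerivAt {z g : ℝ → ℂ} {l : ℂ} {t₀ t : ℝ}
    (hz : ∀ s, HasDerivAt z (l * z s + g s) s) (hg : IntervalIntegrable g volume t₀ t) :
    z t = Complex.exp (l * (t - t₀)) * z t₀ + ∫ s in t₀..t, Complex.exp (l * (t - s)) * g s := by
  have hderiv : ∀ s ∈ uIcc t₀ t, HasDerivAt (fun r : ℝ => Complex.exp (-l * r) * z r)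
      (Complex.exp (-l * s) * g s) s := by
    intro s _
    have hexp : HasDerivAt (fun r : ℝ => Complex.exp (-l * r)) (Complex.exp (-l * s) * -l) s := by
      simpa using (((hasDerivAt_id s).ofReal_comp).const_mul (-l)).cexp
    exact (hexp.fun_mul (hz s)).congr_deriv (by ring)
  have hftc := intervalIntegral.integral_eq_sub_of_hasDerivAt hderiv
    (hg.continuousOn_mul (by fun_prop))
  have hshift : ∀ r : ℝ, Complex.exp (l * t) * Complex.exp (-l * r) = Complex.exp (l * (t - r)) :=
    fun r => by rw [← Complex.exp_add]; ring_nf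
  calc z t = Complex.exp (l * t) * (Complex.exp (-l * t) * z t) := by
        rw [← mul_assoc, hshift, sub_self, mul_zero, Complex.exp_zero, one_mul]
    _ = _ := by
        rw [← sub_add_cancel (Complex.exp (-l * t) * z t) (Complex.exp (-l * t₀) * z t₀), ← hftc,
          mul_add, ← intervalIntegral.integral_const_mul, add_comm, ← mul_assoc, hshift]
        simp only [← mul_assoc, hshift]

theorem norm_le_exp_mul_add_integral_of_hasDerivAt {z g : ℝ → ℂ} {l : ℂ} {t₀ t : ℝ}
    (ht : t₀ ≤ t) (hz : ∀ s, HasDerivAt z (l * z s + g s) s)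
    (hg : IntervalIntegrable g volume t₀ t) :
    ‖z t‖ ≤ exp (l.re * (t - t₀)) * ‖z t₀‖ + ∫ s in t₀..t, exp (l.re * (t - s)) * ‖g s‖ := by
  have hnorm : ∀ r : ℝ, ‖Complex.exp (l * (t - r))‖ = exp (l.re * (t - r)) := fun r => by
    rw [Complex.norm_exp]; simp
  rw [eq_exp_mul_add_integral_of_hasDerivAt hz hg]
  refine (norm_add_le _ _).trans (add_le_add (by rw [norm_mul, hnorm]) ?_)
  refine (intervalIntegral.norm_integral_le_integral_norm ht).trans_eq
    (intervalIntegral.integral_congr fun s _ => ?_)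
  simp only [norm_mul, hnorm]

theorem abs_mul_abs_le_of_hasDerivAt_damped {y y' y'' : ℝ → ℝ} {a K α ω t₀ t : ℝ}
    (ha : a = 2 * α) (hK : K = α ^ 2 + ω ^ 2) (hy' : ∀ s, HasDerivAt y (y' s) s)
    (hy'' : ∀ s, HasDerivAt y' (y'' s) s) (ht : t₀ ≤ t)
    (hint : IntervalIntegrable (fun s => y'' s + a * y' s + K * y s) volume t₀ t) :
    |ω| * |y t| ≤ exp (-α * (t - t₀)) * ‖(y' t₀ : ℂ) + (α + ω * Complex.I) * y t₀‖
      + ∫ s in t₀..t, exp (-α * (t - s)) * |y'' s + a * y' s + K * y s| := by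
  set z : ℝ → ℂ := fun s => y' s + (α + ω * Complex.I) * y s
  -- `-α ± iω` are the roots of `λ² + aλ + K`, so `z = y' + (α + iω) y` solves a first-order ODE
  have hz : ∀ s, HasDerivAt z ((-α + ω * Complex.I) * z s
      + ((y'' s + a * y' s + K * y s : ℝ) : ℂ)) s := fun s =>
    ((hy'' s).ofReal_comp.add ((hy' s).ofReal_comp.const_mul _)).congr_deriv (by
      simp only [z]; subst ha hK; push_cast
      linear_combination (-(ω : ℂ) ^ 2 * y s) * Complex.I_sq)
  have hre : (-α + ω * Complex.I).re = -α := by simp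
  calc |ω| * |y t| = |(z t).im| := by simp [z, abs_mul]
    _ ≤ ‖z t‖ := Complex.abs_im_le_norm _
    _ ≤ _ := by
      simpa only [hre, Complex.norm_real, Real.norm_eq_abs] using
        norm_le_exp_mul_add_integral_of_hasDerivAt ht hz ⟨hint.1.ofReal, hint.2.ofReal⟩

theorem Continuous.bddAbove_image_Iic {u : ℝ → ℝ} (hu : Continuous u) {t₀ : ℝ}
    (hinit : BddAbove (u '' Iic t₀)) (t : ℝ) : BddAbove (u '' Iic t) := by
  refine (hinit.union ((isCompact_Icc (a := t₀) (b := t)).bddAbove_image hu.continuousOn)).mono ?_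
  rw [← image_union]
  exact image_mono Iic_subset_Iic_union_Icc

theorem intervalIntegrable_of_abs_le_delay {F u h : ℝ → ℝ} {C t₀ t : ℝ} (hF : Measurable F)
    (hu : Continuous u) (hinit : BddAbove (u '' Iic t₀)) (hh : ∀ s, h s ≤ s) (hC : 0 ≤ C)
    (hFu : ∀ s ≥ t₀, |F s| ≤ C * u (h s)) (ht : t₀ ≤ t) : IntervalIntegrable F volume t₀ t := by
  obtain ⟨B, hB⟩ := hu.bddAbove_image_Iic hinit t
  rw [intervalIntegrable_iff_integrableOn_Ioc_of_le ht]
  refine Measure.integrableOn_of_bounded measure_Ioc_lt_top.ne hF.aestronglyMeasurable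
    (M := C * B) ((ae_restrict_iff' measurableSet_Ioc).2 (Eventually.of_forall fun s hs => ?_))
  exact (hFu s hs.1.le).trans
    (mul_le_mul_of_nonneg_left (hB (mem_image_of_mem u ((hh s).trans hs.2))) hC)

theorem tendsto_zero_of_eventually_le_mul_add_s11 {ι : Type*} {l : Filter ι} [l.NeBot] {u : ι → ℝ}
    {q : ℝ} (hq : q < 1) (hu0 : ∀ i, 0 ≤ u i) (hbdd : IsBoundedUnder (· ≤ ·) l u)
    (hstep : ∀ b, 0 ≤ b → (∀ᶠ i in l, u i ≤ b) → ∀ ε > 0, ∀ᶠ i in l, u i ≤ q * b + ε) :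
    Tendsto u l (𝓝 0) := by
  have hcobdd : IsCoboundedUnder (· ≤ ·) l u :=
    (isBoundedUnder_of ⟨0, hu0⟩ : IsBoundedUnder (· ≥ ·) l u).isCoboundedUnder_le
  set L := limsup u l
  have hL0 : 0 ≤ L := le_limsup_of_frequently_le (Frequently.of_forall hu0) hbdd
  have hLε : ∀ ε > 0, L ≤ q * (L + ε) + ε := fun ε hε =>
    limsup_le_of_le hcobdd <| hstep (L + ε) (by linarith)
      ((eventually_lt_of_limsup_lt (by linarith) hbdd).mono fun _ => le_of_lt) ε hε
  have hLq : L ≤ q * L := by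
    refine ge_of_tendsto (x := 𝓝[>] (0 : ℝ)) ?_ (eventually_nhdsWithin_of_forall hLε)
    exact tendsto_nhdsWithin_of_tendsto_nhds
      (by simpa using (by fun_prop : Continuous fun ε : ℝ => q * (L + ε) + ε).tendsto 0)
  have hL : L ≤ 0 := by nlinarith
  exact tendsto_order.2 ⟨fun a ha => Eventually.of_forall fun i => ha.trans_le (hu0 i),
    fun a ha => eventually_lt_of_limsup_lt (hL.trans_lt ha) hbdd⟩

structure DelayIntegralInequality (u G h : ℝ → ℝ) (t₀ α β A : ℝ) : Prop where
  intervalIntegrable : ∀ t ≥ t₀, IntervalIntegrable G volume t₀ t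
  le_delay : ∀ s ≥ t₀, G s ≤ β * u (h s)
  le_integral : ∀ t ≥ t₀,
    u t ≤ A * exp (-α * (t - t₀)) + ∫ s in t₀..t, exp (-α * (t - s)) * G s

namespace DelayIntegralInequality

variable {u G h : ℝ → ℝ} {t₀ α β A : ℝ}

theorem exists_forall_le (H : DelayIntegralInequality u G h t₀ α β A) (hα : 0 < α)
    (hβ : 0 ≤ β) (hβα : β < α) (hA : 0 ≤ A) (hh : ∀ s, h s ≤ s) (hu : Continuous u)
    (hinit : BddAbove (u '' Iic t₀)) : ∃ B, ∀ t, u t ≤ B := by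
  obtain ⟨M, hM⟩ := hinit
  have hq : β / α < 1 := (div_lt_one hα).2 hβα
  refine ⟨max (max M 0) (A / (1 - β / α)), fun t => ?_⟩
  rcases le_or_gt t t₀ with htt₀ | ht₀t
  · exact (hM (mem_image_of_mem u htt₀)).trans ((le_max_left _ _).trans (le_max_left _ _))
  obtain ⟨τ, hτ, hτmax⟩ := isCompact_Icc.exists_isMaxOn (nonempty_Icc.2 ht₀t.le) hu.continuousOn
  set m := max (max M 0) (u τ)
  have hpast : ∀ r ≤ t, u r ≤ m := fun r hr => by
    rcases le_or_gt r t₀ with hr₀ | hr₀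
    · exact (hM (mem_image_of_mem u hr₀)).trans ((le_max_left _ _).trans (le_max_left _ _))
    · exact (hτmax ⟨hr₀.le, hr⟩).trans (le_max_right _ _)
  have hm0 : 0 ≤ m := (le_max_right _ _).trans (le_max_left _ _)
  have hτle : u τ ≤ A + β / α * m := calc
    u τ ≤ A * exp (-α * (τ - t₀)) + ∫ s in t₀..τ, exp (-α * (τ - s)) * G s :=
        H.le_integral τ hτ.1
    _ ≤ A * 1 + β * m / α * exp (-α * (τ - τ)) := by
        gcongr
        · exact exp_le_one_iff.2 (by nlinarith [hτ.1])
        · exact integral_exp_neg_mul_sub_mul_le hα (mul_nonneg hβ hm0) hτ.1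
            (H.intervalIntegrable τ hτ.1) fun s hs => (H.le_delay s hs.1).trans
              (mul_le_mul_of_nonneg_left (hpast _ ((hh s).trans (hs.2.trans hτ.2))) hβ)
    _ = A + β / α * m := by simp; ring
  have htτ : u t ≤ u τ := hτmax ⟨ht₀t.le, le_rfl⟩
  rcases le_total (u τ) (max M 0) with hτM | hMτ
  · exact htτ.trans (hτM.trans (le_max_left _ _))
  · rw [show m = u τ from max_eq_right hMτ] at hτle
    refine htτ.trans ((le_div_iff₀ (by linarith)).2 ?_ |>.trans (le_max_right _ _))
    linarith

theorem eventually_le_mul_add (H : DelayIntegralInequality u G h t₀ α β A) (hα : 0 < α)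
    (hβ : 0 ≤ β) (hh : Tendsto h atTop atTop) {B : ℝ} (hB0 : 0 ≤ B) (hB : ∀ t, u t ≤ B)
    {b : ℝ} (hb0 : 0 ≤ b) (hb : ∀ᶠ t in atTop, u t ≤ b) {ε : ℝ} (hε : 0 < ε) :
    ∀ᶠ t in atTop, u t ≤ β / α * b + ε := by
  obtain ⟨T₁, hT₁⟩ := eventually_atTop.1 hb
  obtain ⟨T₂, hT₂⟩ := eventually_atTop.1 (hh.eventually_ge_atTop T₁)
  set T := max T₂ t₀
  have hsmall : ∀ᶠ t in atTop, A * exp (-α * (t - t₀)) + β * B / α * exp (-α * (t - T)) < ε := by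
    refine Tendsto.eventually_lt_const hε ?_
    simpa using ((tendsto_exp_neg_mul_sub_atTop hα t₀).const_mul A).add
      ((tendsto_exp_neg_mul_sub_atTop hα T).const_mul (β * B / α))
  filter_upwards [hsmall, eventually_ge_atTop T] with t hsmall htT
  have ht₀T : t₀ ≤ T := le_max_right _ _
  have hGint := H.intervalIntegrable t (ht₀T.trans htT)
  have hG₁ := hGint.mono_set (uIcc_subset_uIcc left_mem_uIcc (mem_uIcc_of_le ht₀T htT))
  have hG₂ := hGint.mono_set (uIcc_subset_uIcc (mem_uIcc_of_le ht₀T htT) right_mem_uIcc)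
  -- before `T` only the global bound `B` is available, but it is damped by `e^{-α(t-T)}`;
  -- after `T` the delayed argument satisfies `h s ≥ T₁`, where `u ≤ b`
  have hsplit := intervalIntegral.integral_add_adjacent_intervals
    (hG₁.continuousOn_mul (g := fun s => exp (-α * (t - s))) (by fun_prop))
    (hG₂.continuousOn_mul (g := fun s => exp (-α * (t - s))) (by fun_prop))
  calc u t ≤ A * exp (-α * (t - t₀)) + ∫ s in t₀..t, exp (-α * (t - s)) * G s :=
        H.le_integral t (ht₀T.trans htT)
    _ ≤ A * exp (-α * (t - t₀))
          + (β * B / α * exp (-α * (t - T)) + β * b / α * exp (-α * (t - t))) := by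
        rw [← hsplit]
        gcongr
        · exact integral_exp_neg_mul_sub_mul_le hα (mul_nonneg hβ hB0) ht₀T hG₁ fun s hs =>
            (H.le_delay s hs.1).trans (mul_le_mul_of_nonneg_left (hB _) hβ)
        · exact integral_exp_neg_mul_sub_mul_le hα (mul_nonneg hβ hb0) htT hG₂ fun s hs =>
            (H.le_delay s (ht₀T.trans hs.1)).trans (mul_le_mul_of_nonneg_left
              (hT₁ _ (hT₂ s ((le_max_left _ _).trans hs.1))) hβ)
    _ ≤ β / α * b + ε := by
        simp only [sub_self, mul_zero, exp_zero]; linarith [mul_div_right_comm β b α]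

theorem tendsto_zero (H : DelayIntegralInequality u G h t₀ α β A) (hα : 0 < α) (hβ : 0 ≤ β)
    (hβα : β < α) (hA : 0 ≤ A) (hh : ∀ s, h s ≤ s) (hh_tendsto : Tendsto h atTop atTop)
    (hu : Continuous u) (hu0 : ∀ t, 0 ≤ u t) (hinit : BddAbove (u '' Iic t₀)) :
    Tendsto u atTop (𝓝 0) := by
  obtain ⟨B, hB⟩ := H.exists_forall_le hα hβ hβα hA hh hu hinit
  exact tendsto_zero_of_eventually_le_mul_add_s11 ((div_lt_one hα).2 hβα) hu0
    (isBoundedUnder_of ⟨B, hB⟩) fun b hb0 hb ε hε =>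
      H.eventually_le_mul_add hα hβ hh_tendsto ((hu0 0).trans (hB 0)) hB hb0 hb hε

end DelayIntegralInequality

theorem delayIntegralInequality_of_damped {y y' y'' h : ℝ → ℝ} {a K α ω C t₀ : ℝ}
    (ha : a = 2 * α) (hK : K = α ^ 2 + ω ^ 2) (hω : 0 < ω) (hC : 0 ≤ C)
    (hy' : ∀ s, HasDerivAt y (y' s) s) (hy'' : ∀ s, HasDerivAt y' (y'' s) s)
    (hh : ∀ s, h s ≤ s) (hinit : BddAbove ((fun t => |y t|) '' Iic t₀))
    (hfeedback : ∀ s ≥ t₀, |y'' s + a * y' s + K * y s| ≤ C * |y (h s)|) :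
    DelayIntegralInequality (fun t => |y t|) (fun s => |y'' s + a * y' s + K * y s| / ω) h t₀ α
      (C / ω) (‖(y' t₀ : ℂ) + (α + ω * Complex.I) * y t₀‖ / ω) := by
  have hy''_meas : Measurable y'' := by
    simpa only [funext fun s => (hy'' s).deriv] using measurable_deriv y'
  have hy_cont : Continuous y := continuous_iff_continuousAt.2 fun s => (hy' s).continuousAt
  have hy'_cont : Continuous y' := continuous_iff_continuousAt.2 fun s => (hy'' s).continuousAt
  have hint : ∀ t ≥ t₀, IntervalIntegrable (fun s => y'' s + a * y' s + K * y s) volume t₀ t :=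
    fun t => intervalIntegrable_of_abs_le_delay (by fun_prop) (by fun_prop) hinit hh hC hfeedback
  refine ⟨fun t ht => (hint t ht).abs.div_const ω, fun s hs => ?_, fun t ht => ?_⟩
  · rw [div_mul_eq_mul_div]
    exact div_le_div_of_nonneg_right (hfeedback s hs) hω.le
  · have hineq := abs_mul_abs_le_of_hasDerivAt_damped ha hK hy' hy'' ht (hint t ht)
    rw [abs_of_pos hω] at hineq
    calc |y t| = ω * |y t| / ω := by field_simp
      _ ≤ _ := div_le_div_of_nonneg_right hineq hω.le
      _ = _ := by
        rw [add_div, ← intervalIntegral.integral_div]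
        simp only [mul_div_assoc]
        ring

theorem proportional_control_stability_case_c_general
    (t₀ a K C xs : ℝ)
    (f : ℝ → ℝ → ℝ) (h : ℝ → ℝ)
    (hhle : ∀ t, h t ≤ t) (hhtend : Tendsto h atTop atTop)
    (ha : 0 < a) (hC : 0 ≤ C) (h4K : 4 * K > a ^ 2)
    (hfbound : ∀ t v, |f t (v + xs)| ≤ C * |v|)
    (hcond : C < a * Real.sqrt (4 * K - a ^ 2) / 4)
    (x x' x'' : ℝ → ℝ)
    (hx' : ∀ t, HasDerivAt x (x' t) t) (hx'' : ∀ t, HasDerivAt x' (x'' t) t)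
    (hinit : ∃ M : ℝ, ∀ t ≤ t₀, |x t| ≤ M ∧ |x' t| ≤ M)
    (heq : ∀ t ≥ t₀, x'' t + a * x' t + f t (x (h t)) = -K * (x t - xs)) :
    Tendsto x atTop (nhds xs) := by
  obtain ⟨M, hM⟩ := hinit
  set ω := √(4 * K - a ^ 2) / 2
  have hω : 0 < ω := by have := sqrt_pos.2 (sub_pos.2 h4K); positivity
  have hK : K = (a / 2) ^ 2 + ω ^ 2 := by
    simp only [ω, div_pow, sq_sqrt (sub_pos.2 h4K).le]; ring
  have hβα : C / ω < a / 2 := by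
    rw [div_lt_iff₀ hω]
    linarith [show a / 2 * ω = a * √(4 * K - a ^ 2) / 4 by simp only [ω]; ring]
  have hy' : ∀ t, HasDerivAt (fun s => x s - xs) (x' t) t := fun t => (hx' t).sub_const xs
  have hinit' : BddAbove ((fun t => |x t - xs|) '' Iic t₀) := ⟨M + |xs|, by
    rintro _ ⟨r, hr, rfl⟩; exact (abs_sub _ _).trans (by linarith [(hM r hr).1])⟩
  have hfeedback : ∀ s ≥ t₀, |x'' s + a * x' s + K * (x s - xs)| ≤ C * |x (h s) - xs| :=
    fun s hs => by
      simpa [abs_neg, show x'' s + a * x' s + K * (x s - xs) = -f s (x (h s)) by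
        linarith [heq s hs]] using hfbound s (x (h s) - xs)
  have H := delayIntegralInequality_of_damped (by ring) hK hω hC hy' hx'' hhle hinit' hfeedback
  exact tendsto_iff_norm_sub_tendsto_zero.2 <| H.tendsto_zero (by positivity) (by positivity) hβα
    (by positivity) hhle hhtend (continuous_iff_continuousAt.2 fun t => (hy' t).continuousAt).abs
    (fun _ => abs_nonneg _) hinit'

/-- Theorem 4, part c): if 4K > a² and C < a√(4K − a²)/4, the equilibrium x* of
ẍ(t) + a·ẋ(t) + f(t, x(h(t))) = −K[x(t) − x*] is globally asymptotically stable. -/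
theorem proportional_control_stability_case_c
    (t₀ a K C xs : ℝ)
    (f : ℝ → ℝ → ℝ) (h : ℝ → ℝ)
    (hhmeas : Measurable h) (hhle : ∀ t, h t ≤ t) (hhtend : Tendsto h atTop atTop)
    (ha : 0 < a) (hK : 0 < K) (hC : 0 ≤ C) (h4K : 4 * K > a ^ 2)
    (hfbound : ∀ t v, |f t (v + xs)| ≤ C * |v|)
    (hcond : C < a * Real.sqrt (4 * K - a ^ 2) / 4)
    (x x' x'' : ℝ → ℝ)
    (hx' : ∀ t, HasDerivAt x (x' t) t) (hx'' : ∀ t, HasDerivAt x' (x'' t) t)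
    (hinit : ∃ M : ℝ, ∀ t ≤ t₀, |x t| ≤ M ∧ |x' t| ≤ M)
    (heq : ∀ t ≥ t₀, x'' t + a * x' t + f t (x (h t)) = -K * (x t - xs)) :
    Tendsto x atTop (nhds xs) :=
  proportional_control_stability_case_c_general t₀ a K C xs f h hhle hhtend ha hC h4K hfbound hcond
    x x' x'' hx' hx'' hinit heq
end

section
/- Let a, A, ω > 0, K > 0, and let k be a nonnegative integer. Suppose at least one of the following holds: (a) Aω < K ≤ a²/4; (b) a²/4 ≤ K < a²/2 − Aω; (c) 4K > a² and Aω < a·√(4K − a²)/4. Then the equilibrium x* = (2k+1)π/ω of the controlled sunflower equation ẍ(t) + a·ẋ(t) + A·sin(ω·x(h(t))) = −K·[x(t) − (2k+1)π/ω] is globally asymptotically stable: every twice differentiable solution x satisfies x(t) → (2k+1)π/ω as t → ∞. -/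
open Filter MeasureTheory Real Set intervalIntegral
open Complex (I)
open scoped Topology Complex

/-!
The shift `y = x - (2k+1)π/ω` turns the equation into `y'' + a y' + K y = A sin (ω y(h t))`.
For `α = a/2` and any `β > 0` this is the damped oscillator `y'' + 2α y' + (α² + β²) y = f` with
`|f| ≤ |α² + β² - K| |y| + Aω |y ∘ h|`. By variation of constants, `y` is an exponentially
decaying term plus the convolution of `f` with `e^{-αd} sin (βd) / β`, and this kernel is bounded
by `e^{-αd} min d β⁻¹`, whose integral over `[0, ∞)` is at most `1/α²` and at most `1/(αβ)`.
In each of the three cases some `β` makes the gain `(|α² + β² - K| + Aω) · C` smaller than one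
(cases (a), (b) with `C = 1/α²`, case (c) with `β² = K - α²` and `C = 1/(αβ)`). A small-gain
argument then shows first that `y` is bounded and then, since `h t → ∞`, that
`limsup |y| ≤ gain · limsup |y|`, so `y → 0`.
-/

theorem abs_sub_duhamel_le {α β t₀ : ℝ} (hβ : 0 < β) {y y' y'' f : ℝ → ℝ}
    (hy' : ∀ t, HasDerivAt y (y' t) t) (hy'' : ∀ t, HasDerivAt y' (y'' t) t)
    (hode : ∀ t ≥ t₀, y'' t + 2 * α * y' t + (α ^ 2 + β ^ 2) * y t = f t)
    (hf : ∀ t, IntegrableOn f (Icc t₀ t)) :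
    ∃ C₀, ∀ t ≥ t₀, |y t - ∫ s in t₀..t, exp (-(α * (t - s))) * sin (β * (t - s)) / β * f s|
      ≤ C₀ * exp (-(α * (t - t₀))) := by
  -- The operator factors as `(d/dt + z) (d/dt + conj z)`, so `P' = e^{zt} f`, while
  -- `Im (e^{-zt} P) = -β y`.
  set z : ℂ := α + β * I
  set P : ℝ → ℂ := fun t => cexp (z * t) * (y' t + (α - β * I) * y t)
  have hexp : ∀ t : ℝ, HasDerivAt (fun s : ℝ => cexp (z * s)) (z * cexp (z * t)) t := fun t => by
    simpa [mul_comm] using ((hasDerivAt_id (t : ℝ)).ofReal_comp.const_mul z).cexp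
  have hP : ∀ t ≥ t₀, HasDerivAt P (cexp (z * t) * f t) t := by
    intro t ht
    refine ((hexp t).mul ((hy'' t).ofReal_comp.add
      ((hy' t).ofReal_comp.const_mul (α - β * I)))).congr_deriv ?_
    rw [← hode t ht]
    simp only [Pi.add_apply, z]
    push_cast
    linear_combination (-(cexp (z * t)) * β ^ 2 * y t) * Complex.I_sq
  have hint : ∀ t ≥ t₀, IntervalIntegrable (fun s : ℝ => cexp (z * s) * f s) volume t₀ t :=
    fun t ht => (intervalIntegrable_iff_integrableOn_Icc_of_le ht).2
      (IntegrableOn.continuousOn_mul (by fun_prop) (hf t).ofReal isCompact_Icc)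
  have hPint : ∀ t ≥ t₀, P t = P t₀ + ∫ s in t₀..t, cexp (z * s) * f s := fun t ht => by
    rw [integral_eq_sub_of_hasDerivAt (fun s hs => hP s (by rw [uIcc_of_le ht] at hs; exact hs.1))
      (hint t ht)]
    ring
  have hy : ∀ t, y t = -(cexp (-(z * t)) * P t).im / β := fun t => by
    rw [← mul_assoc, ← Complex.exp_add, neg_add_cancel, Complex.exp_zero, one_mul]
    simp [hβ.ne']
  have hduhamel : ∀ t ≥ t₀, ∫ s in t₀..t, exp (-(α * (t - s))) * sin (β * (t - s)) / β * f s
      = -(cexp (-(z * t)) * ∫ s in t₀..t, cexp (z * s) * f s).im / β := fun t ht => by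
    rw [← intervalIntegral.integral_const_mul, ← Complex.imCLM_apply,
      ← Complex.imCLM.intervalIntegral_comp_comm ((hint t ht).const_mul _),
      ← intervalIntegral.integral_neg, ← intervalIntegral.integral_div]
    refine integral_congr fun s _ => ?_
    rw [← mul_assoc, ← Complex.exp_add,
      show -(z * t) + z * s = ((-(α * (t - s)) : ℝ) : ℂ) + ((-(β * (t - s)) : ℝ) : ℂ) * I by
        push_cast [z]; ring]
    simp only [Complex.imCLM_apply, Complex.im_mul_ofReal, Complex.exp_im, Complex.add_re,
      Complex.add_im, Complex.ofReal_re, Complex.ofReal_im, Complex.re_ofReal_mul,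
      Complex.im_ofReal_mul, Complex.I_re, Complex.I_im, mul_zero, mul_one, add_zero, zero_add,
      sin_neg]
    ring
  refine ⟨‖P t₀‖ * exp (-(α * t₀)) / β, fun t ht => ?_⟩
  have hnorm : ‖cexp (-(z * t))‖ = exp (-(α * t₀)) * exp (-(α * (t - t₀))) := by
    rw [← Real.exp_add, show -(α * t₀) + -(α * (t - t₀)) = -(α * t) by ring]
    simp [z, Complex.norm_exp]
  rw [hy t, hPint t ht, hduhamel t ht, mul_add, Complex.add_im]
  calc _ = |(cexp (-(z * t)) * P t₀).im| / β := by
        rw [← abs_of_pos hβ, ← abs_div, abs_of_pos hβ, ← abs_neg]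
        congr 1
        ring
    _ ≤ ‖cexp (-(z * t)) * P t₀‖ / β := by gcongr; exact Complex.abs_im_le_norm _
    _ = _ := by rw [norm_mul, hnorm]; ring

lemma abs_exp_mul_sin_div_le {α β d : ℝ} (hβ : 0 < β) (hd : 0 ≤ d) :
    |exp (-(α * d)) * sin (β * d) / β| ≤ exp (-(α * d)) * min d β⁻¹ := by
  rw [mul_div_assoc, abs_mul, abs_of_pos (exp_pos _), abs_div, abs_of_pos hβ]
  gcongr
  rw [div_le_iff₀ hβ, min_mul_of_nonneg _ _ hβ.le, inv_mul_cancel₀ hβ.ne']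
  refine le_min ?_ (abs_sin_le_one _)
  calc |sin (β * d)| ≤ |β * d| := abs_sin_le_abs
    _ = d * β := by rw [abs_of_nonneg (by positivity)]; ring

lemma integral_mul_exp_neg_mul_le {α D : ℝ} (hα : 0 < α) (hD : 0 ≤ D) :
    ∫ d in 0..D, d * exp (-(α * d)) ≤ (α ^ 2)⁻¹ := by
  have hderiv : ∀ d ∈ uIcc 0 D, HasDerivAt (fun d => -((d / α + (α ^ 2)⁻¹) * exp (-(α * d))))
      (d * exp (-(α * d))) d := fun d _ => by
    refine ((((hasDerivAt_id d).div_const α).add_const _).mul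
      ((hasDerivAt_id d).const_mul α).neg.exp).neg.congr_deriv ?_
    simp only [Pi.neg_apply, id]
    field_simp
    ring
  rw [integral_eq_sub_of_hasDerivAt hderiv (Continuous.intervalIntegrable (by fun_prop) _ _)]
  have : 0 ≤ (D / α + (α ^ 2)⁻¹) * exp (-(α * D)) := by positivity
  simp only [mul_zero, neg_zero, exp_zero, zero_div, zero_add, mul_one]
  linarith

lemma integral_exp_neg_mul_le {α : ℝ} (hα : 0 < α) (D : ℝ) :
    ∫ d in 0..D, exp (-(α * d)) ≤ α⁻¹ := by
  have hderiv : ∀ d ∈ uIcc 0 D, HasDerivAt (fun d => -(α⁻¹ * exp (-(α * d))))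
      (exp (-(α * d))) d := fun d _ => by
    refine (((hasDerivAt_id d).const_mul α).neg.exp.const_mul α⁻¹).neg.congr_deriv ?_
    simp only [Pi.neg_apply, id]
    field_simp
  rw [integral_eq_sub_of_hasDerivAt hderiv (Continuous.intervalIntegrable (by fun_prop) _ _)]
  have : 0 ≤ α⁻¹ * exp (-(α * D)) := by positivity
  simp only [mul_zero, neg_zero, exp_zero, mul_one]
  linarith

lemma integral_exp_neg_mul_mul_min_le_inv_sq {α D : ℝ} (hα : 0 < α) (β : ℝ) (hD : 0 ≤ D) :
    ∫ d in 0..D, exp (-(α * d)) * min d β⁻¹ ≤ (α ^ 2)⁻¹ := by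
  refine (integral_mono_on hD (Continuous.intervalIntegrable (by fun_prop) _ _)
    (Continuous.intervalIntegrable (by fun_prop) _ _) fun d _ => ?_).trans
    (integral_mul_exp_neg_mul_le hα hD)
  rw [mul_comm d]
  exact mul_le_mul_of_nonneg_left (min_le_left _ _) (exp_pos _).le

lemma integral_exp_neg_mul_mul_min_le_inv_mul {α β D : ℝ} (hα : 0 < α) (hβ : 0 ≤ β) (hD : 0 ≤ D) :
    ∫ d in 0..D, exp (-(α * d)) * min d β⁻¹ ≤ (α * β)⁻¹ := by
  refine (integral_mono_on hD (Continuous.intervalIntegrable (by fun_prop) _ _)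
    (Continuous.intervalIntegrable (by fun_prop) _ _)
    fun d _ => mul_le_mul_of_nonneg_left (min_le_right d β⁻¹) (exp_pos _).le).trans ?_
  rw [intervalIntegral.integral_mul_const, mul_inv_rev, mul_comm _ β⁻¹]
  exact mul_le_mul_of_nonneg_left (integral_exp_neg_mul_le hα D) (inv_nonneg.2 hβ)

lemma nonpos_of_forall_le_mul_add {l L : ℝ} (hL0 : 0 ≤ L) (hL : L < 1)
    (h : ∀ ε > 0, l ≤ L * (l + ε) + ε) : l ≤ 0 := by
  have hlL : l ≤ L * l := le_of_forall_pos_le_add fun δ hδ => by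
    have hL1 : 0 < L + 1 := by linarith
    calc l ≤ L * (l + δ / (L + 1)) + δ / (L + 1) := h _ (by positivity)
      _ = L * l + δ := by field_simp; ring
  nlinarith

section DelayIntegralInequality

variable {g w : ℝ → ℝ}

lemma integral_comp_sub_le_of_integral_le {C : ℝ} (hgC : ∀ D, 0 ≤ D → ∫ d in 0..D, g d ≤ C)
    {a t : ℝ} (hat : a ≤ t) : ∫ s in a..t, g (t - s) ≤ C := by
  simpa [intervalIntegral.integral_comp_sub_left] using hgC (t - a) (sub_nonneg.2 hat)

lemma intervalIntegrable_comp_sub_mul {a b t : ℝ} (hab : a ≤ b) (hg : Continuous g)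
    (hw : IntegrableOn w (Icc a b)) : IntervalIntegrable (fun s => g (t - s) * w s) volume a b :=
  (intervalIntegrable_iff_integrableOn_Icc_of_le hab).2
    (hw.continuousOn_mul (by fun_prop) isCompact_Icc)

lemma integral_comp_sub_mul_le {a b t K : ℝ} (hab : a ≤ b) (hbt : b ≤ t) (hg : Continuous g)
    (hg0 : ∀ d, 0 ≤ d → 0 ≤ g d) (hw : IntegrableOn w (Icc a b))
    (hwK : ∀ s ∈ Icc a b, w s ≤ K) :
    ∫ s in a..b, g (t - s) * w s ≤ K * ∫ s in a..b, g (t - s) := by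
  rw [← intervalIntegral.integral_const_mul]
  refine integral_mono_on hab (intervalIntegrable_comp_sub_mul hab hg hw)
    ((by fun_prop : Continuous fun s => K * g (t - s)).intervalIntegrable _ _) fun s hs => ?_
  rw [mul_comm K]
  exact mul_le_mul_of_nonneg_left (hwK s hs) (hg0 _ (by linarith [hs.2]))

lemma tendsto_integral_comp_sub_atTop (hg : Tendsto g atTop (𝓝 0)) (a b : ℝ) :
    Tendsto (fun t => ∫ s in a..b, g (t - s)) atTop (𝓝 0) := by
  rw [Metric.tendsto_nhds]
  intro ε hε
  have hε' : 0 < ε / (|b - a| + 1) := by positivity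
  obtain ⟨D, hD⟩ := eventually_atTop.1 (Metric.tendsto_nhds.1 hg _ hε')
  filter_upwards [eventually_ge_atTop (D + max a b)] with t ht
  rw [dist_zero_right]
  calc ‖∫ s in a..b, g (t - s)‖ ≤ ε / (|b - a| + 1) * |b - a| := by
        refine norm_integral_le_of_norm_le_const fun s hs => ?_
        have hsab : s ≤ max a b := (uIoc_subset_uIcc hs).2
        simpa using (hD (t - s) (by linarith)).le
    _ < ε := by
        rw [div_mul_eq_mul_div, div_lt_iff₀ (by positivity)]
        nlinarith [abs_nonneg (b - a)]

lemma integral_comp_sub_mul_le_add {a T t K₁ K₂ C : ℝ} (haT : a ≤ T) (hTt : T ≤ t)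
    (hg : Continuous g) (hg0 : ∀ d, 0 ≤ d → 0 ≤ g d) (hgC : ∀ D, 0 ≤ D → ∫ d in 0..D, g d ≤ C)
    (hw : IntegrableOn w (Icc a t)) (hK₂ : 0 ≤ K₂) (hw₁ : ∀ s ∈ Icc a T, w s ≤ K₁)
    (hw₂ : ∀ s ∈ Icc T t, w s ≤ K₂) :
    ∫ s in a..t, g (t - s) * w s ≤ K₁ * (∫ s in a..T, g (t - s)) + K₂ * C := by
  have hwa : IntegrableOn w (Icc a T) := hw.mono_set (Icc_subset_Icc_right hTt)
  have hwT : IntegrableOn w (Icc T t) := hw.mono_set (Icc_subset_Icc_left haT)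
  rw [← integral_add_adjacent_intervals (intervalIntegrable_comp_sub_mul haT hg hwa)
    (intervalIntegrable_comp_sub_mul hTt hg hwT)]
  exact add_le_add (integral_comp_sub_mul_le haT hTt hg hg0 hwa hw₁)
    ((integral_comp_sub_mul_le hTt le_rfl hg hg0 hwT hw₂).trans
      (mul_le_mul_of_nonneg_left (integral_comp_sub_le_of_integral_le hgC hTt) hK₂))

variable {u φ h : ℝ → ℝ} {t₀ ρ₁ ρ₂ C C₀ M : ℝ}

lemma exists_bound_of_le_add_integral (hu : Continuous u) (hu0 : ∀ t, 0 ≤ u t)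
    (hM : ∀ t ≤ t₀, u t ≤ M) (hg : Continuous g) (hg0 : ∀ d, 0 ≤ d → 0 ≤ g d)
    (hgC : ∀ D, 0 ≤ D → ∫ d in 0..D, g d ≤ C) (hρ₁ : 0 ≤ ρ₁) (hρ₂ : 0 ≤ ρ₂)
    (hρC : (ρ₁ + ρ₂) * C < 1) (hw : ∀ t, IntegrableOn w (Icc t₀ t))
    (hwu : ∀ s ≥ t₀, w s ≤ ρ₁ * u s + ρ₂ * u (h s)) (hh : ∀ t, h t ≤ t)
    (hφ : ∀ t ≥ t₀, φ t ≤ C₀) (hu_le : ∀ t ≥ t₀, u t ≤ φ t + ∫ s in t₀..t, g (t - s) * w s) :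
    ∃ B, ∀ t, u t ≤ B := by
  -- If the maximum of `u` on `[t₀, T]` exceeds `M`, it bounds `u` on `(-∞, T]`, hence is at most
  -- `C₀ + (ρ₁ + ρ₂) C` times itself.
  refine ⟨max M (C₀ / (1 - (ρ₁ + ρ₂) * C)), fun T => ?_⟩
  rcases le_or_gt T t₀ with hT | hT
  · exact le_max_of_le_left (hM T hT)
  obtain ⟨s, hs, hmax⟩ := isCompact_Icc.exists_isMaxOn (nonempty_Icc.2 hT.le) hu.continuousOn
  refine (hmax ⟨hT.le, le_rfl⟩ : u T ≤ u s).trans ?_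
  by_cases hsM : u s ≤ M
  · exact le_max_of_le_left hsM
  refine le_max_of_le_right ((le_div_iff₀ (by linarith)).2 ?_)
  have hus : ∀ r ≤ s, u r ≤ u s := fun r hr => by
    rcases le_or_gt r t₀ with hr₀ | hr₀
    · linarith [hM r hr₀]
    · exact hmax ⟨hr₀.le, hr.trans hs.2⟩
  have hws : ∀ r ∈ Icc t₀ s, w r ≤ (ρ₁ + ρ₂) * u s := fun r hr => by
    have := hwu r hr.1
    nlinarith [hus r hr.2, hus (h r) ((hh r).trans hr.2)]
  have hint := integral_comp_sub_mul_le hs.1 le_rfl hg hg0 (hw s) hws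
  have hC := integral_comp_sub_le_of_integral_le hgC hs.1
  have := mul_le_mul_of_nonneg_left hC (mul_nonneg (add_nonneg hρ₁ hρ₂) (hu0 s))
  nlinarith [hu_le s hs.1, hφ s hs.1]

theorem tendsto_zero_of_le_add_integral (hu : Continuous u) (hu0 : ∀ t, 0 ≤ u t)
    (hM : ∀ t ≤ t₀, u t ≤ M) (hg : Continuous g) (hg0 : ∀ d, 0 ≤ d → 0 ≤ g d)
    (hgC : ∀ D, 0 ≤ D → ∫ d in 0..D, g d ≤ C) (hg_lim : Tendsto g atTop (𝓝 0))
    (hρ₁ : 0 ≤ ρ₁) (hρ₂ : 0 ≤ ρ₂) (hρC : (ρ₁ + ρ₂) * C < 1)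
    (hw : ∀ t, IntegrableOn w (Icc t₀ t)) (hwu : ∀ s ≥ t₀, w s ≤ ρ₁ * u s + ρ₂ * u (h s))
    (hh : ∀ t, h t ≤ t) (hh_lim : Tendsto h atTop atTop) (hφ : ∀ t ≥ t₀, φ t ≤ C₀)
    (hφ_lim : Tendsto φ atTop (𝓝 0))
    (hu_le : ∀ t ≥ t₀, u t ≤ φ t + ∫ s in t₀..t, g (t - s) * w s) :
    Tendsto u atTop (𝓝 0) := by
  obtain ⟨B, hB⟩ :=
    exists_bound_of_le_add_integral hu hu0 hM hg hg0 hgC hρ₁ hρ₂ hρC hw hwu hh hφ hu_le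
  set ρ := ρ₁ + ρ₂
  have hbdd : IsBoundedUnder (· ≤ ·) atTop u := isBoundedUnder_of ⟨B, hB⟩
  have hbdd' : IsBoundedUnder (· ≥ ·) atTop u := isBoundedUnder_of ⟨0, hu0⟩
  set l := limsup u atTop
  have hl : ∀ ε > 0, l ≤ ρ * C * (l + ε) + ε := by
    intro ε hε
    obtain ⟨T₁, hT₁⟩ :=
      eventually_atTop.1 (eventually_lt_of_limsup_lt (lt_add_of_pos_right l hε) hbdd)
    obtain ⟨T₂, hT₂⟩ := eventually_atTop.1 (hh_lim.eventually (eventually_ge_atTop T₁))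
    set T := max T₂ (max T₁ t₀)
    have hT₀ : t₀ ≤ T := le_max_of_le_right (le_max_right _ _)
    have hT₁T : T₁ ≤ T := le_max_of_le_right (le_max_left _ _)
    have hlε : 0 ≤ l + ε := (hu0 T).trans (hT₁ T hT₁T).le
    have hwT : ∀ t, ∀ s ∈ Icc T t, w s ≤ ρ * (l + ε) := fun t s hs => by
      have := hwu s (hT₀.trans hs.1)
      nlinarith [(hT₁ s (hT₁T.trans hs.1)).le,
        (hT₁ (h s) (hT₂ s ((le_max_left _ _).trans hs.1))).le]
    have hψ : Tendsto (fun t => φ t + ρ * B * ∫ s in t₀..T, g (t - s)) atTop (𝓝 0) := by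
      simpa using hφ_lim.add ((tendsto_integral_comp_sub_atTop hg_lim t₀ T).const_mul (ρ * B))
    -- Split the integral at `T`: the head vanishes as `t → ∞` since `g → 0`, and on the tail
    -- both `u` and `u ∘ h` are below `l + ε`.
    refine limsup_le_of_le hbdd'.isCoboundedUnder_le ?_
    filter_upwards [hψ.eventually (gt_mem_nhds hε), eventually_ge_atTop T] with t hψt hTt
    have hwB : ∀ s ∈ Icc t₀ T, w s ≤ ρ * B := fun s hs => by
      have := hwu s hs.1
      nlinarith [hB s, hB (h s)]
    have := integral_comp_sub_mul_le_add hT₀ hTt hg hg0 hgC (hw t)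
      (mul_nonneg (add_nonneg hρ₁ hρ₂) hlε) hwB (hwT t)
    nlinarith [hu_le t (hT₀.trans hTt)]
  have hl0 : l ≤ 0 := nonpos_of_forall_le_mul_add
    (mul_nonneg (add_nonneg hρ₁ hρ₂) (by simpa using hgC 0 le_rfl)) hρC hl
  exact tendsto_of_le_liminf_of_limsup_le
    (le_liminf_of_le hbdd.isCoboundedUnder_ge (Eventually.of_forall hu0)) hl0 hbdd hbdd'

end DelayIntegralInequality

lemma exists_abs_le_exp_add_integral {α β t₀ : ℝ} (hβ : 0 < β) {y y' y'' f : ℝ → ℝ}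
    (hy' : ∀ t, HasDerivAt y (y' t) t) (hy'' : ∀ t, HasDerivAt y' (y'' t) t)
    (hode : ∀ t ≥ t₀, y'' t + 2 * α * y' t + (α ^ 2 + β ^ 2) * y t = f t)
    (hf : ∀ t, IntegrableOn f (Icc t₀ t)) :
    ∃ C₀, 0 ≤ C₀ ∧ ∀ t ≥ t₀, |y t| ≤ C₀ * exp (-(α * (t - t₀))) +
      ∫ s in t₀..t, exp (-(α * (t - s))) * min (t - s) β⁻¹ * |f s| := by
  obtain ⟨C₀, hC₀⟩ := abs_sub_duhamel_le hβ hy' hy'' hode hf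
  refine ⟨C₀, by simpa using (abs_nonneg _).trans (hC₀ t₀ le_rfl), fun t ht => ?_⟩
  set I := ∫ s in t₀..t, exp (-(α * (t - s))) * sin (β * (t - s)) / β * f s
  have hI : |I| ≤ ∫ s in t₀..t, exp (-(α * (t - s))) * min (t - s) β⁻¹ * |f s| := by
    refine (abs_integral_le_integral_abs ht).trans (integral_mono_on ht
      (intervalIntegrable_comp_sub_mul (g := fun d => exp (-(α * d)) * sin (β * d) / β) ht
        (by fun_prop) (hf t)).abs
      (intervalIntegrable_comp_sub_mul (g := fun d => exp (-(α * d)) * min d β⁻¹) ht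
        (by fun_prop) (hf t).abs) fun s hs => ?_)
    rw [abs_mul]
    exact mul_le_mul_of_nonneg_right (abs_exp_mul_sin_div_le hβ (by linarith [hs.2]))
      (abs_nonneg _)
  linarith [abs_sub_abs_le_abs_sub (y t) I, hC₀ t ht]

lemma integrableOn_Icc_of_abs_le_delay {f y h : ℝ → ℝ} {t₀ ρ₁ ρ₂ M : ℝ}
    (hf : AEStronglyMeasurable f) (hy : Continuous y) (hM : ∀ t ≤ t₀, |y t| ≤ M)
    (hh : ∀ t, h t ≤ t) (hρ₁ : 0 ≤ ρ₁) (hρ₂ : 0 ≤ ρ₂)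
    (hfy : ∀ t ≥ t₀, |f t| ≤ ρ₁ * |y t| + ρ₂ * |y (h t)|) (T : ℝ) :
    IntegrableOn f (Icc t₀ T) := by
  obtain ⟨B, hB⟩ := isCompact_Icc.exists_bound_of_continuousOn (hy.continuousOn (s := Icc t₀ T))
  have hyB : ∀ t ≤ T, |y t| ≤ max M B := fun t ht => by
    rcases le_or_gt t t₀ with ht₀ | ht₀
    · exact le_max_of_le_left (hM t ht₀)
    · exact le_max_of_le_right (hB t ⟨ht₀.le, ht⟩)
  refine Measure.integrableOn_of_bounded measure_Icc_lt_top.ne hf (M := (ρ₁ + ρ₂) * max M B)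
    ((ae_restrict_iff' measurableSet_Icc).2 (Eventually.of_forall fun t ht => ?_))
  rw [Real.norm_eq_abs, add_mul]
  exact (hfy t ht.1).trans (add_le_add (mul_le_mul_of_nonneg_left (hyB t ht.2) hρ₁)
    (mul_le_mul_of_nonneg_left (hyB (h t) ((hh t).trans ht.2)) hρ₂))

theorem tendsto_zero_of_damped_delay_inequality {α β ρ₁ ρ₂ C t₀ M : ℝ} {h y y' y'' : ℝ → ℝ}
    (hα : 0 < α) (hβ : 0 < β) (hρ₁ : 0 ≤ ρ₁) (hρ₂ : 0 ≤ ρ₂) (hρC : (ρ₁ + ρ₂) * C < 1)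
    (hC : ∀ D, 0 ≤ D → ∫ d in 0..D, exp (-(α * d)) * min d β⁻¹ ≤ C)
    (hy' : ∀ t, HasDerivAt y (y' t) t) (hy'' : ∀ t, HasDerivAt y' (y'' t) t)
    (hM : ∀ t ≤ t₀, |y t| ≤ M)
    (hfy : ∀ t ≥ t₀,
      |y'' t + 2 * α * y' t + (α ^ 2 + β ^ 2) * y t| ≤ ρ₁ * |y t| + ρ₂ * |y (h t)|)
    (hh : ∀ t, h t ≤ t) (hh_lim : Tendsto h atTop atTop) :
    Tendsto y atTop (𝓝 0) := by
  set f : ℝ → ℝ := fun t => y'' t + 2 * α * y' t + (α ^ 2 + β ^ 2) * y t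
  have hy : Continuous y := continuous_iff_continuousAt.2 fun t => (hy' t).continuousAt
  have hf : Measurable f := by
    have hy'c : Continuous y' := continuous_iff_continuousAt.2 fun t => (hy'' t).continuousAt
    simp only [f, show y'' = deriv y' from funext fun t => (hy'' t).deriv.symm]
    exact ((measurable_deriv y').add (hy'c.measurable.const_mul _)).add (hy.measurable.const_mul _)
  have hfint := integrableOn_Icc_of_abs_le_delay hf.aestronglyMeasurable hy hM hh hρ₁ hρ₂ hfy
  obtain ⟨C₀, hC₀0, hu_le⟩ :=
    exists_abs_le_exp_add_integral hβ hy' hy'' (f := f) (fun t _ => rfl) hfint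
  set g : ℝ → ℝ := fun d => exp (-(α * d)) * min d β⁻¹
  have hg : Continuous g := by simp only [g]; fun_prop
  have hg0 : ∀ d, 0 ≤ d → 0 ≤ g d := fun d hd => by positivity
  have hg_lim : Tendsto g atTop (𝓝 0) := by
    have hexp : Tendsto (fun d => exp (-(α * d)) * β⁻¹) atTop (𝓝 0) := by
      simpa using (tendsto_exp_neg_atTop_nhds_zero.comp
        (tendsto_id.const_mul_atTop hα)).mul_const β⁻¹
    refine tendsto_of_tendsto_of_tendsto_of_le_of_le' tendsto_const_nhds hexp
      ((eventually_ge_atTop 0).mono hg0) (Eventually.of_forall fun d =>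
        mul_le_mul_of_nonneg_left (min_le_right _ _) (exp_pos _).le)
  have hφ : ∀ t ≥ t₀, C₀ * exp (-(α * (t - t₀))) ≤ C₀ := fun t ht =>
    mul_le_of_le_one_right hC₀0 (exp_le_one_iff.2 (by nlinarith))
  have hφ_lim : Tendsto (fun t => C₀ * exp (-(α * (t - t₀)))) atTop (𝓝 0) := by
    simpa [sub_eq_add_neg] using (tendsto_exp_neg_atTop_nhds_zero.comp
      ((tendsto_atTop_add_const_right atTop (-t₀) tendsto_id).const_mul_atTop hα)).const_mul C₀
  exact (tendsto_zero_iff_abs_tendsto_zero y).2 <|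
    tendsto_zero_of_le_add_integral (u := fun t => |y t|) hy.abs (fun t => abs_nonneg _) hM hg
      hg0 hC hg_lim hρ₁ hρ₂ hρC (fun t => (hfint t).abs) hfy hh hh_lim hφ hφ_lim hu_le

lemma exists_abs_sq_add_sq_sub_add_lt {α ρ K : ℝ} (hK : ρ < K) (hα : ρ < α ^ 2) :
    ∃ β > 0, |α ^ 2 + β ^ 2 - K| + ρ < α ^ 2 := by
  -- `β²` has to lie in `(K - 2α² + ρ, K - ρ) ∩ (0, ∞)`, which is nonempty.
  set d := min (K - ρ) (2 * (α ^ 2 - ρ))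
  have hd : 0 < d := lt_min (by linarith) (by linarith)
  have hx : 0 < K - ρ - d / 2 := by linarith [min_le_left (K - ρ) (2 * (α ^ 2 - ρ))]
  refine ⟨√(K - ρ - d / 2), sqrt_pos.2 hx, ?_⟩
  rw [sq_sqrt hx.le, abs_of_nonneg (by linarith [min_le_right (K - ρ) (2 * (α ^ 2 - ρ))])]
  linarith

lemma exists_gain_lt_one {α ρ K : ℝ} (hα : 0 < α)
    (h : (ρ < K ∧ ρ < α ^ 2) ∨ (α ^ 2 < K ∧ ρ < α * √(K - α ^ 2))) :
    ∃ β > 0, ∃ C, (|α ^ 2 + β ^ 2 - K| + ρ) * C < 1 ∧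
      ∀ D, 0 ≤ D → ∫ d in 0..D, exp (-(α * d)) * min d β⁻¹ ≤ C := by
  rcases h with ⟨hK, hρ⟩ | ⟨hK, hρ⟩
  · obtain ⟨β, hβ, hlt⟩ := exists_abs_sq_add_sq_sub_add_lt hK hρ
    exact ⟨β, hβ, (α ^ 2)⁻¹, by rwa [← div_eq_mul_inv, div_lt_one (by positivity)],
      fun D hD => integral_exp_neg_mul_mul_min_le_inv_sq hα β hD⟩
  · have hβ : 0 < √(K - α ^ 2) := sqrt_pos.2 (by linarith)
    refine ⟨√(K - α ^ 2), hβ, (α * √(K - α ^ 2))⁻¹, ?_,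
      fun D hD => integral_exp_neg_mul_mul_min_le_inv_mul hα hβ.le hD⟩
    rwa [sq_sqrt (by linarith), show α ^ 2 + (K - α ^ 2) - K = 0 by ring, abs_zero, zero_add,
      ← div_eq_mul_inv, div_lt_one (by positivity)]

lemma sunflower_gain_condition {a ρ K : ℝ}
    (h : (ρ < K ∧ K ≤ a ^ 2 / 4) ∨ (a ^ 2 / 4 ≤ K ∧ K < a ^ 2 / 2 - ρ) ∨
      (4 * K > a ^ 2 ∧ ρ < a * √(4 * K - a ^ 2) / 4)) :
    (ρ < K ∧ ρ < (a / 2) ^ 2) ∨ ((a / 2) ^ 2 < K ∧ ρ < a / 2 * √(K - (a / 2) ^ 2)) := by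
  rcases h with ⟨h₁, h₂⟩ | ⟨h₁, h₂⟩ | ⟨h₁, h₂⟩
  · exact Or.inl ⟨h₁, by linarith⟩
  · exact Or.inl ⟨by linarith, by linarith⟩
  · refine Or.inr ⟨by linarith, ?_⟩
    rwa [show 4 * K - a ^ 2 = 2 ^ 2 * (K - (a / 2) ^ 2) by ring, sqrt_mul' _ (by linarith),
      sqrt_sq two_pos.le, show a * (2 * √(K - (a / 2) ^ 2)) / 4 = a / 2 * √(K - (a / 2) ^ 2) by
        ring] at h₂

lemma sin_mul_add_odd_mul_pi_div (ω u : ℝ) (k : ℕ) (hω : ω ≠ 0) :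
    sin (ω * (u + (2 * k + 1) * π / ω)) = -sin (ω * u) := by
  rw [mul_add, mul_div_cancel₀ _ hω, show ω * u + (2 * k + 1) * π = ω * u + π + k * (2 * π) by
    ring, sin_add_nat_mul_two_pi, sin_add_pi]

lemma abs_mul_sin_mul_le {A ω : ℝ} (hA : 0 ≤ A) (hω : 0 ≤ ω) (u : ℝ) :
    |A * sin (ω * u)| ≤ A * ω * |u| := by
  rw [abs_mul, abs_of_nonneg hA, mul_assoc]
  gcongr
  calc |sin (ω * u)| ≤ |ω * u| := abs_sin_le_abs
    _ = ω * |u| := by rw [abs_mul, abs_of_nonneg hω]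

theorem sunflower_proportional_control_stability_general
    (t₀ a A ω K : ℝ) (k : ℕ)
    (h : ℝ → ℝ)
    (hhle : ∀ t, h t ≤ t) (hhtend : Tendsto h atTop atTop)
    (ha : 0 < a) (hA : 0 < A) (hω : 0 < ω)
    (hcond :
      (A * ω < K ∧ K ≤ a ^ 2 / 4 ∧ ∃ τ > (0:ℝ), ∀ t, t - h t ≤ τ) ∨
      (a ^ 2 / 4 ≤ K ∧ K < a ^ 2 / 2 - A * ω ∧ ∃ τ > (0:ℝ), ∀ t, t - h t ≤ τ) ∨
      (4 * K > a ^ 2 ∧ A * ω < a * Real.sqrt (4 * K - a ^ 2) / 4))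
    (x x' x'' : ℝ → ℝ)
    (hx' : ∀ t, HasDerivAt x (x' t) t) (hx'' : ∀ t, HasDerivAt x' (x'' t) t)
    (hinit : ∃ M : ℝ, ∀ t ≤ t₀, |x t| ≤ M ∧ |x' t| ≤ M)
    (heq : ∀ t ≥ t₀, x'' t + a * x' t + A * Real.sin (ω * x (h t))
        = -K * (x t - (2 * (k : ℝ) + 1) * Real.pi / ω)) :
    Tendsto x atTop (nhds ((2 * (k : ℝ) + 1) * Real.pi / ω)) := by
  set c := (2 * (k : ℝ) + 1) * π / ω
  obtain ⟨M, hM⟩ := hinit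
  obtain ⟨β, hβ, C, hρC, hC⟩ := exists_gain_lt_one (half_pos ha) (sunflower_gain_condition
    (hcond.imp (fun h => ⟨h.1, h.2.1⟩) (Or.imp (fun h => ⟨h.1, h.2.1⟩) id)))
  have hforce : ∀ t ≥ t₀, |x'' t + 2 * (a / 2) * x' t + ((a / 2) ^ 2 + β ^ 2) * (x t - c)|
      ≤ |(a / 2) ^ 2 + β ^ 2 - K| * |x t - c| + A * ω * |x (h t) - c| := by
    intro t ht
    have hsin : sin (ω * x (h t)) = -sin (ω * (x (h t) - c)) := by
      simpa [c] using sin_mul_add_odd_mul_pi_div ω (x (h t) - c) k hω.ne'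
    rw [show x'' t + 2 * (a / 2) * x' t + ((a / 2) ^ 2 + β ^ 2) * (x t - c)
        = ((a / 2) ^ 2 + β ^ 2 - K) * (x t - c) + A * sin (ω * (x (h t) - c)) by
      linear_combination heq t ht - A * hsin, ← abs_mul]
    exact (abs_add_le _ _).trans (add_le_add le_rfl (abs_mul_sin_mul_le hA.le hω.le _))
  have hy := tendsto_zero_of_damped_delay_inequality (half_pos ha) hβ (abs_nonneg _)
    (by positivity) hρC hC (fun t => (hx' t).sub_const c) hx''
    (fun t ht => (abs_sub _ _).trans (add_le_add (hM t ht).1 le_rfl)) hforce hhle hhtend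
  simpa using hy.add_const c

/-- Corollary 5: stabilization of the equilibrium (2k+1)π/ω of the sunflower equation
ẍ(t) + a·ẋ(t) + A·sin(ω·x(h(t))) = −K[x(t) − (2k+1)π/ω]. -/
theorem sunflower_proportional_control_stability
    (t₀ a A ω K : ℝ) (k : ℕ)
    (h : ℝ → ℝ)
    (hhmeas : Measurable h) (hhle : ∀ t, h t ≤ t) (hhtend : Tendsto h atTop atTop)
    (ha : 0 < a) (hA : 0 < A) (hω : 0 < ω) (hK : 0 < K)
    (hcond :
      (A * ω < K ∧ K ≤ a ^ 2 / 4 ∧ ∃ τ > (0:ℝ), ∀ t, t - h t ≤ τ) ∨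
      (a ^ 2 / 4 ≤ K ∧ K < a ^ 2 / 2 - A * ω ∧ ∃ τ > (0:ℝ), ∀ t, t - h t ≤ τ) ∨
      (4 * K > a ^ 2 ∧ A * ω < a * Real.sqrt (4 * K - a ^ 2) / 4))
    (x x' x'' : ℝ → ℝ)
    (hx' : ∀ t, HasDerivAt x (x' t) t) (hx'' : ∀ t, HasDerivAt x' (x'' t) t)
    (hinit : ∃ M : ℝ, ∀ t ≤ t₀, |x t| ≤ M ∧ |x' t| ≤ M)
    (heq : ∀ t ≥ t₀, x'' t + a * x' t + A * Real.sin (ω * x (h t))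
        = -K * (x t - (2 * (k : ℝ) + 1) * Real.pi / ω)) :
    Tendsto x atTop (nhds ((2 * (k : ℝ) + 1) * Real.pi / ω)) :=
  sunflower_proportional_control_stability_general t₀ a A ω K k h hhle hhtend ha hA hω hcond x x'
    x'' hx' hx'' hinit heq
end
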